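/- arXiv:2310.03566 — 7 statements merged into one kernel-verified Lean document; each statement's English description precedes it below -/
import Mathlib

section
/- The twisted Frobenius–Schur element ν lies in the centre of ℂ^{θ⁻¹}[G]; explicitly, for all g, h ∈ G one has Σ_{ς ∈ Ĝ∖G, ς² = hgh⁻¹} λ(ς)/θ̂(ς,ς) = τ(θ)([h]g) · Σ_{ς ∈ Ĝ∖G, ς² = g} λ(ς)/θ̂(ς,ς). -/
/-!
In the twisted group algebra with basis `l_ω`, `l_a l_b = θ(a,b) l_{ab}` and `l_a z = z^{π(a)} l_a`
for scalars `z`. For `h` even and `ς` odd, `l_h l_ς = c · l_t l_h` with `t = hςh⁻¹` and a unit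
`c`. Expanding `l_h l_ς l_ς` in two ways, the scalar `c` meets its own inverse when it is moved
past the antilinear `l_t`, so `θ(t,t) θ(hς²h⁻¹,h) = θ(ς,ς) θ(h,ς²)`. Conjugation by `h` is
therefore a bijection from the odd square roots of `g` to those of `hgh⁻¹` that rescales each
summand by exactly `τ(θ)([h]g)`.
-/

theorem MonoidHom.map_conj_eq {G M : Type*} [Group G] [CommMonoid M] (f : G →* M) (h x : G) :
    f (h * x * h⁻¹) = f x :=
  (isConj_iff_eq.mp (f.map_isConj (isConj_iff.mpr ⟨h, rfl⟩))).symm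

section TwistedCocycle

variable {G : Type*} [Group G] {π : G →* ℤˣ} {θ : G → G → ℂ}

theorem twistedCocycle_of_even
    (hcoc : ∀ a b c : G, θ a b * θ (a * b) c = θ b c ^ ((π a : ℤˣ) : ℤ) * θ a (b * c))
    {a : G} (ha : π a = 1) (b c : G) :
    θ a b * θ (a * b) c = θ b c * θ a (b * c) := by
  simpa [ha] using hcoc a b c

theorem twistedCocycle_of_odd
    (hcoc : ∀ a b c : G, θ a b * θ (a * b) c = θ b c ^ ((π a : ℤˣ) : ℤ) * θ a (b * c))
    {a : G} (ha : π a = -1) (b c : G) :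
    θ a b * θ (a * b) c = (θ b c)⁻¹ * θ a (b * c) := by
  simpa [ha] using hcoc a b c

theorem twistedCocycle_conj_sq
    (hcoc : ∀ a b c : G, θ a b * θ (a * b) c = θ b c ^ ((π a : ℤˣ) : ℤ) * θ a (b * c))
    (hne : ∀ a b : G, θ a b ≠ 0) {h ς : G} (hh : π h = 1) (hς : π ς = -1) :
    θ (h * ς * h⁻¹) (h * ς * h⁻¹) * θ (h * ς ^ 2 * h⁻¹) h = θ ς ς * θ h (ς ^ 2) := by
  set t := h * ς * h⁻¹
  have ht : π t = -1 := by rw [π.map_conj_eq, hς]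
  have hth : t * h = h * ς := by simp [t]
  have htt : t * t = h * ς ^ 2 * h⁻¹ := by simp [t, conj_pow, ← sq]
  -- `(l_h l_ς) l_ς = l_h (l_ς l_ς)`, `(l_t l_h) l_ς = l_t (l_h l_ς)`, `(l_t l_t) l_h = l_t (l_t l_h)`
  have hhςς := twistedCocycle_of_even hcoc hh ς ς
  have hthς := twistedCocycle_of_odd hcoc ht h ς
  have htth := twistedCocycle_of_odd hcoc ht t h
  rw [← sq] at hhςς
  rw [hth] at hthς
  rw [htt, hth] at htth
  rw [← hhςς]
  field_simp [hne] at hthς htth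
  apply mul_left_cancel₀ (hne t h)
  linear_combination htth - hthς

end TwistedCocycle

theorem stmt6_general {Ghat : Type*} [Group Ghat] [Fintype Ghat] [DecidableEq Ghat]
    (π : Ghat →* ℤˣ)
    (θ : Ghat → Ghat → ℂ)
    (hnorm : ∀ a b : Ghat, ‖θ a b‖ = 1)
    (hcoc : ∀ ω₃ ω₂ ω₁ : Ghat, θ ω₃ ω₂ * θ (ω₃ * ω₂) ω₁ =
      θ ω₂ ω₁ ^ ((π ω₃ : ℤˣ) : ℤ) * θ ω₃ (ω₂ * ω₁))
    (lam : Ghat →* ℂ)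
    (g h : Ghat) (hh : π h = 1) :
    ∑ ς ∈ Finset.univ.filter (fun ς : Ghat => π ς = -1 ∧ ς ^ 2 = h * g * h⁻¹),
        lam ς / θ ς ς =
      (θ (h * g * h⁻¹) h / θ h g) *
        ∑ ς ∈ Finset.univ.filter (fun ς : Ghat => π ς = -1 ∧ ς ^ 2 = g),
          lam ς / θ ς ς := by
  have hne : ∀ a b : Ghat, θ a b ≠ 0 := fun a b => by
    simpa using (hnorm a b).trans_ne one_ne_zero
  rw [Finset.mul_sum]
  refine (Finset.sum_equiv (MulAut.conj h).toEquiv (fun ς => ?_) ?_).symm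
  · simp [π.map_conj_eq, conj_pow]
  · rintro ς hς
    obtain ⟨hςodd, rfl⟩ := by simpa using hς
    have key := twistedCocycle_conj_sq hcoc hne hh hςodd
    simp only [MulEquiv.toEquiv_eq_coe, MulEquiv.coe_toEquiv, MulAut.conj_apply,
      lam.map_conj_eq]
    field_simp [hne]
    linear_combination lam ς * key

/-- The twisted Frobenius–Schur element
`ν = Σ_{ς ∈ Ĝ∖G} (λ(ς)/θ(ς,ς)) l_{ς²}` is a θ-twisted class function, i.e. lies in the
centre of `ℂ^{θ⁻¹}[G]`: for all `g, h ∈ G`,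
`Σ_{ς ∈ Ĝ∖G, ς² = hgh⁻¹} λ(ς)/θ(ς,ς) = τ(θ)([h]g) ⬝ Σ_{ς ∈ Ĝ∖G, ς² = g} λ(ς)/θ(ς,ς)`. -/
theorem stmt6 {Ghat : Type*} [Group Ghat] [Fintype Ghat] [DecidableEq Ghat]
    (π : Ghat →* ℤˣ) (hπ : Function.Surjective π)
    (θ : Ghat → Ghat → ℂ)
    (hnorm : ∀ a b : Ghat, ‖θ a b‖ = 1)
    (hθe : ∀ ω : Ghat, θ ω 1 = 1) (hθe' : ∀ ω : Ghat, θ 1 ω = 1)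
    (hcoc : ∀ ω₃ ω₂ ω₁ : Ghat, θ ω₃ ω₂ * θ (ω₃ * ω₂) ω₁ =
      θ ω₂ ω₁ ^ ((π ω₃ : ℤˣ) : ℤ) * θ ω₃ (ω₂ * ω₁))
    (lam : Ghat →* ℂ) (hlam : ∀ ω : Ghat, ‖lam ω‖ = 1)
    (g h : Ghat) (hg : π g = 1) (hh : π h = 1) :
    ∑ ς ∈ Finset.univ.filter (fun ς : Ghat => π ς = -1 ∧ ς ^ 2 = h * g * h⁻¹),
        lam ς / θ ς ς =
      (θ (h * g * h⁻¹) h / θ h g) *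
        ∑ ς ∈ Finset.univ.filter (fun ς : Ghat => π ς = -1 ∧ ς ^ 2 = g),
          lam ς / θ ς ς :=
  stmt6_general π θ hnorm hcoc lam g h hh
end

section
/- For each ω ∈ Ĝ, the map p^ω is an algebra automorphism of ℂ^{θ⁻¹}[G] when π(ω) = 1 and an algebra anti-automorphism (p^ω(x·y) = p^ω(y)·p^ω(x)) when π(ω) = -1; for all ω₁, ω₂ ∈ Ĝ one has p^{ω₂} ∘ p^{ω₁} = p^{ω₂ω₁}; and each p^ω preserves the trace functional, i.e. the coefficient of l_e in p^ω(x) equals the coefficient of l_e in x for every x ∈ ℂ^{θ⁻¹}[G]. -/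
/-- Orientation-twisted loop transgression coefficient. -/
noncomputable def taurefl {Ghat : Type*} [Group Ghat] (π : Ghat →* ℤˣ)
    (θ : Ghat → Ghat → ℂ) (ω g : Ghat) : ℂ :=
  θ g⁻¹ g ^ ((((π ω : ℤˣ) : ℤ) - 1) / 2) *
    (θ (ω * g ^ ((π ω : ℤˣ) : ℤ) * ω⁻¹) ω / θ ω (g ^ ((π ω : ℤˣ) : ℤ)))

/-- The basis element `l_g` of the twisted group algebra `ℂ^{θ⁻¹}[G]`, whose elements are
modelled as functions `Ĝ → ℂ` supported on `G = ker π`. -/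
def ellG {Ghat : Type*} [DecidableEq Ghat] (g : Ghat) : Ghat → ℂ :=
  fun h => if h = g then 1 else 0

/-- Multiplication of `ℂ^{θ⁻¹}[G]` (determined by `l_g ⬝ l_h = θ(g,h)⁻¹ l_{gh}`) on
functions `Ĝ → ℂ` supported on `G = ker π`. -/
noncomputable def convG {Ghat : Type*} [Group Ghat] [Fintype Ghat] [DecidableEq Ghat]
    (π : Ghat →* ℤˣ) (θ : Ghat → Ghat → ℂ) (a b : Ghat → ℂ) : Ghat → ℂ :=
  fun k => ∑ g ∈ Finset.univ.filter (fun g : Ghat => π g = 1),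
    (θ g (g⁻¹ * k))⁻¹ * a g * b (g⁻¹ * k)

/-- Elements of `ℂ^{θ⁻¹}[G]` are supported on `G = ker π`. -/
def SupportedG {Ghat : Type*} [Group Ghat] (π : Ghat →* ℤˣ) (a : Ghat → ℂ) : Prop :=
  ∀ k : Ghat, π k ≠ 1 → a k = 0

/-- The (anti)automorphism `p^ω` of `ℂ^{θ⁻¹}[G]`, determined by
`p^ω(l_g) = λ(g)^{(π(ω)-1)/2} τ^refl(θ)([ω]g) l_{ωg^{π(ω)}ω⁻¹}`. -/
noncomputable def pmapG {Ghat : Type*} [Group Ghat] (π : Ghat →* ℤˣ)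
    (θ : Ghat → Ghat → ℂ) (lam : Ghat →* ℂ) (ω : Ghat) (a : Ghat → ℂ) : Ghat → ℂ :=
  fun k =>
    lam ((ω⁻¹ * k * ω) ^ ((π ω : ℤˣ) : ℤ)) ^ ((((π ω : ℤˣ) : ℤ) - 1) / 2) *
      taurefl π θ ω ((ω⁻¹ * k * ω) ^ ((π ω : ℤˣ) : ℤ)) *
        a ((ω⁻¹ * k * ω) ^ ((π ω : ℤˣ) : ℤ))

/-- Membership in the centre `Z(ℂ^{θ⁻¹}[G])`: supported on `G` and
`a_{hgh⁻¹} = τ(θ)([h]g) a_g`. -/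
def IsCentralG {Ghat : Type*} [Group Ghat] (π : Ghat →* ℤˣ)
    (θ : Ghat → Ghat → ℂ) (a : Ghat → ℂ) : Prop :=
  SupportedG π a ∧
    ∀ g h : Ghat, π g = 1 → π h = 1 →
      a (h * g * h⁻¹) = (θ (h * g * h⁻¹) h / θ h g) * a g

/-- The twisted Frobenius–Schur element `ν = Σ_{ς ∈ Ĝ∖G} (λ(ς)/θ(ς,ς)) l_{ς²}`, as a
function on `Ĝ`. -/
noncomputable def nuG {Ghat : Type*} [Group Ghat] [Fintype Ghat] [DecidableEq Ghat]
    (π : Ghat →* ℤˣ) (θ : Ghat → Ghat → ℂ) (lam : Ghat →* ℂ) : Ghat → ℂ :=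
  fun g => ∑ μ ∈ Finset.univ.filter (fun μ : Ghat => π μ = -1 ∧ μ ^ 2 = g),
    lam μ / θ μ μ


set_option maxHeartbeats 1000000
section Aux
variable {Ghat : Type*} [Group Ghat] {π : Ghat →* ℤˣ} {θ : Ghat → Ghat → ℂ}

variable {Ghat : Type*} [Group Ghat] {π : Ghat →* ℤˣ} {θ : Ghat → Ghat → ℂ}

lemma tau_even {ω : Ghat} (hω : π ω = 1) (x : Ghat) :
    taurefl π θ ω x = θ (ω * x * ω⁻¹) ω / θ ω x := by
  simp [taurefl, hω]

lemma tau_odd {ω : Ghat} (hω : π ω = -1) (x : Ghat) :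
    taurefl π θ ω x = (θ x⁻¹ x)⁻¹ * (θ (ω * x⁻¹ * ω⁻¹) ω / θ ω x⁻¹) := by
  simp [taurefl, hω]

lemma pi_conj (x y : Ghat) : π (x * y * x⁻¹) = π y := by
  simp [map_mul, mul_comm]
  rw [← mul_assoc, Int.units_mul_self, one_mul]

lemma val_one' {ω : Ghat} (hω : π ω = 1) : ((π ω : ℤˣ) : ℤ) = 1 := by rw [hω]; rfl
lemma val_neg' {ω : Ghat} (hω : π ω = -1) : ((π ω : ℤˣ) : ℤ) = -1 := by rw [hω]; rfl


variable {Ghat : Type*} [Group Ghat] {π : Ghat →* ℤˣ} {θ : Ghat → Ghat → ℂ}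

lemma key_even (hne : ∀ a b : Ghat, θ a b ≠ 0)
    (hcoc : ∀ ω₃ ω₂ ω₁ : Ghat, θ ω₃ ω₂ * θ (ω₃ * ω₂) ω₁ =
      θ ω₂ ω₁ ^ ((π ω₃ : ℤˣ) : ℤ) * θ ω₃ (ω₂ * ω₁))
    (ω g v : Ghat) (hω : π ω = 1) (hg : π g = 1) :
    θ (ω * (g * v) * ω⁻¹) ω / θ ω (g * v) * (θ g v)⁻¹ =
      (θ (ω * g * ω⁻¹) (ω * v * ω⁻¹))⁻¹ * (θ (ω * g * ω⁻¹) ω / θ ω g) *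
        (θ (ω * v * ω⁻¹) ω / θ ω v) := by
  have hω1 : ((π ω : ℤˣ) : ℤ) = 1 := by rw [hω]; rfl
  have hg1 : ((π (ω * g * ω⁻¹) : ℤˣ) : ℤ) = 1 := by
    rw [show π (ω * g * ω⁻¹) = π g by simp [map_mul, mul_comm]; rw [← mul_assoc, Int.units_mul_self, one_mul], hg]; rfl
  have hA := hcoc ω g v
  rw [hω1, zpow_one] at hA
  have hB := hcoc (ω * g * ω⁻¹) ω v
  rw [hg1, zpow_one, show ω * g * ω⁻¹ * ω = ω * g by group] at hB
  have hC := hcoc (ω * g * ω⁻¹) (ω * v * ω⁻¹) ω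
  rw [hg1, zpow_one, show ω * g * ω⁻¹ * (ω * v * ω⁻¹) = ω * (g * v) * ω⁻¹ by group,
    show ω * v * ω⁻¹ * ω = ω * v by group] at hC
  have eC : θ (ω * (g * v) * ω⁻¹) ω =
      θ (ω * v * ω⁻¹) ω * θ (ω * g * ω⁻¹) (ω * v) / θ (ω * g * ω⁻¹) (ω * v * ω⁻¹) := by
    rw [eq_div_iff (hne _ _)]; linear_combination hC
  have eB : θ (ω * g * ω⁻¹) (ω * v) = θ (ω * g * ω⁻¹) ω * θ (ω * g) v / θ ω v := by
    rw [eq_div_iff (hne _ _)]; linear_combination -hB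
  have eA : θ ω (g * v) = θ ω g * θ (ω * g) v / θ g v := by
    rw [eq_div_iff (hne _ _)]; linear_combination -hA
  rw [eC, eB, eA]
  have n1 := hne (ω * g * ω⁻¹) (ω * v * ω⁻¹)
  have n2 := hne ω v
  have n3 := hne ω g
  have n4 := hne g v
  have n5 := hne (ω * g) v
  field_simp


variable {Ghat : Type*} [Group Ghat] {π : Ghat →* ℤˣ} {θ : Ghat → Ghat → ℂ}

lemma key_odd (hne : ∀ a b : Ghat, θ a b ≠ 0)
    (hθe' : ∀ ω : Ghat, θ 1 ω = 1)
    (hcoc : ∀ ω₃ ω₂ ω₁ : Ghat, θ ω₃ ω₂ * θ (ω₃ * ω₂) ω₁ =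
      θ ω₂ ω₁ ^ ((π ω₃ : ℤˣ) : ℤ) * θ ω₃ (ω₂ * ω₁))
    (ω u v : Ghat) (hω : π ω = -1) (hu : π u = 1) (hv : π v = 1) :
    (θ (u*v)⁻¹ (u*v))⁻¹ * (θ (ω*(u*v)⁻¹*ω⁻¹) ω / θ ω (u*v)⁻¹) * (θ u v)⁻¹ =
      (θ (ω*v⁻¹*ω⁻¹) (ω*u⁻¹*ω⁻¹))⁻¹ * ((θ v⁻¹ v)⁻¹ * (θ (ω*v⁻¹*ω⁻¹) ω / θ ω v⁻¹)) *
        ((θ u⁻¹ u)⁻¹ * (θ (ω*u⁻¹*ω⁻¹) ω / θ ω u⁻¹)) := by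
  have hωz : ((π ω : ℤˣ) : ℤ) = -1 := by rw [hω]; rfl
  have hvz : ((π (ω*v⁻¹*ω⁻¹) : ℤˣ) : ℤ) = 1 := by
    rw [show π (ω*v⁻¹*ω⁻¹) = π v⁻¹ by simp [map_mul, mul_comm]; rw [← mul_assoc, Int.units_mul_self, one_mul],
      map_inv, hv]; rfl
  have hvz' : ((π v⁻¹ : ℤˣ) : ℤ) = 1 := by rw [map_inv, hv]; rfl
  have huz' : ((π u⁻¹ : ℤˣ) : ℤ) = 1 := by rw [map_inv, hu]; rfl
  have hA := hcoc (ω*v⁻¹*ω⁻¹) (ω*u⁻¹*ω⁻¹) ω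
  rw [hvz, zpow_one, show (ω*v⁻¹*ω⁻¹)*(ω*u⁻¹*ω⁻¹) = ω*(u*v)⁻¹*ω⁻¹ by group,
    show (ω*u⁻¹*ω⁻¹)*ω = ω*u⁻¹ by group] at hA
  have hB := hcoc (ω*v⁻¹*ω⁻¹) ω u⁻¹
  rw [hvz, zpow_one, show (ω*v⁻¹*ω⁻¹)*ω = ω*v⁻¹ by group] at hB
  have hC := hcoc ω v⁻¹ u⁻¹
  rw [hωz, zpow_neg_one, show v⁻¹*u⁻¹ = (u*v)⁻¹ by group] at hC
  have hD1 := hcoc v⁻¹ u⁻¹ (u*v)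
  rw [hvz', zpow_one, show v⁻¹*u⁻¹ = (u*v)⁻¹ by group,
    show u⁻¹*(u*v) = v by group] at hD1
  have hD2 := hcoc u⁻¹ u v
  rw [huz', zpow_one, inv_mul_cancel, hθe', mul_one] at hD2
  -- eliminations
  have e1 : θ (ω*(u*v)⁻¹*ω⁻¹) ω =
      θ (ω*u⁻¹*ω⁻¹) ω * θ (ω*v⁻¹*ω⁻¹) (ω*u⁻¹) / θ (ω*v⁻¹*ω⁻¹) (ω*u⁻¹*ω⁻¹) := by
    rw [eq_div_iff (hne _ _)]; linear_combination hA
  have e2 : θ (ω*v⁻¹*ω⁻¹) (ω*u⁻¹) = θ (ω*v⁻¹*ω⁻¹) ω * θ (ω*v⁻¹) u⁻¹ / θ ω u⁻¹ := by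
    rw [eq_div_iff (hne _ _)]; linear_combination -hB
  have e3 : θ (ω*v⁻¹) u⁻¹ = (θ v⁻¹ u⁻¹)⁻¹ * θ ω (u*v)⁻¹ / θ ω v⁻¹ := by
    rw [eq_div_iff (hne _ _)]; linear_combination hC
  have e4 : θ (u*v)⁻¹ (u*v) = θ u⁻¹ (u*v) * θ v⁻¹ v / θ v⁻¹ u⁻¹ := by
    rw [eq_div_iff (hne _ _)]; linear_combination hD1
  have e5 : θ u⁻¹ (u*v) = θ u⁻¹ u / θ u v := by
    rw [eq_div_iff (hne _ _)]; linear_combination -hD2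
  rw [e1, e2, e3, e4, e5]
  have n1 := hne (ω*v⁻¹*ω⁻¹) (ω*u⁻¹*ω⁻¹)
  have n2 := hne ω u⁻¹
  have n3 := hne ω v⁻¹
  have n4 := hne v⁻¹ u⁻¹
  have n5 := hne v⁻¹ v
  have n6 := hne u⁻¹ u
  have n7 := hne u v
  have n8 := hne ω (u*v)⁻¹
  field_simp


variable (hne : ∀ a b : Ghat, θ a b ≠ 0)
  (hθe : ∀ ω : Ghat, θ ω 1 = 1) (hθe' : ∀ ω : Ghat, θ 1 ω = 1)
  (hcoc : ∀ ω₃ ω₂ ω₁ : Ghat, θ ω₃ ω₂ * θ (ω₃ * ω₂) ω₁ =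
      θ ω₂ ω₁ ^ ((π ω₃ : ℤˣ) : ℤ) * θ ω₃ (ω₂ * ω₁))
set_option linter.unusedSectionVars false
include hne hθe hθe' hcoc

lemma key_comp_pp (ω₂ ω₁ g : Ghat) (hω₂ : π ω₂ = 1) (hg : π g = 1) :
    (θ (ω₂*(ω₁*g*ω₁⁻¹)*ω₂⁻¹) ω₂ / θ ω₂ (ω₁*g*ω₁⁻¹)) * (θ (ω₁*g*ω₁⁻¹) ω₁ / θ ω₁ g)
      = θ (ω₂*(ω₁*g*ω₁⁻¹)*ω₂⁻¹) (ω₂*ω₁) / θ (ω₂*ω₁) g := by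
  have hω₂z : ((π ω₂ : ℤˣ) : ℤ) = 1 := by rw [hω₂]; rfl
  have hXz : ((π (ω₂*(ω₁*g*ω₁⁻¹)*ω₂⁻¹) : ℤˣ) : ℤ) = 1 := by
    have : π (ω₂*(ω₁*g*ω₁⁻¹)*ω₂⁻¹) = 1 := by simp [map_mul, map_inv, hg]
    rw [this]; rfl
  have ha := hcoc (ω₂*(ω₁*g*ω₁⁻¹)*ω₂⁻¹) ω₂ ω₁
  rw [hXz, zpow_one, show (ω₂*(ω₁*g*ω₁⁻¹)*ω₂⁻¹)*ω₂ = ω₂*(ω₁*g*ω₁⁻¹) by group] at ha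
  have hb := hcoc ω₂ (ω₁*g*ω₁⁻¹) ω₁
  rw [hω₂z, zpow_one, show (ω₁*g*ω₁⁻¹)*ω₁ = ω₁*g by group] at hb
  have hc := hcoc ω₂ ω₁ g
  rw [hω₂z, zpow_one] at hc
  have e1 : θ (ω₂*(ω₁*g*ω₁⁻¹)*ω₂⁻¹) (ω₂*ω₁) =
      θ (ω₂*(ω₁*g*ω₁⁻¹)*ω₂⁻¹) ω₂ * θ (ω₂*(ω₁*g*ω₁⁻¹)) ω₁ / θ ω₂ ω₁ := by
    rw [eq_div_iff (hne _ _)]; linear_combination -ha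
  have e2 : θ (ω₂*(ω₁*g*ω₁⁻¹)) ω₁ =
      θ (ω₁*g*ω₁⁻¹) ω₁ * θ ω₂ (ω₁*g) / θ ω₂ (ω₁*g*ω₁⁻¹) := by
    rw [eq_div_iff (hne _ _)]; linear_combination hb
  have e3 : θ ω₂ (ω₁*g) = θ ω₂ ω₁ * θ (ω₂*ω₁) g / θ ω₁ g := by
    rw [eq_div_iff (hne _ _)]; linear_combination -hc
  rw [e1, e2, e3]
  have n1 := hne ω₂ (ω₁*g*ω₁⁻¹)
  have n2 := hne ω₁ g
  have n3 := hne ω₂ ω₁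
  have n4 := hne (ω₂*ω₁) g
  field_simp

lemma key_comp_pm (ω₂ ω₁ g : Ghat) (hω₁ : π ω₁ = 1) (hω₂ : π ω₂ = -1) (hg : π g = 1) :
    (θ (ω₁*g⁻¹*ω₁⁻¹) (ω₁*g*ω₁⁻¹))⁻¹ *
        (θ (ω₂*(ω₁*g⁻¹*ω₁⁻¹)*ω₂⁻¹) ω₂ / θ ω₂ (ω₁*g⁻¹*ω₁⁻¹)) *
        (θ (ω₁*g*ω₁⁻¹) ω₁ / θ ω₁ g)
      = (θ g⁻¹ g)⁻¹ * (θ (ω₂*(ω₁*g⁻¹*ω₁⁻¹)*ω₂⁻¹) (ω₂*ω₁) / θ (ω₂*ω₁) g⁻¹) := by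
  have hω₁z : ((π ω₁ : ℤˣ) : ℤ) = 1 := by rw [hω₁]; rfl
  have hω₂z : ((π ω₂ : ℤˣ) : ℤ) = -1 := by rw [hω₂]; rfl
  have hpz : ((π (ω₁*g⁻¹*ω₁⁻¹) : ℤˣ) : ℤ) = 1 := by
    have : π (ω₁*g⁻¹*ω₁⁻¹) = 1 := by simp [map_mul, map_inv, hg]
    rw [this]; rfl
  have hXz : ((π (ω₂*(ω₁*g⁻¹*ω₁⁻¹)*ω₂⁻¹) : ℤˣ) : ℤ) = 1 := by
    have : π (ω₂*(ω₁*g⁻¹*ω₁⁻¹)*ω₂⁻¹) = 1 := by simp [map_mul, map_inv, hg]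
    rw [this]; rfl
  have ha := hcoc (ω₂*(ω₁*g⁻¹*ω₁⁻¹)*ω₂⁻¹) ω₂ ω₁
  rw [hXz, zpow_one, show (ω₂*(ω₁*g⁻¹*ω₁⁻¹)*ω₂⁻¹)*ω₂ = ω₂*(ω₁*g⁻¹*ω₁⁻¹) by group] at ha
  have hb := hcoc ω₂ (ω₁*g⁻¹*ω₁⁻¹) ω₁
  rw [hω₂z, zpow_neg_one, show (ω₁*g⁻¹*ω₁⁻¹)*ω₁ = ω₁*g⁻¹ by group] at hb
  have hc := hcoc ω₂ ω₁ g⁻¹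
  rw [hω₂z, zpow_neg_one] at hc
  have hd1 := hcoc (ω₁*g⁻¹*ω₁⁻¹) (ω₁*g*ω₁⁻¹) ω₁
  rw [hpz, zpow_one, show (ω₁*g⁻¹*ω₁⁻¹)*(ω₁*g*ω₁⁻¹) = 1 by group, hθe',
    show (ω₁*g*ω₁⁻¹)*ω₁ = ω₁*g by group] at hd1
  have hd2 := hcoc (ω₁*g⁻¹*ω₁⁻¹) ω₁ g
  rw [hpz, zpow_one, show (ω₁*g⁻¹*ω₁⁻¹)*ω₁ = ω₁*g⁻¹ by group] at hd2
  have hd3 := hcoc ω₁ g⁻¹ g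
  rw [hω₁z, zpow_one, inv_mul_cancel, hθe, mul_one] at hd3
  have e4 : θ (ω₁*g⁻¹*ω₁⁻¹) (ω₁*g*ω₁⁻¹) = θ (ω₁*g*ω₁⁻¹) ω₁ * θ (ω₁*g⁻¹*ω₁⁻¹) (ω₁*g) := by
    linear_combination hd1
  have e5 : θ (ω₁*g⁻¹*ω₁⁻¹) (ω₁*g) =
      θ (ω₁*g⁻¹*ω₁⁻¹) ω₁ * θ (ω₁*g⁻¹) g / θ ω₁ g := by
    rw [eq_div_iff (hne _ _)]; linear_combination -hd2
  have e6 : θ (ω₁*g⁻¹) g = θ g⁻¹ g / θ ω₁ g⁻¹ := by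
    rw [eq_div_iff (hne _ _)]; linear_combination hd3
  have e1 : θ (ω₂*(ω₁*g⁻¹*ω₁⁻¹)*ω₂⁻¹) (ω₂*ω₁) =
      θ (ω₂*(ω₁*g⁻¹*ω₁⁻¹)*ω₂⁻¹) ω₂ * θ (ω₂*(ω₁*g⁻¹*ω₁⁻¹)) ω₁ / θ ω₂ ω₁ := by
    rw [eq_div_iff (hne _ _)]; linear_combination -ha
  have e2 : θ (ω₂*(ω₁*g⁻¹*ω₁⁻¹)) ω₁ =
      (θ (ω₁*g⁻¹*ω₁⁻¹) ω₁)⁻¹ * θ ω₂ (ω₁*g⁻¹) / θ ω₂ (ω₁*g⁻¹*ω₁⁻¹) := by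
    rw [eq_div_iff (hne _ _)]; linear_combination hb
  have e3 : θ ω₂ (ω₁*g⁻¹) = θ ω₂ ω₁ * θ (ω₂*ω₁) g⁻¹ * θ ω₁ g⁻¹ := by
    linear_combination (-θ ω₂ (ω₁*g⁻¹)) * mul_inv_cancel₀ (hne ω₁ g⁻¹) - θ ω₁ g⁻¹ * hc
  rw [e4, e5, e6, e1, e2, e3]
  have n1 := hne ω₂ (ω₁*g⁻¹*ω₁⁻¹)
  have n2 := hne ω₁ g
  have n3 := hne ω₂ ω₁
  have n4 := hne (ω₂*ω₁) g⁻¹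
  have n5 := hne ω₁ g⁻¹
  have n6 := hne g⁻¹ g
  have n7 := hne (ω₁*g⁻¹*ω₁⁻¹) ω₁
  have n8 := hne (ω₁*g*ω₁⁻¹) ω₁
  field_simp

lemma key_comp_mp (ω₂ ω₁ g : Ghat) (hω₂ : π ω₂ = 1) (hg : π g = 1) :
    (θ (ω₂*(ω₁*g⁻¹*ω₁⁻¹)*ω₂⁻¹) ω₂ / θ ω₂ (ω₁*g⁻¹*ω₁⁻¹)) *
        ((θ g⁻¹ g)⁻¹ * (θ (ω₁*g⁻¹*ω₁⁻¹) ω₁ / θ ω₁ g⁻¹))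
      = (θ g⁻¹ g)⁻¹ * (θ (ω₂*(ω₁*g⁻¹*ω₁⁻¹)*ω₂⁻¹) (ω₂*ω₁) / θ (ω₂*ω₁) g⁻¹) := by
  have hω₂z : ((π ω₂ : ℤˣ) : ℤ) = 1 := by rw [hω₂]; rfl
  have hXz : ((π (ω₂*(ω₁*g⁻¹*ω₁⁻¹)*ω₂⁻¹) : ℤˣ) : ℤ) = 1 := by
    have : π (ω₂*(ω₁*g⁻¹*ω₁⁻¹)*ω₂⁻¹) = 1 := by simp [map_mul, map_inv, hg]
    rw [this]; rfl
  have ha := hcoc (ω₂*(ω₁*g⁻¹*ω₁⁻¹)*ω₂⁻¹) ω₂ ω₁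
  rw [hXz, zpow_one, show (ω₂*(ω₁*g⁻¹*ω₁⁻¹)*ω₂⁻¹)*ω₂ = ω₂*(ω₁*g⁻¹*ω₁⁻¹) by group] at ha
  have hb := hcoc ω₂ (ω₁*g⁻¹*ω₁⁻¹) ω₁
  rw [hω₂z, zpow_one, show (ω₁*g⁻¹*ω₁⁻¹)*ω₁ = ω₁*g⁻¹ by group] at hb
  have hc := hcoc ω₂ ω₁ g⁻¹
  rw [hω₂z, zpow_one] at hc
  have e1 : θ (ω₂*(ω₁*g⁻¹*ω₁⁻¹)*ω₂⁻¹) (ω₂*ω₁) =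
      θ (ω₂*(ω₁*g⁻¹*ω₁⁻¹)*ω₂⁻¹) ω₂ * θ (ω₂*(ω₁*g⁻¹*ω₁⁻¹)) ω₁ / θ ω₂ ω₁ := by
    rw [eq_div_iff (hne _ _)]; linear_combination -ha
  have e2 : θ (ω₂*(ω₁*g⁻¹*ω₁⁻¹)) ω₁ =
      θ (ω₁*g⁻¹*ω₁⁻¹) ω₁ * θ ω₂ (ω₁*g⁻¹) / θ ω₂ (ω₁*g⁻¹*ω₁⁻¹) := by
    rw [eq_div_iff (hne _ _)]; linear_combination hb
  have e3 : θ ω₂ (ω₁*g⁻¹) = θ ω₂ ω₁ * θ (ω₂*ω₁) g⁻¹ / θ ω₁ g⁻¹ := by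
    rw [eq_div_iff (hne _ _)]; linear_combination -hc
  rw [e1, e2, e3]
  have n1 := hne ω₂ (ω₁*g⁻¹*ω₁⁻¹)
  have n2 := hne ω₁ g⁻¹
  have n3 := hne ω₂ ω₁
  have n4 := hne (ω₂*ω₁) g⁻¹
  have n6 := hne g⁻¹ g
  field_simp

lemma key_comp_mm (ω₂ ω₁ g : Ghat) (hω₁ : π ω₁ = -1) (hω₂ : π ω₂ = -1) (hg : π g = 1) :
    (θ (ω₁*g*ω₁⁻¹) (ω₁*g⁻¹*ω₁⁻¹))⁻¹ *
        (θ (ω₂*(ω₁*g*ω₁⁻¹)*ω₂⁻¹) ω₂ / θ ω₂ (ω₁*g*ω₁⁻¹)) *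
        ((θ g⁻¹ g)⁻¹ * (θ (ω₁*g⁻¹*ω₁⁻¹) ω₁ / θ ω₁ g⁻¹))
      = θ (ω₂*(ω₁*g*ω₁⁻¹)*ω₂⁻¹) (ω₂*ω₁) / θ (ω₂*ω₁) g := by
  have hω₁z : ((π ω₁ : ℤˣ) : ℤ) = -1 := by rw [hω₁]; rfl
  have hω₂z : ((π ω₂ : ℤˣ) : ℤ) = -1 := by rw [hω₂]; rfl
  have hgz : ((π g : ℤˣ) : ℤ) = 1 := by rw [hg]; rfl
  have hqz : ((π (ω₁*g*ω₁⁻¹) : ℤˣ) : ℤ) = 1 := by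
    have : π (ω₁*g*ω₁⁻¹) = 1 := by simp [map_mul, map_inv, hg]
    rw [this]; rfl
  have hXz : ((π (ω₂*(ω₁*g*ω₁⁻¹)*ω₂⁻¹) : ℤˣ) : ℤ) = 1 := by
    have : π (ω₂*(ω₁*g*ω₁⁻¹)*ω₂⁻¹) = 1 := by simp [map_mul, map_inv, hg]
    rw [this]; rfl
  have ha := hcoc (ω₂*(ω₁*g*ω₁⁻¹)*ω₂⁻¹) ω₂ ω₁
  rw [hXz, zpow_one, show (ω₂*(ω₁*g*ω₁⁻¹)*ω₂⁻¹)*ω₂ = ω₂*(ω₁*g*ω₁⁻¹) by group] at ha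
  have hb := hcoc ω₂ (ω₁*g*ω₁⁻¹) ω₁
  rw [hω₂z, zpow_neg_one, show (ω₁*g*ω₁⁻¹)*ω₁ = ω₁*g by group] at hb
  have hc := hcoc ω₂ ω₁ g
  rw [hω₂z, zpow_neg_one] at hc
  have hd1 := hcoc (ω₁*g*ω₁⁻¹) (ω₁*g⁻¹*ω₁⁻¹) ω₁
  rw [hqz, zpow_one, show (ω₁*g*ω₁⁻¹)*(ω₁*g⁻¹*ω₁⁻¹) = 1 by group, hθe',
    show (ω₁*g⁻¹*ω₁⁻¹)*ω₁ = ω₁*g⁻¹ by group] at hd1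
  have hd2 := hcoc (ω₁*g*ω₁⁻¹) ω₁ g⁻¹
  rw [hqz, zpow_one, show (ω₁*g*ω₁⁻¹)*ω₁ = ω₁*g by group] at hd2
  have hd3 := hcoc ω₁ g g⁻¹
  rw [hω₁z, zpow_neg_one, mul_inv_cancel, hθe, mul_one] at hd3
  have hd4 := hcoc g g⁻¹ g
  rw [hgz, zpow_one, mul_inv_cancel, hθe', inv_mul_cancel, hθe, mul_one, mul_one] at hd4
  have e4 : θ (ω₁*g*ω₁⁻¹) (ω₁*g⁻¹*ω₁⁻¹) = θ (ω₁*g⁻¹*ω₁⁻¹) ω₁ * θ (ω₁*g*ω₁⁻¹) (ω₁*g⁻¹) := by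
    linear_combination hd1
  have e5 : θ (ω₁*g*ω₁⁻¹) (ω₁*g⁻¹) =
      θ (ω₁*g*ω₁⁻¹) ω₁ * θ (ω₁*g) g⁻¹ / θ ω₁ g⁻¹ := by
    rw [eq_div_iff (hne _ _)]; linear_combination -hd2
  have e6 : θ (ω₁*g) g⁻¹ = (θ g g⁻¹)⁻¹ / θ ω₁ g := by
    rw [eq_div_iff (hne _ _)]; linear_combination hd3
  have e7 : θ g g⁻¹ = θ g⁻¹ g := by linear_combination hd4
  have e1 : θ (ω₂*(ω₁*g*ω₁⁻¹)*ω₂⁻¹) (ω₂*ω₁) =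
      θ (ω₂*(ω₁*g*ω₁⁻¹)*ω₂⁻¹) ω₂ * θ (ω₂*(ω₁*g*ω₁⁻¹)) ω₁ / θ ω₂ ω₁ := by
    rw [eq_div_iff (hne _ _)]; linear_combination -ha
  have e2 : θ (ω₂*(ω₁*g*ω₁⁻¹)) ω₁ =
      (θ (ω₁*g*ω₁⁻¹) ω₁)⁻¹ * θ ω₂ (ω₁*g) / θ ω₂ (ω₁*g*ω₁⁻¹) := by
    rw [eq_div_iff (hne _ _)]; linear_combination hb
  have e3 : θ ω₂ (ω₁*g) = θ ω₂ ω₁ * θ (ω₂*ω₁) g * θ ω₁ g := by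
    linear_combination (-θ ω₂ (ω₁*g)) * mul_inv_cancel₀ (hne ω₁ g) - θ ω₁ g * hc
  rw [e4, e5, e6, e7, e1, e2, e3]
  have n1 := hne ω₂ (ω₁*g*ω₁⁻¹)
  have n2 := hne ω₁ g
  have n3 := hne ω₂ ω₁
  have n4 := hne (ω₂*ω₁) g
  have n5 := hne ω₁ g⁻¹
  have n6 := hne g⁻¹ g
  have n7 := hne (ω₁*g*ω₁⁻¹) ω₁
  have n8 := hne (ω₁*g⁻¹*ω₁⁻¹) ω₁
  field_simp

lemma tau_comp (ω₂ ω₁ g : Ghat) (hg : π g = 1) :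
    taurefl π θ ω₂ (ω₁ * g ^ ((π ω₁ : ℤˣ) : ℤ) * ω₁⁻¹) * taurefl π θ ω₁ g
      = taurefl π θ (ω₂ * ω₁) g := by
  rcases Int.units_eq_one_or (π ω₁) with h1 | h1 <;>
    rcases Int.units_eq_one_or (π ω₂) with h2 | h2
  · have hΩ : π (ω₂ * ω₁) = 1 := by rw [map_mul, h1, h2, mul_one]
    rw [h1, Units.val_one, zpow_one, tau_even h2, tau_even h1, tau_even hΩ,
      show ω₂*ω₁*g*(ω₂*ω₁)⁻¹ = ω₂*(ω₁*g*ω₁⁻¹)*ω₂⁻¹ by group]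
    exact key_comp_pp hne hθe hθe' hcoc ω₂ ω₁ g h2 hg
  · have hΩ : π (ω₂ * ω₁) = -1 := by rw [map_mul, h1, h2, mul_one]
    rw [h1, Units.val_one, zpow_one, tau_odd h2, tau_even h1, tau_odd hΩ,
      show (ω₁*g*ω₁⁻¹)⁻¹ = ω₁*g⁻¹*ω₁⁻¹ by group,
      show ω₂*ω₁*g⁻¹*(ω₂*ω₁)⁻¹ = ω₂*(ω₁*g⁻¹*ω₁⁻¹)*ω₂⁻¹ by group]
    exact key_comp_pm hne hθe hθe' hcoc ω₂ ω₁ g h1 h2 hg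
  · have hΩ : π (ω₂ * ω₁) = -1 := by rw [map_mul, h1, h2, one_mul]
    rw [h1, show ((-1 : ℤˣ) : ℤ) = (-1 : ℤ) from rfl, zpow_neg_one,
      tau_even h2, tau_odd h1, tau_odd hΩ,
      show ω₂*ω₁*g⁻¹*(ω₂*ω₁)⁻¹ = ω₂*(ω₁*g⁻¹*ω₁⁻¹)*ω₂⁻¹ by group]
    exact key_comp_mp hne hθe hθe' hcoc ω₂ ω₁ g h2 hg
  · have hΩ : π (ω₂ * ω₁) = 1 := by simp [map_mul, h1, h2]
    rw [h1, show ((-1 : ℤˣ) : ℤ) = (-1 : ℤ) from rfl, zpow_neg_one,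
      tau_odd h2, tau_odd h1, tau_even hΩ,
      show (ω₁*g⁻¹*ω₁⁻¹)⁻¹ = ω₁*g*ω₁⁻¹ by group,
      show ω₂*ω₁*g*(ω₂*ω₁)⁻¹ = ω₂*(ω₁*g*ω₁⁻¹)*ω₂⁻¹ by group]
    exact key_comp_mm hne hθe hθe' hcoc ω₂ ω₁ g h1 h2 hg

end Aux

/-- Lemma 3.6 of the paper. `p^ω` is an algebra automorphism of
`ℂ^{θ⁻¹}[G]` when `π(ω) = 1` and an anti-automorphism when `π(ω) = -1`;
`p^{ω₂} ∘ p^{ω₁} = p^{ω₂ω₁}`; and each `p^ω` preserves the coefficient of `l_e`. -/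
theorem stmt11 {Ghat : Type*} [Group Ghat] [Fintype Ghat] [DecidableEq Ghat]
    (π : Ghat →* ℤˣ) (hπ : Function.Surjective π)
    (θ : Ghat → Ghat → ℂ)
    (hnorm : ∀ a b : Ghat, ‖θ a b‖ = 1)
    (hθe : ∀ ω : Ghat, θ ω 1 = 1) (hθe' : ∀ ω : Ghat, θ 1 ω = 1)
    (hcoc : ∀ ω₃ ω₂ ω₁ : Ghat, θ ω₃ ω₂ * θ (ω₃ * ω₂) ω₁ =
      θ ω₂ ω₁ ^ ((π ω₃ : ℤˣ) : ℤ) * θ ω₃ (ω₂ * ω₁))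
    (lam : Ghat →* ℂ) (hlam : ∀ ω : Ghat, ‖lam ω‖ = 1) :
    -- automorphism for even ω, anti-automorphism for odd ω
    (∀ ω : Ghat, π ω = 1 → ∀ a b : Ghat → ℂ, SupportedG π a → SupportedG π b →
      pmapG π θ lam ω (convG π θ a b) =
        convG π θ (pmapG π θ lam ω a) (pmapG π θ lam ω b)) ∧
    (∀ ω : Ghat, π ω = -1 → ∀ a b : Ghat → ℂ, SupportedG π a → SupportedG π b →
      pmapG π θ lam ω (convG π θ a b) =
        convG π θ (pmapG π θ lam ω b) (pmapG π θ lam ω a)) ∧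
    -- unitality and bijectivity
    (∀ ω : Ghat, pmapG π θ lam ω (ellG (1 : Ghat)) = ellG (1 : Ghat)) ∧
    (∀ ω : Ghat, Function.Bijective (pmapG π θ lam ω)) ∧
    -- homomorphism property
    (∀ ω₂ ω₁ : Ghat, ∀ a : Ghat → ℂ, SupportedG π a →
      pmapG π θ lam ω₂ (pmapG π θ lam ω₁ a) = pmapG π θ lam (ω₂ * ω₁) a) ∧
    -- preservation of the trace functional (coefficient of l_e)
    (∀ ω : Ghat, ∀ a : Ghat → ℂ, SupportedG π a →
      pmapG π θ lam ω a 1 = a 1) := by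
  have hne : ∀ a b : Ghat, θ a b ≠ 0 := by
    intro a b h
    have := hnorm a b
    rw [h] at this
    simp at this
  have hlamne : ∀ x : Ghat, lam x ≠ 0 := by
    intro x h
    have := hlam x
    rw [h] at this
    simp at this
  have hinvself : ∀ u : ℤˣ, u⁻¹ = u := by
    intro u
    rcases Int.units_eq_one_or u with h | h <;> rw [h] <;> rfl
  refine ⟨?_, ?_, ?_, ?_, ?_, ?_⟩
  -- Part (i): even automorphism
  · intro ω hω a b ha hb
    have hωz : ((π ω : ℤˣ) : ℤ) = 1 := by rw [hω]; rfl
    funext k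
    simp only [pmapG, convG, hωz, zpow_one, show ((1:ℤ)-1)/2 = (0:ℤ) by norm_num,
      zpow_zero, one_mul, tau_even hω]
    rw [Finset.mul_sum]
    refine Finset.sum_nbij' (fun g => ω * g * ω⁻¹) (fun h => ω⁻¹ * h * ω) ?_ ?_ ?_ ?_ ?_
    · intro g hgm
      simp only [Finset.mem_filter, Finset.mem_univ, true_and] at hgm ⊢
      rw [pi_conj]; exact hgm
    · intro h hm
      simp only [Finset.mem_filter, Finset.mem_univ, true_and] at hm ⊢
      rw [show ω⁻¹ * h * ω = ω⁻¹ * h * (ω⁻¹)⁻¹ by rw [inv_inv], pi_conj]; exact hm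
    · intro g _
      group
    · intro h _
      group
    · intro g hgm
      simp only [Finset.mem_filter, Finset.mem_univ, true_and] at hgm
      rw [show ω⁻¹ * (ω * g * ω⁻¹) * ω = g by group,
        show ω⁻¹ * ((ω * g * ω⁻¹)⁻¹ * k) * ω = g⁻¹ * (ω⁻¹ * k * ω) by group,
        show (ω * g * ω⁻¹)⁻¹ * k = ω * (g⁻¹ * (ω⁻¹ * k * ω)) * ω⁻¹ by group]
      set v := g⁻¹ * (ω⁻¹ * k * ω) with hv
      rw [show ω⁻¹ * k * ω = g * v by rw [hv]; group]
      linear_combination (a g * b v) * key_even hne hcoc ω g v hω hgm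
  -- Part (ii): odd anti-automorphism
  · intro ω hω a b ha hb
    have hωz : ((π ω : ℤˣ) : ℤ) = -1 := by rw [hω]; rfl
    funext k
    simp only [pmapG, convG, hωz, show ((-1:ℤ)-1)/2 = (-1:ℤ) by norm_num,
      zpow_neg, zpow_one, tau_odd hω, inv_inv]
    rw [show (ω⁻¹ * k * ω)⁻¹ = ω⁻¹ * k⁻¹ * ω by group]
    by_cases hk : π k = 1
    · rw [Finset.mul_sum]
      refine Finset.sum_nbij' (fun g => k * (ω * g * ω⁻¹)) (fun h => ω⁻¹ * (k⁻¹ * h) * ω) ?_ ?_ ?_ ?_ ?_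
      · intro g hgm
        simp only [Finset.mem_filter, Finset.mem_univ, true_and] at hgm ⊢
        rw [map_mul, hk, one_mul, pi_conj]; exact hgm
      · intro h hm
        simp only [Finset.mem_filter, Finset.mem_univ, true_and] at hm ⊢
        rw [show ω⁻¹ * (k⁻¹ * h) * ω = ω⁻¹ * (k⁻¹ * h) * (ω⁻¹)⁻¹ by rw [inv_inv], pi_conj,
          map_mul, map_inv, hk, hm]
        rfl
      · intro g _
        group
      · intro h _
        group
      · intro g hgm
        simp only [Finset.mem_filter, Finset.mem_univ, true_and] at hgm
        have hvπ : π (g⁻¹ * (ω⁻¹ * k⁻¹ * ω)) = 1 := by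
          rw [map_mul, map_inv, hgm, inv_one, one_mul,
            show ω⁻¹ * k⁻¹ * ω = ω⁻¹ * k⁻¹ * (ω⁻¹)⁻¹ by rw [inv_inv], pi_conj, map_inv, hk]
          rfl
        beta_reduce
        rw [show ω⁻¹ * (k * (ω * g * ω⁻¹)) * ω = (g⁻¹ * (ω⁻¹ * k⁻¹ * ω))⁻¹ by group,
          show (k * (ω * g * ω⁻¹))⁻¹ * k = ω * g⁻¹ * ω⁻¹ by group,
          show ω⁻¹ * (ω * g⁻¹ * ω⁻¹) * ω = g⁻¹ by group,
          show k * (ω * g * ω⁻¹) = ω * (g⁻¹ * (ω⁻¹ * k⁻¹ * ω))⁻¹ * ω⁻¹ by group]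
        simp only [inv_inv]
        set v := g⁻¹ * (ω⁻¹ * k⁻¹ * ω) with hv
        rw [show ω⁻¹ * k⁻¹ * ω = g * v by rw [hv]; group,
          show ω⁻¹ * k * ω = (g * v)⁻¹ by rw [hv]; group,
          show lam (g * v) = lam g * lam v from map_mul lam g v, mul_inv]
        linear_combination ((lam g)⁻¹ * (lam v)⁻¹ * a g * b v) *
          key_odd hne hθe' hcoc ω g v hω hgm hvπ
    · have h1 : ∀ g ∈ Finset.univ.filter (fun g : Ghat => π g = 1),
          (θ g (g⁻¹ * (ω⁻¹ * k⁻¹ * ω)))⁻¹ * a g * b (g⁻¹ * (ω⁻¹ * k⁻¹ * ω)) = 0 := by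
        intro g hgm
        simp only [Finset.mem_filter, Finset.mem_univ, true_and] at hgm
        have : π (g⁻¹ * (ω⁻¹ * k⁻¹ * ω)) = π k := by
          rw [map_mul, map_inv, hgm, inv_one, one_mul,
            show ω⁻¹ * k⁻¹ * ω = ω⁻¹ * k⁻¹ * (ω⁻¹)⁻¹ by rw [inv_inv], pi_conj, map_inv,
            hinvself]
        rw [hb _ (by rw [this]; exact hk), mul_zero]
      rw [Finset.sum_eq_zero h1, mul_zero]
      symm
      refine Finset.sum_eq_zero fun h hm => ?_
      simp only [Finset.mem_filter, Finset.mem_univ, true_and] at hm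
      have hπa : π ((ω⁻¹ * (h⁻¹ * k) * ω)⁻¹) = π k := by
        rw [map_inv, show ω⁻¹ * (h⁻¹ * k) * ω = ω⁻¹ * (h⁻¹ * k) * (ω⁻¹)⁻¹ by rw [inv_inv],
          pi_conj, map_mul, map_inv, hm, inv_one, one_mul, hinvself]
      rw [ha _ (by rw [hπa]; exact hk), mul_zero, mul_zero]
  -- Part (iii): unitality
  · intro ω
    funext k
    by_cases hk : k = 1
    · subst hk
      simp [pmapG, taurefl, ellG, hθe, hθe']
    · have hx : ω⁻¹ * k * ω ≠ 1 := by
        intro h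
        apply hk
        have h2 := congrArg (fun z => ω * z * ω⁻¹) h
        rw [show ω * (ω⁻¹ * k * ω) * ω⁻¹ = k by group, show ω * (1:Ghat) * ω⁻¹ = 1 by group] at h2
        exact h2
      have harg : (ω⁻¹ * k * ω) ^ ((π ω : ℤˣ) : ℤ) ≠ 1 := by
        rcases Int.units_eq_one_or (π ω) with h | h
        · rw [val_one' h, zpow_one]; exact hx
        · rw [val_neg' h, zpow_neg_one]
          exact fun hcon => hx (inv_eq_one.mp hcon)
      simp [pmapG, ellG, harg, hk]
  -- Part (iv): bijectivity
  · intro ω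
    have he2 : ((π ω : ℤˣ) : ℤ) * ((π ω : ℤˣ) : ℤ) = 1 := by
      rcases Int.units_eq_one_or (π ω) with h | h <;> rw [h] <;> rfl
    have hcoefne : ∀ x : Ghat,
        lam x ^ ((((π ω : ℤˣ) : ℤ) - 1) / 2) * taurefl π θ ω x ≠ 0 := by
      intro x
      exact mul_ne_zero (zpow_ne_zero _ (hlamne x))
        (mul_ne_zero (zpow_ne_zero _ (hne _ _)) (div_ne_zero (hne _ _) (hne _ _)))
    refine Function.bijective_iff_has_inverse.mpr
      ⟨fun c j => (lam j ^ ((((π ω : ℤˣ) : ℤ) - 1) / 2) * taurefl π θ ω j)⁻¹ *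
          c (ω * j ^ ((π ω : ℤˣ) : ℤ) * ω⁻¹), ?_, ?_⟩
    · intro a
      funext j
      simp only [pmapG]
      rw [show ω⁻¹ * (ω * j ^ ((π ω : ℤˣ) : ℤ) * ω⁻¹) * ω = j ^ ((π ω : ℤˣ) : ℤ) by group,
        ← zpow_mul, he2, zpow_one, ← mul_assoc, inv_mul_cancel₀ (hcoefne j), one_mul]
    · intro c
      funext k
      simp only [pmapG]
      rw [show ω * ((ω⁻¹ * k * ω) ^ ((π ω : ℤˣ) : ℤ)) ^ ((π ω : ℤˣ) : ℤ) * ω⁻¹ = k by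
          rw [← zpow_mul, he2, zpow_one]; group,
        ← mul_assoc, mul_inv_cancel₀ (hcoefne _), one_mul]
  -- Part (v): composition
  · intro ω₂ ω₁ a ha
    funext k
    simp only [pmapG]
    have hG : (ω₁⁻¹ * (ω₂⁻¹ * k * ω₂) ^ ((π ω₂ : ℤˣ) : ℤ) * ω₁) ^ ((π ω₁ : ℤˣ) : ℤ)
        = ((ω₂ * ω₁)⁻¹ * k * (ω₂ * ω₁)) ^ ((π (ω₂ * ω₁) : ℤˣ) : ℤ) := by
      rcases Int.units_eq_one_or (π ω₁) with h1 | h1 <;>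
        rcases Int.units_eq_one_or (π ω₂) with h2 | h2
      · rw [val_one' h1, val_one' h2,
          val_one' (show π (ω₂ * ω₁) = 1 by rw [map_mul, h1, h2, mul_one]),
          zpow_one, zpow_one, zpow_one]
        group
      · rw [val_one' h1, val_neg' h2,
          val_neg' (show π (ω₂ * ω₁) = -1 by rw [map_mul, h1, h2, mul_one]),
          zpow_one, zpow_neg_one, zpow_neg_one]
        group
      · rw [val_neg' h1, val_one' h2,
          val_neg' (show π (ω₂ * ω₁) = -1 by rw [map_mul, h1, h2, one_mul]),
          zpow_one, zpow_neg_one, zpow_neg_one]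
        group
      · rw [val_neg' h1, val_neg' h2,
          val_one' (show π (ω₂ * ω₁) = 1 by simp [map_mul, h1, h2]),
          zpow_one, zpow_neg_one, zpow_neg_one]
        group
    have hF2 : (ω₂⁻¹ * k * ω₂) ^ ((π ω₂ : ℤˣ) : ℤ)
        = ω₁ * (((ω₂ * ω₁)⁻¹ * k * (ω₂ * ω₁)) ^ ((π (ω₂ * ω₁) : ℤˣ) : ℤ)) ^
            ((π ω₁ : ℤˣ) : ℤ) * ω₁⁻¹ := by
      rcases Int.units_eq_one_or (π ω₁) with h1 | h1 <;>
        rcases Int.units_eq_one_or (π ω₂) with h2 | h2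
      · rw [val_one' h1, val_one' h2,
          val_one' (show π (ω₂ * ω₁) = 1 by rw [map_mul, h1, h2, mul_one]),
          zpow_one, zpow_one, zpow_one]
        group
      · rw [val_one' h1, val_neg' h2,
          val_neg' (show π (ω₂ * ω₁) = -1 by rw [map_mul, h1, h2, mul_one]),
          zpow_one, zpow_neg_one, zpow_neg_one]
        group
      · rw [val_neg' h1, val_one' h2,
          val_neg' (show π (ω₂ * ω₁) = -1 by rw [map_mul, h1, h2, one_mul]),
          zpow_one, zpow_neg_one, zpow_neg_one]
        group
      · rw [val_neg' h1, val_neg' h2,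
          val_one' (show π (ω₂ * ω₁) = 1 by simp [map_mul, h1, h2]),
          zpow_one, zpow_neg_one, zpow_neg_one]
        group
    rw [hG, hF2]
    set G := ((ω₂ * ω₁)⁻¹ * k * (ω₂ * ω₁)) ^ ((π (ω₂ * ω₁) : ℤˣ) : ℤ) with hGdef
    by_cases haG : a G = 0
    · simp [haG]
    · have hπG : π G = 1 := by
        by_contra hcon
        exact haG (ha _ hcon)
      have htau := tau_comp hne hθe hθe' hcoc ω₂ ω₁ G hπG
      rw [← htau]
      have hlam2 : lam (ω₁ * G ^ ((π ω₁ : ℤˣ) : ℤ) * ω₁⁻¹) ^ ((((π ω₂ : ℤˣ) : ℤ) - 1) / 2) *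
          lam G ^ ((((π ω₁ : ℤˣ) : ℤ) - 1) / 2)
            = lam G ^ ((((π (ω₂ * ω₁) : ℤˣ) : ℤ) - 1) / 2) := by
        have h0 : lam ω₁ * lam ω₁⁻¹ = 1 := by rw [← map_mul, mul_inv_cancel, map_one]
        have hg0 : lam G⁻¹ * lam G = 1 := by rw [← map_mul, inv_mul_cancel, map_one]
        rcases Int.units_eq_one_or (π ω₁) with h1 | h1 <;>
          rcases Int.units_eq_one_or (π ω₂) with h2 | h2
        · rw [val_one' h1, val_one' h2,
            val_one' (show π (ω₂ * ω₁) = 1 by rw [map_mul, h1, h2, mul_one])]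
          norm_num
        · rw [val_one' h1, val_neg' h2,
            val_neg' (show π (ω₂ * ω₁) = -1 by rw [map_mul, h1, h2, mul_one])]
          norm_num
          have hl1 := hlamne ω₁
          have hlG := hlamne G
          field_simp
        · rw [val_neg' h1, val_one' h2,
            val_neg' (show π (ω₂ * ω₁) = -1 by rw [map_mul, h1, h2, one_mul])]
          norm_num
        · rw [val_neg' h1, val_neg' h2,
            val_one' (show π (ω₂ * ω₁) = 1 by simp [map_mul, h1, h2])]
          norm_num
          have hl1 := hlamne ω₁
          have hlG := hlamne G
          field_simp
      linear_combination (taurefl π θ ω₂ (ω₁ * G ^ ((π ω₁ : ℤˣ) : ℤ) * ω₁⁻¹) *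
        taurefl π θ ω₁ G * a G) * hlam2
  -- Part (vi): trace preservation
  · intro ω a ha
    simp only [pmapG]
    rw [show ω⁻¹ * (1:Ghat) * ω = 1 by group, one_zpow]
    simp [taurefl, hθe, hθe']
end

section
/- For every ς ∈ Ĝ∖G, the map p^ς maps the centre Z(ℂ^{θ⁻¹}[G]) into itself and squares to the identity on the centre; moreover the restriction of p^ς to the centre is independent of ς, i.e. p^ς(a) = p^{ς'}(a) for all ς, ς' ∈ Ĝ∖G and all a ∈ Z(ℂ^{θ⁻¹}[G]). -/
set_option maxHeartbeats 2000000 in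
/-- Proposition 3.7 of the paper. For every `ς ∈ Ĝ∖G`, `p^ς` maps
the centre `Z(ℂ^{θ⁻¹}[G])` into itself, squares to the identity on the centre, and its
restriction to the centre is independent of `ς`. -/
theorem stmt12 {Ghat : Type*} [Group Ghat] [Fintype Ghat] [DecidableEq Ghat]
    (π : Ghat →* ℤˣ) (hπ : Function.Surjective π)
    (θ : Ghat → Ghat → ℂ)
    (hnorm : ∀ a b : Ghat, ‖θ a b‖ = 1)
    (hθe : ∀ ω : Ghat, θ ω 1 = 1) (hθe' : ∀ ω : Ghat, θ 1 ω = 1)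
    (hcoc : ∀ ω₃ ω₂ ω₁ : Ghat, θ ω₃ ω₂ * θ (ω₃ * ω₂) ω₁ =
      θ ω₂ ω₁ ^ ((π ω₃ : ℤˣ) : ℤ) * θ ω₃ (ω₂ * ω₁))
    (lam : Ghat →* ℂ) (hlam : ∀ ω : Ghat, ‖lam ω‖ = 1) :
    (∀ ς : Ghat, π ς = -1 → ∀ a : Ghat → ℂ, IsCentralG π θ a →
      IsCentralG π θ (pmapG π θ lam ς a)) ∧
    (∀ ς : Ghat, π ς = -1 → ∀ a : Ghat → ℂ, IsCentralG π θ a →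
      pmapG π θ lam ς (pmapG π θ lam ς a) = a) ∧
    (∀ ς ς' : Ghat, π ς = -1 → π ς' = -1 → ∀ a : Ghat → ℂ, IsCentralG π θ a →
      pmapG π θ lam ς a = pmapG π θ lam ς' a) := by
  have hne : ∀ x y : Ghat, θ x y ≠ 0 := by
    intro x y hxy
    have h := hnorm x y
    rw [hxy] at h
    norm_num at h
  have hl : ∀ x : Ghat, lam x ≠ 0 := by
    intro x hx
    have h := hlam x
    rw [hx] at h
    norm_num at h
  have hcocP : ∀ x y z : Ghat, π x = 1 → θ x y * θ (x*y) z = θ y z * θ x (y*z) := by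
    intro x y z hx
    have h := hcoc x y z
    rw [hx] at h
    simpa using h
  have hcocM : ∀ x y z : Ghat, π x = -1 → θ x y * θ (x*y) z = (θ y z)⁻¹ * θ x (y*z) := by
    intro x y z hx
    have h := hcoc x y z
    rw [hx] at h
    simpa using h
  have hpm : ∀ ς : Ghat, π ς = -1 → ∀ (a : Ghat → ℂ) (k : Ghat),
      pmapG π θ lam ς a k = (lam (ς⁻¹ * (k⁻¹ * ς)))⁻¹ *
        ((θ (ς⁻¹ * (k * ς)) (ς⁻¹ * (k⁻¹ * ς)))⁻¹ * (θ k ς / θ ς (ς⁻¹ * (k * ς)))) *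
        a (ς⁻¹ * (k⁻¹ * ς)) := by
    intro ς hς a k
    simp only [pmapG, taurefl, hς]
    norm_num [mul_assoc, mul_inv_cancel_left, inv_mul_cancel_left]
  have hindep : ∀ s s' : Ghat, π s = -1 → π s' = -1 → ∀ a : Ghat → ℂ, IsCentralG π θ a →
      ∀ k : Ghat, pmapG π θ lam s a k = pmapG π θ lam s' a k := by
    intro s s' hs hs' a ha k
    rw [hpm s hs, hpm s' hs']
    rcases Int.units_eq_one_or (π k) with hk | hk
    · have hc := ha.2 (s⁻¹ * (k⁻¹ * s)) (s'⁻¹ * s)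
        (by simp [map_mul, map_inv, hs, hk]) (by simp [map_mul, map_inv, hs, hs'])
      simp only [mul_assoc, mul_inv_rev, inv_inv, mul_inv_cancel_left, inv_mul_cancel_left,
      inv_mul_cancel, mul_inv_cancel, one_mul, mul_one] at hc
      rw [hc]
      have hlA : lam (s⁻¹ * (k⁻¹ * s)) = (lam k)⁻¹ := by
        simp only [map_mul, map_inv]
        field_simp [hl]
        try ring
      have hlB : lam (s'⁻¹ * (k⁻¹ * s')) = (lam k)⁻¹ := by
        simp only [map_mul, map_inv]
        field_simp [hl]
        try ring
      rw [hlA, hlB]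
      have HS3 : (θ (s⁻¹*(k*s)) (s⁻¹*(k⁻¹*s)))⁻¹ * (θ k s / θ s (s⁻¹*(k*s))) =
          (θ (s'⁻¹*(k*s')) (s'⁻¹*(k⁻¹*s')))⁻¹ * (θ k s' / θ s' (s'⁻¹*(k*s'))) *
          (θ (s'⁻¹*(k⁻¹*s')) (s'⁻¹*s) / θ (s'⁻¹*s) (s⁻¹*(k⁻¹*s))) := by
        have e1 := hcocP k s (s⁻¹*s') hk
        have e2 := hcocM s (s⁻¹*s') (s'⁻¹*(k*s')) hs
        have e3 := hcocM s (s⁻¹*(k*s)) (s⁻¹*s') hs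
        have e4 := hcocP (s⁻¹*s') (s'⁻¹*(k*s')) (s'⁻¹*(k⁻¹*s')) (by simp [map_mul, map_inv, hs, hs'])
        have e5 := hcocP (s⁻¹*(k*s)) (s⁻¹*s') (s'⁻¹*(k⁻¹*s')) (by simp [map_mul, map_inv, hs, hk])
        have e6 := hcocP (s⁻¹*(k*s)) (s⁻¹*(k⁻¹*s)) (s⁻¹*s') (by simp [map_mul, map_inv, hs, hk])
        have e7 := hcocP (s⁻¹*s') (s'⁻¹*(k⁻¹*s')) (s'⁻¹*s) (by simp [map_mul, map_inv, hs, hs'])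
        have e8 := hcocP (s⁻¹*(k⁻¹*s)) (s⁻¹*s') (s'⁻¹*s) (by simp [map_mul, map_inv, hs, hk])
        have e9 := hcocP (s⁻¹*s') (s'⁻¹*s) (s⁻¹*(k⁻¹*s)) (by simp [map_mul, map_inv, hs, hs'])
        simp only [mul_assoc, mul_inv_rev, inv_inv, mul_inv_cancel_left, inv_mul_cancel_left,
      inv_mul_cancel, mul_inv_cancel, one_mul, mul_one, hθe, hθe'] at e1 e2 e3 e4 e5 e6 e7 e8 e9
        have re1 : θ k s * θ (k*s) (s⁻¹*s') * (θ s (s⁻¹*s') * θ k s')⁻¹ = 1 := by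
          rw [e1]; field_simp [hne]
        have re2 : θ s (s⁻¹*s') * θ s' (s'⁻¹*(k*s')) * ((θ (s⁻¹*s') (s'⁻¹*(k*s')))⁻¹ * θ s (s⁻¹*(k*s')))⁻¹ = 1 := by
          rw [e2]; field_simp [hne]
        have re3 : θ s (s⁻¹*(k*s)) * θ (k*s) (s⁻¹*s') * ((θ (s⁻¹*(k*s)) (s⁻¹*s'))⁻¹ * θ s (s⁻¹*(k*s')))⁻¹ = 1 := by
          rw [e3]; field_simp [hne]
        have re4 : θ (s⁻¹*s') (s'⁻¹*(k*s')) * θ (s⁻¹*(k*s')) (s'⁻¹*(k⁻¹*s')) * (θ (s'⁻¹*(k*s')) (s'⁻¹*(k⁻¹*s')))⁻¹ = 1 := by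
          rw [e4]; field_simp [hne]
        have re5 : θ (s⁻¹*(k*s)) (s⁻¹*s') * θ (s⁻¹*(k*s')) (s'⁻¹*(k⁻¹*s')) * (θ (s⁻¹*s') (s'⁻¹*(k⁻¹*s')) * θ (s⁻¹*(k*s)) (s⁻¹*(k⁻¹*s')))⁻¹ = 1 := by
          rw [e5]; field_simp [hne]
        have re6 : θ (s⁻¹*(k*s)) (s⁻¹*(k⁻¹*s)) * (θ (s⁻¹*(k⁻¹*s)) (s⁻¹*s') * θ (s⁻¹*(k*s)) (s⁻¹*(k⁻¹*s')))⁻¹ = 1 := by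
          rw [e6]; field_simp [hne]
        have re7 : θ (s⁻¹*s') (s'⁻¹*(k⁻¹*s')) * θ (s⁻¹*(k⁻¹*s')) (s'⁻¹*s) * (θ (s'⁻¹*(k⁻¹*s')) (s'⁻¹*s) * θ (s⁻¹*s') (s'⁻¹*(k⁻¹*s)))⁻¹ = 1 := by
          rw [e7]; field_simp [hne]
        have re8 : θ (s⁻¹*(k⁻¹*s)) (s⁻¹*s') * θ (s⁻¹*(k⁻¹*s')) (s'⁻¹*s) * (θ (s⁻¹*s') (s'⁻¹*s))⁻¹ = 1 := by
          rw [e8]; field_simp [hne]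
        have re9 : θ (s⁻¹*s') (s'⁻¹*s) * (θ (s'⁻¹*s) (s⁻¹*(k⁻¹*s)) * θ (s⁻¹*s') (s'⁻¹*(k⁻¹*s)))⁻¹ = 1 := by
          rw [e9]; field_simp [hne]
        have formal : (θ (s⁻¹*(k*s)) (s⁻¹*(k⁻¹*s)))⁻¹ * (θ k s / θ s (s⁻¹*(k*s))) =
            (θ (s'⁻¹*(k*s')) (s'⁻¹*(k⁻¹*s')))⁻¹ * (θ k s' / θ s' (s'⁻¹*(k*s'))) *
          (θ (s'⁻¹*(k⁻¹*s')) (s'⁻¹*s) / θ (s'⁻¹*s) (s⁻¹*(k⁻¹*s))) *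
            ((θ k s * θ (k*s) (s⁻¹*s') * (θ s (s⁻¹*s') * θ k s')⁻¹) * ((θ s (s⁻¹*s') * θ s' (s'⁻¹*(k*s')) * ((θ (s⁻¹*s') (s'⁻¹*(k*s')))⁻¹ * θ s (s⁻¹*(k*s')))⁻¹) * ((θ s (s⁻¹*(k*s)) * θ (k*s) (s⁻¹*s') * ((θ (s⁻¹*(k*s)) (s⁻¹*s'))⁻¹ * θ s (s⁻¹*(k*s')))⁻¹)⁻¹ * ((θ (s⁻¹*s') (s'⁻¹*(k*s')) * θ (s⁻¹*(k*s')) (s'⁻¹*(k⁻¹*s')) * (θ (s'⁻¹*(k*s')) (s'⁻¹*(k⁻¹*s')))⁻¹)⁻¹ * ((θ (s⁻¹*(k*s)) (s⁻¹*s') * θ (s⁻¹*(k*s')) (s'⁻¹*(k⁻¹*s')) * (θ (s⁻¹*s') (s'⁻¹*(k⁻¹*s')) * θ (s⁻¹*(k*s)) (s⁻¹*(k⁻¹*s')))⁻¹) * ((θ (s⁻¹*(k*s)) (s⁻¹*(k⁻¹*s)) * (θ (s⁻¹*(k⁻¹*s)) (s⁻¹*s') * θ (s⁻¹*(k*s))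 (s⁻¹*(k⁻¹*s')))⁻¹)⁻¹ * ((θ (s⁻¹*s') (s'⁻¹*(k⁻¹*s')) * θ (s⁻¹*(k⁻¹*s')) (s'⁻¹*s) * (θ (s'⁻¹*(k⁻¹*s')) (s'⁻¹*s) * θ (s⁻¹*s') (s'⁻¹*(k⁻¹*s)))⁻¹) * ((θ (s⁻¹*(k⁻¹*s)) (s⁻¹*s') * θ (s⁻¹*(k⁻¹*s')) (s'⁻¹*s) * (θ (s⁻¹*s') (s'⁻¹*s))⁻¹)⁻¹ * ((θ (s⁻¹*s') (s'⁻¹*s) * (θ (s'⁻¹*s) (s⁻¹*(k⁻¹*s)) * θ (s⁻¹*s') (s'⁻¹*(k⁻¹*s)))⁻¹)⁻¹))))))))) := by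
          field_simp [hne, hl]
          try rw [eq_div_iff (by apply_rules [mul_ne_zero, inv_ne_zero, hne, hl])]
          try ring
        rw [re1, re2, re3, re4, re5, re6, re7, re8, re9] at formal
        linear_combination formal
      linear_combination (((lam k)⁻¹)⁻¹ * a (s⁻¹*(k⁻¹*s))) * HS3
    · rw [ha.1 (s⁻¹*(k⁻¹*s)) (by simp [map_mul, map_inv, hs, hk]),
        ha.1 (s'⁻¹*(k⁻¹*s')) (by simp [map_mul, map_inv, hs', hk])]
      ring
  have part1 : ∀ ς : Ghat, π ς = -1 → ∀ a : Ghat → ℂ, IsCentralG π θ a →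
      IsCentralG π θ (pmapG π θ lam ς a) := by
    intro s hs a ha
    constructor
    · intro k hk
      rw [hpm s hs]
      rcases Int.units_eq_one_or (π k) with h1 | h1
      · exact absurd h1 hk
      · rw [ha.1 (s⁻¹*(k⁻¹*s)) (by simp [map_mul, map_inv, hs, h1])]
        ring
    · intro g h hg hh
      rw [hindep s (h*s) hs (by simp [map_mul, hs, hh]) a ha (h*g*h⁻¹)]
      rw [hpm (h*s) (by simp [map_mul, hs, hh]), hpm s hs]
      simp only [mul_assoc, mul_inv_rev, inv_inv, mul_inv_cancel_left, inv_mul_cancel_left,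
      inv_mul_cancel, mul_inv_cancel, one_mul, mul_one]
      have KEY1 : θ (h*(g*h⁻¹)) (h*s) * (θ (h*s) (s⁻¹*(g*s)))⁻¹ =
          θ (h*(g*h⁻¹)) h * (θ h g)⁻¹ * θ g s * (θ s (s⁻¹*(g*s)))⁻¹ := by
        have e1 := hcocP (h*(g*h⁻¹)) h s (by simp [map_mul, map_inv, hh, hg])
        have e2 := hcocP h g s hh
        have e3 := hcocP h s (s⁻¹*(g*s)) hh
        simp only [mul_assoc, mul_inv_rev, inv_inv, mul_inv_cancel_left, inv_mul_cancel_left,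
      inv_mul_cancel, mul_inv_cancel, one_mul, mul_one, hθe, hθe'] at e1 e2 e3
        have re1 : θ (h*(g*h⁻¹)) h * θ (h*g) s * (θ h s * θ (h*(g*h⁻¹)) (h*s))⁻¹ = 1 := by
          rw [e1]; field_simp [hne]
        have re2 : θ h g * θ (h*g) s * (θ g s * θ h (g*s))⁻¹ = 1 := by
          rw [e2]; field_simp [hne]
        have re3 : θ h s * θ (h*s) (s⁻¹*(g*s)) * (θ s (s⁻¹*(g*s)) * θ h (g*s))⁻¹ = 1 := by
          rw [e3]; field_simp [hne]
        have formal : θ (h*(g*h⁻¹)) (h*s) * (θ (h*s) (s⁻¹*(g*s)))⁻¹ =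
            θ (h*(g*h⁻¹)) h * (θ h g)⁻¹ * θ g s * (θ s (s⁻¹*(g*s)))⁻¹ *
            ((θ (h*(g*h⁻¹)) h * θ (h*g) s * (θ h s * θ (h*(g*h⁻¹)) (h*s))⁻¹)⁻¹ * ((θ h g * θ (h*g) s * (θ g s * θ h (g*s))⁻¹) * ((θ h s * θ (h*s) (s⁻¹*(g*s)) * (θ s (s⁻¹*(g*s)) * θ h (g*s))⁻¹)⁻¹))) := by
          field_simp [hne, hl]
          try rw [eq_div_iff (by apply_rules [mul_ne_zero, inv_ne_zero, hne, hl])]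
          try ring
        rw [re1, re2, re3] at formal
        linear_combination formal
      linear_combination ((lam (s⁻¹*(g⁻¹*s)))⁻¹ * (θ (s⁻¹*(g*s)) (s⁻¹*(g⁻¹*s)))⁻¹ *
        a (s⁻¹*(g⁻¹*s))) * KEY1
  have part2 : ∀ ς : Ghat, π ς = -1 → ∀ a : Ghat → ℂ, IsCentralG π θ a →
      pmapG π θ lam ς (pmapG π θ lam ς a) = a := by
    intro s hs a ha
    have hb := part1 s hs a ha
    funext k
    rcases Int.units_eq_one_or (π k) with hk | hk
    · rw [hindep s s⁻¹ hs (by simp [map_inv, hs]) _ hb k, hpm s⁻¹ (by simp [map_inv, hs])]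
      simp only [inv_inv]
      rw [hpm s hs a (s * (k⁻¹ * s⁻¹))]
      simp only [mul_assoc, mul_inv_rev, inv_inv, mul_inv_cancel_left, inv_mul_cancel_left,
      inv_mul_cancel, mul_inv_cancel, one_mul, mul_one]
      have hlB : lam (s * (k⁻¹ * s⁻¹)) = (lam k)⁻¹ := by
        simp only [map_mul, map_inv]
        field_simp [hl]
        try ring
      rw [hlB, inv_inv]
      have HS2 : lam k * ((θ (s*(k*s⁻¹)) (s*(k⁻¹*s⁻¹)))⁻¹ * (θ k s⁻¹ / θ s⁻¹ (s*(k*s⁻¹)))) *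
          ((lam k)⁻¹ * ((θ k⁻¹ k)⁻¹ * (θ (s*(k⁻¹*s⁻¹)) s / θ s k⁻¹))) = 1 := by
        have f1 := hcocP (s*(k*s⁻¹)) (s*(k⁻¹*s⁻¹)) s (by simp [map_mul, map_inv, hs, hk])
        have f2 := hcocP (s*(k*s⁻¹)) s k⁻¹ (by simp [map_mul, map_inv, hs, hk])
        have f3 := hcocM s⁻¹ (s*(k*s⁻¹)) s (by simp [map_inv, hs])
        have f4 := hcocM s k k⁻¹ hs
        have f5 := hcocM s⁻¹ s k (by simp [map_inv, hs])
        have f6 := hcocP k s⁻¹ s hk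
        have f7 := hcocP k k⁻¹ k hk
        simp only [mul_assoc, mul_inv_rev, inv_inv, mul_inv_cancel_left, inv_mul_cancel_left,
      inv_mul_cancel, mul_inv_cancel, one_mul, mul_one, hθe, hθe'] at f1 f2 f3 f4 f5 f6 f7
        have rf1 : θ (s*(k*s⁻¹)) (s*(k⁻¹*s⁻¹)) * (θ (s*(k⁻¹*s⁻¹)) s * θ (s*(k*s⁻¹)) (s*k⁻¹))⁻¹ = 1 := by
          rw [f1]; field_simp [hne]
        have rf2 : θ (s*(k*s⁻¹)) s * θ (s*k) k⁻¹ * (θ s k⁻¹ * θ (s*(k*s⁻¹)) (s*k⁻¹))⁻¹ = 1 := by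
          rw [f2]; field_simp [hne]
        have rf3 : θ s⁻¹ (s*(k*s⁻¹)) * θ (k*s⁻¹) s * ((θ (s*(k*s⁻¹)) s)⁻¹ * θ s⁻¹ (s*k))⁻¹ = 1 := by
          rw [f3]; field_simp [hne]
        have rf4 : θ s k * θ (s*k) k⁻¹ * ((θ k k⁻¹)⁻¹)⁻¹ = 1 := by
          rw [f4]; field_simp [hne]
        have rf5 : θ s⁻¹ s * ((θ s k)⁻¹ * θ s⁻¹ (s*k))⁻¹ = 1 := by
          rw [f5]; field_simp [hne]
        have rf6 : θ k s⁻¹ * θ (k*s⁻¹) s * (θ s⁻¹ s)⁻¹ = 1 := by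
          rw [f6]; field_simp [hne]
        have rf7 : θ k k⁻¹ * (θ k⁻¹ k)⁻¹ = 1 := by
          rw [f7]; field_simp [hne]
        have formal : lam k * ((θ (s*(k*s⁻¹)) (s*(k⁻¹*s⁻¹)))⁻¹ * (θ k s⁻¹ / θ s⁻¹ (s*(k*s⁻¹)))) *
          ((lam k)⁻¹ * ((θ k⁻¹ k)⁻¹ * (θ (s*(k⁻¹*s⁻¹)) s / θ s k⁻¹))) =
            1 *
            ((θ (s*(k*s⁻¹)) (s*(k⁻¹*s⁻¹)) * (θ (s*(k⁻¹*s⁻¹)) s * θ (s*(k*s⁻¹)) (s*k⁻¹))⁻¹)⁻¹ * ((θ (s*(k*s⁻¹)) s * θ (s*k) k⁻¹ * (θ s k⁻¹ * θ (s*(k*s⁻¹)) (s*k⁻¹))⁻¹) * ((θ s⁻¹ (s*(k*s⁻¹)) * θ (k*s⁻¹) s * ((θ (s*(k*s⁻¹)) s)⁻¹ * θ s⁻¹ (s*k))⁻¹)⁻¹ * ((θ s k * θ (s*k) k⁻¹ * ((θ k k⁻¹)⁻¹)⁻¹)⁻¹ * ((θ s⁻¹ s * ((θ s k)⁻¹ *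 θ s⁻¹ (s*k))⁻¹) * ((θ k s⁻¹ * θ (k*s⁻¹) s * (θ s⁻¹ s)⁻¹) * ((θ k k⁻¹ * (θ k⁻¹ k)⁻¹)))))))) := by
          field_simp [hne, hl]
          try rw [eq_div_iff (by apply_rules [mul_ne_zero, inv_ne_zero, hne, hl])]
          try ring
        rw [rf1, rf2, rf3, rf4, rf5, rf6, rf7] at formal
        linear_combination formal
      linear_combination (a k) * HS2
    · rw [hpm s hs, hb.1 (s⁻¹*(k⁻¹*s)) (by simp [map_mul, map_inv, hs, hk]),
        ha.1 k (by simp [hk])]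
      ring
  exact ⟨part1, part2, fun s s' hs hs' a ha => funext fun k => hindep s s' hs hs' a ha k⟩
end

section
/- For every ς ∈ Ĝ∖G, the twisted Frobenius–Schur element is p^ς-invariant: p^ς(ν) = ν. -/
section TwistedCocycle

variable {Ghat : Type*} [Group Ghat] {π : Ghat →* ℤˣ} {θ : Ghat → Ghat → ℂ}

theorem twisted_cocycle_of_odd
    (hcoc : ∀ ω₃ ω₂ ω₁ : Ghat, θ ω₃ ω₂ * θ (ω₃ * ω₂) ω₁ =
      θ ω₂ ω₁ ^ ((π ω₃ : ℤˣ) : ℤ) * θ ω₃ (ω₂ * ω₁))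
    {a : Ghat} (ha : π a = -1) (b c : Ghat) :
    θ a b * θ (a * b) c = (θ b c)⁻¹ * θ a (b * c) := by
  simpa [ha] using hcoc a b c

theorem theta_conj_mul_self
    (hθ : ∀ a b : Ghat, θ a b ≠ 0)
    (hcoc : ∀ ω₃ ω₂ ω₁ : Ghat, θ ω₃ ω₂ * θ (ω₃ * ω₂) ω₁ =
      θ ω₂ ω₁ ^ ((π ω₃ : ℤˣ) : ℤ) * θ ω₃ (ω₂ * ω₁))
    {x : Ghat} (hx : π x = -1) (ς : Ghat) :
    θ (ς * x * ς⁻¹) (ς * x * ς⁻¹) * θ (ς * x * ς⁻¹ * (ς * x * ς⁻¹)) ς =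
      θ x x ^ ((π ς : ℤˣ) : ℤ) * θ ς (x * x) := by
  set ρ := ς * x * ς⁻¹
  have hρ : π ρ = -1 := by simp [ρ, hx]
  have hρς : ρ * ς = ς * x := by simp [ρ]
  have h₁ := twisted_cocycle_of_odd hcoc hρ ρ ς
  have h₂ := twisted_cocycle_of_odd hcoc hρ ς x
  rw [hρς] at h₁ h₂
  rw [h₁, ← hcoc, inv_mul_eq_iff_eq_mul₀ (hθ _ _),
    (inv_mul_eq_iff_eq_mul₀ (hθ _ _)).mp h₂.symm]
  ring

theorem inv_theta_self_of_odd
    (hθ : ∀ a b : Ghat, θ a b ≠ 0) (hθe' : ∀ ω : Ghat, θ 1 ω = 1)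
    (hcoc : ∀ ω₃ ω₂ ω₁ : Ghat, θ ω₃ ω₂ * θ (ω₃ * ω₂) ω₁ =
      θ ω₂ ω₁ ^ ((π ω₃ : ℤˣ) : ℤ) * θ ω₃ (ω₂ * ω₁))
    {x : Ghat} (hx : π x = -1) :
    (θ x x)⁻¹ = θ (x * x) (x * x)⁻¹ * θ x⁻¹ x⁻¹ := by
  have h₁ := twisted_cocycle_of_odd hcoc hx x (x * x)⁻¹
  have h₂ := twisted_cocycle_of_odd hcoc hx x⁻¹ x⁻¹
  rw [show x * (x * x)⁻¹ = x⁻¹ by group] at h₁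
  rw [mul_inv_cancel, hθe', mul_one, ← mul_inv_rev] at h₂
  rw [← mul_right_inj' (hθ x x), mul_inv_cancel₀ (hθ x x), ← mul_assoc, h₁, h₂]
  field_simp [hθ]

theorem nuG_summand_conj_inv
    (hθ : ∀ a b : Ghat, θ a b ≠ 0) (hθe' : ∀ ω : Ghat, θ 1 ω = 1)
    (hcoc : ∀ ω₃ ω₂ ω₁ : Ghat, θ ω₃ ω₂ * θ (ω₃ * ω₂) ω₁ =
      θ ω₂ ω₁ ^ ((π ω₃ : ℤˣ) : ℤ) * θ ω₃ (ω₂ * ω₁))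
    (lam : Ghat →* ℂ) {ς x : Ghat} (hς : π ς = -1) (hx : π x = -1) :
    lam (x * x) * (θ (x * x) (x * x)⁻¹)⁻¹ *
        (θ (ς * x * ς⁻¹ * (ς * x * ς⁻¹)) ς / θ ς (x * x)) * (lam x⁻¹ / θ x⁻¹ x⁻¹) =
      lam (ς * x * ς⁻¹) / θ (ς * x * ς⁻¹) (ς * x * ς⁻¹) := by
  have hlam : ∀ ω : Ghat, lam ω ≠ 0 := fun ω => ((Group.isUnit ω).map lam).ne_zero
  have key : θ (ς * x * ς⁻¹) (ς * x * ς⁻¹) * θ (ς * x * ς⁻¹ * (ς * x * ς⁻¹)) ς =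
      θ (x * x) (x * x)⁻¹ * θ ς (x * x) * θ x⁻¹ x⁻¹ := by
    rw [theta_conj_mul_self hθ hcoc hx ς, hς, Units.val_neg, Units.val_one, zpow_neg_one,
      inv_theta_self_of_odd hθ hθe' hcoc hx]
    ring
  have hlam_conj : lam (ς * x * ς⁻¹) = lam x := by
    rw [map_mul, map_mul, map_inv, mul_right_comm, mul_inv_cancel₀ (hlam ς), one_mul]
  rw [hlam_conj, map_mul, map_inv]
  field_simp [hθ, hlam]
  linear_combination key

end TwistedCocycle

theorem pmapG_apply_of_odd {Ghat : Type*} [Group Ghat] (π : Ghat →* ℤˣ)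
    (θ : Ghat → Ghat → ℂ) (lam : Ghat →* ℂ) {ς : Ghat} (hς : π ς = -1)
    (a : Ghat → ℂ) (k : Ghat) :
    pmapG π θ lam ς a k =
      lam (ς⁻¹ * k * ς) * (θ (ς⁻¹ * k * ς) (ς⁻¹ * k * ς)⁻¹)⁻¹ *
        (θ k ς / θ ς (ς⁻¹ * k * ς)) * a (ς⁻¹ * k * ς)⁻¹ := by
  simp [pmapG, taurefl, hς, map_inv, mul_assoc]

theorem odd_sq_eq_inv_conj_iff {Ghat : Type*} [Group Ghat] (π : Ghat →* ℤˣ) (ς k μ : Ghat) :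
    (π μ = -1 ∧ μ ^ 2 = (ς⁻¹ * k * ς)⁻¹) ↔
      (π (ς * μ⁻¹ * ς⁻¹) = -1 ∧ (ς * μ⁻¹ * ς⁻¹) ^ 2 = k) := by
  refine and_congr (by simp [mul_right_comm _ (π μ), Int.units_mul_self]) ?_
  rw [conj_pow, inv_pow, ← inv_eq_iff_eq_inv]
  generalize (μ ^ 2)⁻¹ = y
  constructor <;> rintro rfl <;> group

theorem stmt13_general {Ghat : Type*} [Group Ghat] [Fintype Ghat] [DecidableEq Ghat]
    (π : Ghat →* ℤˣ)
    (θ : Ghat → Ghat → ℂ)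
    (hnorm : ∀ a b : Ghat, ‖θ a b‖ = 1)
    (hθe' : ∀ ω : Ghat, θ 1 ω = 1)
    (hcoc : ∀ ω₃ ω₂ ω₁ : Ghat, θ ω₃ ω₂ * θ (ω₃ * ω₂) ω₁ =
      θ ω₂ ω₁ ^ ((π ω₃ : ℤˣ) : ℤ) * θ ω₃ (ω₂ * ω₁))
    (lam : Ghat →* ℂ)
    (ς : Ghat) (hς : π ς = -1) :
    pmapG π θ lam ς (nuG π θ lam) = nuG π θ lam := by
  have hθ : ∀ a b : Ghat, θ a b ≠ 0 := fun a b h => by simpa [h] using hnorm a b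
  funext k
  rw [pmapG_apply_of_odd π θ lam hς, nuG, nuG, Finset.mul_sum]
  refine Finset.sum_equiv ((Equiv.inv Ghat).trans (MulAut.conj ς).toEquiv)
    (fun μ => by simpa using odd_sq_eq_inv_conj_iff π ς k μ) ?_
  intro μ hμ
  obtain ⟨hμπ, hμk⟩ : π μ = -1 ∧ μ ^ 2 = (ς⁻¹ * k * ς)⁻¹ := by simpa using hμ
  obtain ⟨x, rfl⟩ : ∃ x, μ = x⁻¹ := ⟨μ⁻¹, (inv_inv μ).symm⟩
  obtain rfl : k = ς * x * ς⁻¹ * (ς * x * ς⁻¹) := by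
    rw [inv_pow, inv_inj] at hμk
    rw [show k = ς * (ς⁻¹ * k * ς) * ς⁻¹ by group, ← hμk, pow_two]
    group
  rw [show ς⁻¹ * (ς * x * ς⁻¹ * (ς * x * ς⁻¹)) * ς = x * x by group]
  simp only [Equiv.trans_apply, Equiv.inv_apply, inv_inv, MulEquiv.toEquiv_eq_coe,
    MulEquiv.coe_toEquiv, MulAut.conj_apply]
  exact nuG_summand_conj_inv hθ hθe' hcoc lam hς (by simpa using hμπ)

/-- Proposition 3.8 of the paper. For every `ς ∈ Ĝ∖G`, the twisted
Frobenius–Schur element is `p^ς`-invariant: `p^ς(ν) = ν`. -/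
theorem stmt13 {Ghat : Type*} [Group Ghat] [Fintype Ghat] [DecidableEq Ghat]
    (π : Ghat →* ℤˣ) (hπ : Function.Surjective π)
    (θ : Ghat → Ghat → ℂ)
    (hnorm : ∀ a b : Ghat, ‖θ a b‖ = 1)
    (hθe : ∀ ω : Ghat, θ ω 1 = 1) (hθe' : ∀ ω : Ghat, θ 1 ω = 1)
    (hcoc : ∀ ω₃ ω₂ ω₁ : Ghat, θ ω₃ ω₂ * θ (ω₃ * ω₂) ω₁ =
      θ ω₂ ω₁ ^ ((π ω₃ : ℤˣ) : ℤ) * θ ω₃ (ω₂ * ω₁))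
    (lam : Ghat →* ℂ) (hlam : ∀ ω : Ghat, ‖lam ω‖ = 1)
    (ς : Ghat) (hς : π ς = -1) :
    pmapG π θ lam ς (nuG π θ lam) = nuG π θ lam :=
  stmt13_general π θ hnorm hθe' hcoc lam ς hς
end

section
/- In ℂ^{θ⁻¹}[G], for all g ∈ G and μ ∈ Ĝ∖G, the following equality holds: θ̂(μ,μ)⁻¹ · l_{μ²} · l_g = λ(g) · p^μ(l_g) · θ̂(μg,μg)⁻¹ · l_{(μg)²}. -/
section TwistedGroupAlgebra

variable {Ghat : Type*} [Group Ghat] [DecidableEq Ghat] (π : Ghat →* ℤˣ) (θ : Ghat → Ghat → ℂ)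

lemma convG_smul_left [Fintype Ghat] (c : ℂ) (a b : Ghat → ℂ) :
    convG π θ (c • a) b = c • convG π θ a b := by
  funext k
  simp only [convG, Pi.smul_apply, smul_eq_mul, Finset.mul_sum]
  exact Finset.sum_congr rfl fun _ _ => by ring

lemma convG_smul_right [Fintype Ghat] (c : ℂ) (a b : Ghat → ℂ) :
    convG π θ a (c • b) = c • convG π θ a b := by
  funext k
  simp only [convG, Pi.smul_apply, smul_eq_mul, Finset.mul_sum]
  exact Finset.sum_congr rfl fun _ _ => by ring

lemma convG_ellG_ellG [Fintype Ghat] {a : Ghat} (ha : π a = 1) (b : Ghat) :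
    convG π θ (ellG a) (ellG b) = (θ a b)⁻¹ • ellG (a * b) := by
  funext k
  simp only [convG, Pi.smul_apply, smul_eq_mul]
  rw [Finset.sum_eq_single_of_mem a (by simpa using ha) fun x _ hx => by simp [ellG, hx]]
  by_cases hk : k = a * b
  · simp [ellG, hk]
  · have hb : a⁻¹ * k ≠ b := fun h => hk (by rw [← h, mul_inv_cancel_left])
    simp [ellG, hk, hb]

lemma pmapG_ellG (lam : Ghat →* ℂ) (ω g : Ghat) :
    pmapG π θ lam ω (ellG g) =
      (lam g ^ ((((π ω : ℤˣ) : ℤ) - 1) / 2) * taurefl π θ ω g) •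
        ellG (ω * g ^ ((π ω : ℤˣ) : ℤ) * ω⁻¹) := by
  set n : ℤ := ((π ω : ℤˣ) : ℤ)
  have hnn : n * n = 1 := by simp only [n, ← Units.val_mul, Int.units_mul_self, Units.val_one]
  funext k
  simp only [pmapG, ellG, Pi.smul_apply, smul_eq_mul]
  by_cases hk : k = ω * g ^ n * ω⁻¹
  · have hg : (ω⁻¹ * k * ω) ^ n = g := by
      rw [hk, show ω⁻¹ * (ω * g ^ n * ω⁻¹) * ω = g ^ n by group, ← zpow_mul, hnn, zpow_one]
    rw [if_pos hg, if_pos hk, hg, mul_one]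
  · have hg : (ω⁻¹ * k * ω) ^ n ≠ g := fun h => hk (by
      rw [← h, ← zpow_mul, hnn, zpow_one]; group)
    rw [if_neg hg, if_neg hk, mul_zero, mul_zero]

lemma pmapG_ellG_of_neg (lam : Ghat →* ℂ) {μ : Ghat} (hμ : π μ = -1) (g : Ghat) :
    pmapG π θ lam μ (ellG g) = ((lam g)⁻¹ * taurefl π θ μ g) • ellG (μ * g⁻¹ * μ⁻¹) := by
  rw [pmapG_ellG, hμ, Units.val_neg, Units.val_one, show ((-1 : ℤ) - 1) / 2 = -1 by norm_num,
    zpow_neg_one, zpow_neg_one]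

end TwistedGroupAlgebra

section Cocycle

variable {Ghat : Type*} [Group Ghat] {π : Ghat →* ℤˣ} {θ : Ghat → Ghat → ℂ}

lemma cocycle_of_neg
    (hcoc : ∀ ω₃ ω₂ ω₁ : Ghat, θ ω₃ ω₂ * θ (ω₃ * ω₂) ω₁ =
      θ ω₂ ω₁ ^ ((π ω₃ : ℤˣ) : ℤ) * θ ω₃ (ω₂ * ω₁))
    {ω₃ : Ghat} (h₃ : π ω₃ = -1) (ω₂ ω₁ : Ghat) (hne : θ ω₂ ω₁ ≠ 0) :
    θ ω₂ ω₁ * θ ω₃ ω₂ * θ (ω₃ * ω₂) ω₁ = θ ω₃ (ω₂ * ω₁) := by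
  have h := hcoc ω₃ ω₂ ω₁
  rw [h₃, Units.val_neg, Units.val_one, zpow_neg_one] at h
  rw [mul_assoc, h, mul_inv_cancel_left₀ hne]

lemma taurefl_of_neg {μ : Ghat} (hμ : π μ = -1) (g : Ghat) :
    taurefl π θ μ g = θ (μ * g⁻¹ * μ⁻¹) μ / (θ g⁻¹ g * θ μ g⁻¹) := by
  simp only [taurefl, hμ, Units.val_neg, Units.val_one,
    show ((-1 : ℤ) - 1) / 2 = -1 by norm_num, zpow_neg_one]
  ring

lemma cocycle_conj_sq (hne : ∀ a b : Ghat, θ a b ≠ 0) (hθe : ∀ ω : Ghat, θ ω 1 = 1)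
    (hcoc : ∀ ω₃ ω₂ ω₁ : Ghat, θ ω₃ ω₂ * θ (ω₃ * ω₂) ω₁ =
      θ ω₂ ω₁ ^ ((π ω₃ : ℤˣ) : ℤ) * θ ω₃ (ω₂ * ω₁))
    {g μ : Ghat} (hg : π g = 1) (hμ : π μ = -1) :
    θ g⁻¹ g * θ μ g⁻¹ * θ (μ * g⁻¹ * μ⁻¹) ((μ * g) ^ 2) * θ (μ * g) (μ * g) =
      θ μ μ * θ (μ ^ 2) g * θ (μ * g⁻¹ * μ⁻¹) μ := by
  have hμg : π (μ * g⁻¹) = -1 := by simp [hg, hμ]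
  have hμ_ginv_g : θ g⁻¹ g * θ μ g⁻¹ * θ (μ * g⁻¹) g = 1 := by
    rw [cocycle_of_neg hcoc hμ _ _ (hne _ _), inv_mul_cancel, hθe]
  have hconj_μ_gμg : θ (μ * g⁻¹ * μ⁻¹) μ * θ (μ * g⁻¹) (g * (μ * g)) =
      θ (μ * g⁻¹ * μ⁻¹) ((μ * g) ^ 2) * θ μ (g * (μ * g)) := by
    have h := hcoc (μ * g⁻¹ * μ⁻¹) μ (g * (μ * g))
    rw [show π (μ * g⁻¹ * μ⁻¹) = 1 by simp [hg], Units.val_one, zpow_one,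
      inv_mul_cancel_right, show μ * (g * (μ * g)) = (μ * g) ^ 2 by simp only [sq]; group] at h
    rw [h, mul_comm]
  have hμginv_g_μg : θ g (μ * g) * θ (μ * g⁻¹) g * θ μ (μ * g) = θ (μ * g⁻¹) (g * (μ * g)) := by
    rw [← cocycle_of_neg hcoc hμg _ _ (hne _ _), inv_mul_cancel_right]
  have hμ_g_μg : θ g (μ * g) * θ μ g * θ (μ * g) (μ * g) = θ μ (g * (μ * g)) :=
    cocycle_of_neg hcoc hμ _ _ (hne _ _)
  have hμ_μ_g : θ μ g * θ μ μ * θ (μ ^ 2) g = θ μ (μ * g) := by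
    rw [← cocycle_of_neg hcoc hμ _ _ (hne _ _), sq]
  -- cancel `θ(g, μg) θ(μ, g) θ(μg⁻¹, g)` and both sides become `θ(μg⁻¹μ⁻¹, μ) θ(μg⁻¹, gμg)`
  refine mul_right_cancel₀
    (mul_ne_zero (mul_ne_zero (hne g (μ * g)) (hne μ g)) (hne (μ * g⁻¹) g)) ?_
  calc _ = (θ g⁻¹ g * θ μ g⁻¹ * θ (μ * g⁻¹) g) * θ (μ * g⁻¹ * μ⁻¹) ((μ * g) ^ 2) *
          (θ g (μ * g) * θ μ g * θ (μ * g) (μ * g)) := by ring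
    _ = θ (μ * g⁻¹ * μ⁻¹) μ * θ (μ * g⁻¹) (g * (μ * g)) := by
          rw [hμ_ginv_g, hμ_g_μg, one_mul, hconj_μ_gμg]
    _ = θ (μ * g⁻¹ * μ⁻¹) μ * θ g (μ * g) * θ (μ * g⁻¹) g * (θ μ g * θ μ μ * θ (μ ^ 2) g) := by
          rw [hμ_μ_g, ← hμginv_g_μg]; ring
    _ = _ := by ring

end Cocycle

theorem stmt14_general {Ghat : Type*} [Group Ghat] [Fintype Ghat] [DecidableEq Ghat]
    (π : Ghat →* ℤˣ)
    (θ : Ghat → Ghat → ℂ)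
    (hnorm : ∀ a b : Ghat, ‖θ a b‖ = 1)
    (hθe : ∀ ω : Ghat, θ ω 1 = 1)
    (hcoc : ∀ ω₃ ω₂ ω₁ : Ghat, θ ω₃ ω₂ * θ (ω₃ * ω₂) ω₁ =
      θ ω₂ ω₁ ^ ((π ω₃ : ℤˣ) : ℤ) * θ ω₃ (ω₂ * ω₁))
    (lam : Ghat →* ℂ)
    (g μ : Ghat) (hg : π g = 1) (hμ : π μ = -1) :
    convG π θ ((θ μ μ)⁻¹ • ellG (μ ^ 2)) (ellG g) =
      lam g • convG π θ (pmapG π θ lam μ (ellG g))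
        ((θ (μ * g) (μ * g))⁻¹ • ellG ((μ * g) ^ 2)) := by
  have hμ2 : π (μ ^ 2) = 1 := by simp [hμ]
  have hconj : π (μ * g⁻¹ * μ⁻¹) = 1 := by simp [hg]
  rw [convG_smul_left, convG_ellG_ellG π θ hμ2, pmapG_ellG_of_neg π θ lam hμ, convG_smul_left,
    convG_smul_right, convG_ellG_ellG π θ hconj,
    show μ * g⁻¹ * μ⁻¹ * (μ * g) ^ 2 = μ ^ 2 * g by simp only [sq]; group]
  simp only [smul_smul]
  congr 1
  have hne : ∀ a b : Ghat, θ a b ≠ 0 := fun a b h => by simpa [h] using hnorm a b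
  have hlam : lam g ≠ 0 := (IsUnit.map lam (Group.isUnit g)).ne_zero
  have hθ := cocycle_conj_sq hne hθe hcoc hg hμ
  rw [taurefl_of_neg hμ]
  field_simp [hne]
  linear_combination hθ

/-- Lemma 3.10 of the paper. In `ℂ^{θ⁻¹}[G]`, for `g ∈ G` and
`μ ∈ Ĝ∖G`: `θ(μ,μ)⁻¹ l_{μ²} ⬝ l_g = λ(g) p^μ(l_g) ⬝ θ(μg,μg)⁻¹ l_{(μg)²}`. -/
theorem stmt14 {Ghat : Type*} [Group Ghat] [Fintype Ghat] [DecidableEq Ghat]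
    (π : Ghat →* ℤˣ) (hπ : Function.Surjective π)
    (θ : Ghat → Ghat → ℂ)
    (hnorm : ∀ a b : Ghat, ‖θ a b‖ = 1)
    (hθe : ∀ ω : Ghat, θ ω 1 = 1) (hθe' : ∀ ω : Ghat, θ 1 ω = 1)
    (hcoc : ∀ ω₃ ω₂ ω₁ : Ghat, θ ω₃ ω₂ * θ (ω₃ * ω₂) ω₁ =
      θ ω₂ ω₁ ^ ((π ω₃ : ℤˣ) : ℤ) * θ ω₃ (ω₂ * ω₁))
    (lam : Ghat →* ℂ) (hlam : ∀ ω : Ghat, ‖lam ω‖ = 1)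
    (g μ : Ghat) (hg : π g = 1) (hμ : π μ = -1) :
    convG π θ ((θ μ μ)⁻¹ • ellG (μ ^ 2)) (ellG g) =
      lam g • convG π θ (pmapG π θ lam μ (ellG g))
        ((θ (μ * g) (μ * g))⁻¹ • ellG ((μ * g) ^ 2)) :=
  stmt14_general π θ hnorm hθe hcoc lam g μ hg hμ
end

section
/- For every ς ∈ Ĝ∖G and every central element a ∈ Z(ℂ^{θ⁻¹}[G]), one has p^ς(ν·a) = ν·a. -/
section EE
variable {Ghat : Type*} [Group Ghat]

variable {Ghat : Type*} [Group Ghat]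

noncomputable def EE (π : Ghat →* ℤˣ) (θ : Ghat → Ghat → ℂ) : List Ghat → ℂ
  | [] => 1
  | a :: L => θ a L.prod * EE π θ L ^ (((π a : ℤˣ) : ℤ))

theorem EE_ne_zero (π : Ghat →* ℤˣ) (θ : Ghat → Ghat → ℂ)
    (hθ0 : ∀ a b : Ghat, θ a b ≠ 0) (L : List Ghat) : EE π θ L ≠ 0 := by
  induction L with
  | nil => simp [EE]
  | cons a L ih => exact mul_ne_zero (hθ0 _ _) (zpow_ne_zero _ ih)

theorem EE_append (π : Ghat →* ℤˣ) (θ : Ghat → Ghat → ℂ)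
    (hθ0 : ∀ a b : Ghat, θ a b ≠ 0)
    (hθe' : ∀ ω : Ghat, θ 1 ω = 1)
    (hcoc : ∀ ω₃ ω₂ ω₁ : Ghat, θ ω₃ ω₂ * θ (ω₃ * ω₂) ω₁ =
      θ ω₂ ω₁ ^ ((π ω₃ : ℤˣ) : ℤ) * θ ω₃ (ω₂ * ω₁))
    (P S : List Ghat) :
    EE π θ (P ++ S) = EE π θ P * EE π θ S ^ ((π P.prod : ℤˣ) : ℤ) * θ P.prod S.prod := by
  induction P with
  | nil => simp [EE, hθe']
  | cons a P ih =>
    have hPS : (P ++ S).prod = P.prod * S.prod := List.prod_append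
    have hEEcons : ∀ (b : Ghat) (L : List Ghat),
        EE π θ (b :: L) = θ b L.prod * EE π θ L ^ ((π b : ℤˣ) : ℤ) := fun b L => rfl
    rw [List.cons_append, hEEcons, hEEcons, hPS, ih]
    have h := hcoc a P.prod S.prod
    have eP := EE_ne_zero π θ hθ0 P
    have eS := EE_ne_zero π θ hθ0 S
    have t1 := hθ0 a P.prod
    have t2 := hθ0 (a * P.prod) S.prod
    have t3 := hθ0 P.prod S.prod
    have t4 := hθ0 a (P.prod * S.prod)
    rcases Int.units_eq_one_or (π a) with h1 | h1 <;>
      rcases Int.units_eq_one_or (π P.prod) with h2 | h2 <;>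
      simp only [List.prod_cons, map_mul, h1, h2,
          Units.val_mul, Units.val_one, Units.val_neg, one_mul, mul_one, neg_neg, mul_neg,
          neg_mul, zpow_one, zpow_neg_one, mul_zpow, mul_inv, inv_inv] at h ⊢ <;>
      first
      | linear_combination (-(EE π θ P * EE π θ S)) * h
      | linear_combination (-(EE π θ P * (EE π θ S)⁻¹)) * h
      | linear_combination (-((EE π θ P)⁻¹ * (EE π θ S)⁻¹)) * h
      | linear_combination (-((EE π θ P)⁻¹ * EE π θ S)) * h


theorem theta_inv_pair (π : Ghat →* ℤˣ) (θ : Ghat → Ghat → ℂ)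
    (hθ0 : ∀ a b : Ghat, θ a b ≠ 0)
    (hθe : ∀ ω : Ghat, θ ω 1 = 1) (hθe' : ∀ ω : Ghat, θ 1 ω = 1)
    (hcoc : ∀ ω₃ ω₂ ω₁ : Ghat, θ ω₃ ω₂ * θ (ω₃ * ω₂) ω₁ =
      θ ω₂ ω₁ ^ ((π ω₃ : ℤˣ) : ℤ) * θ ω₃ (ω₂ * ω₁))
    (a : Ghat) (ha : π a = -1) : θ a a⁻¹ * θ a⁻¹ a = 1 := by
  have h := hcoc a a⁻¹ a
  simp only [mul_inv_cancel, inv_mul_cancel, hθe, hθe', ha, Units.val_neg, Units.val_one,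
    zpow_neg_one, mul_one, one_mul] at h
  rw [h]
  exact inv_mul_cancel₀ (hθ0 _ _)

theorem EE_cancel (π : Ghat →* ℤˣ) (θ : Ghat → Ghat → ℂ)
    (hθ0 : ∀ a b : Ghat, θ a b ≠ 0)
    (hθe' : ∀ ω : Ghat, θ 1 ω = 1)
    (hcoc : ∀ ω₃ ω₂ ω₁ : Ghat, θ ω₃ ω₂ * θ (ω₃ * ω₂) ω₁ =
      θ ω₂ ω₁ ^ ((π ω₃ : ℤˣ) : ℤ) * θ ω₃ (ω₂ * ω₁))
    (P : List Ghat) (a b : Ghat) (S : List Ghat) (hb : b = a⁻¹) :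
    EE π θ (P ++ a :: b :: S) = θ a b ^ ((π P.prod : ℤˣ) : ℤ) * EE π θ (P ++ S) := by
  subst hb
  have hEEcons : ∀ (c : Ghat) (L : List Ghat),
      EE π θ (c :: L) = θ c L.prod * EE π θ L ^ ((π c : ℤˣ) : ℤ) := fun c L => rfl
  have h1 : EE π θ (a :: a⁻¹ :: S) = θ a a⁻¹ * EE π θ S := by
    have h := hcoc a a⁻¹ S.prod
    rw [hEEcons, hEEcons, List.prod_cons]
    rcases Int.units_eq_one_or (π a) with ha | ha <;>
      simp only [mul_inv_cancel, hθe', ha, map_inv, inv_neg, inv_one, Units.val_neg,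
        Units.val_one, zpow_neg_one, zpow_one, mul_one, one_mul, mul_zpow, mul_inv, inv_inv]
        at h ⊢ <;>
      linear_combination (-(EE π θ S)) * h
  have hprod : (a :: a⁻¹ :: S).prod = S.prod := by
    simp [List.prod_cons, mul_inv_cancel_left]
  rw [EE_append π θ hθ0 hθe' hcoc P (a :: a⁻¹ :: S),
    EE_append π θ hθ0 hθe' hcoc P S, h1, hprod, mul_zpow]
  ring


set_option maxHeartbeats 1600000 in
theorem core_identity (π : Ghat →* ℤˣ) (θ : Ghat → Ghat → ℂ)
    (hθ0 : ∀ a b : Ghat, θ a b ≠ 0)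
    (hθe : ∀ ω : Ghat, θ ω 1 = 1)
    (hθe' : ∀ ω : Ghat, θ 1 ω = 1)
    (hcoc : ∀ ω₃ ω₂ ω₁ : Ghat, θ ω₃ ω₂ * θ (ω₃ * ω₂) ω₁ =
      θ ω₂ ω₁ ^ ((π ω₃ : ℤˣ) : ℤ) * θ ω₃ (ω₂ * ω₁))
    (k ς μ : Ghat) (hk : π k = 1) (hς : π ς = -1) (hμ : π μ = -1) :
    (θ (ς⁻¹*k*ς) ((ς⁻¹*k*ς)⁻¹))⁻¹ * θ k ς * (θ ς (ς⁻¹*k*ς))⁻¹ *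
      (θ (μ^2) ((μ^2)⁻¹*(ς⁻¹*k*ς)⁻¹))⁻¹ * (θ μ μ)⁻¹
    = (θ ((k*ς*μ*ς⁻¹)^2) (((k*ς*μ*ς⁻¹)^2)⁻¹*k))⁻¹ * (θ (k*ς*μ*ς⁻¹) (k*ς*μ*ς⁻¹))⁻¹ *
      θ (((k*ς*μ*ς⁻¹)^2)⁻¹*k) (ς*μ) * (θ (ς*μ) ((μ^2)⁻¹*(ς⁻¹*k*ς)⁻¹))⁻¹ := by
  have hkinv : π k⁻¹ = 1 := by simp [hk]
  have hςinv : π ς⁻¹ = -1 := by simp [hς]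
  have hμinv : π μ⁻¹ = -1 := by simp [hμ]
  rw [show ((μ^2)⁻¹*(ς⁻¹*k*ς)⁻¹ : Ghat) = μ⁻¹ * (μ⁻¹ * (ς⁻¹ * (k⁻¹ * ς))) by rw [pow_two]; group]
  rw [show (((k*ς*μ*ς⁻¹)^2)⁻¹*k : Ghat) = ς * (μ⁻¹ * (ς⁻¹ * (k⁻¹ * (ς * (μ⁻¹ * ς⁻¹))))) by rw [pow_two]; group]
  rw [show ((k*ς*μ*ς⁻¹)^2 : Ghat) = k * (ς * (μ * (ς⁻¹ * (k * (ς * (μ * ς⁻¹)))))) by rw [pow_two]; group]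
  rw [show ((ς⁻¹*k*ς)⁻¹ : Ghat) = ς⁻¹ * (k⁻¹ * ς) by group]
  rw [show (ς⁻¹*k*ς : Ghat) = ς⁻¹ * (k * ς) by group]
  rw [show (k*ς*μ*ς⁻¹ : Ghat) = k * (ς * (μ * ς⁻¹)) by group]
  rw [show (μ^2 : Ghat) = μ * μ by rw [pow_two]]
  have z0 := EE_ne_zero π θ hθ0 ([] : List Ghat)
  have z1 := EE_ne_zero π θ hθ0 [ς⁻¹, k, ς]
  have z2 := EE_ne_zero π θ hθ0 [ς⁻¹, k⁻¹, ς]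
  have z3 := EE_ne_zero π θ hθ0 [k, ς]
  have z4 := EE_ne_zero π θ hθ0 [μ, μ]
  have z5 := EE_ne_zero π θ hθ0 [μ⁻¹, μ⁻¹, ς⁻¹, k⁻¹, ς]
  have z6 := EE_ne_zero π θ hθ0 [k, ς, μ, ς⁻¹, k, ς, μ, ς⁻¹]
  have z7 := EE_ne_zero π θ hθ0 [ς, μ⁻¹, ς⁻¹, k⁻¹, ς, μ⁻¹, ς⁻¹]
  have z8 := EE_ne_zero π θ hθ0 [ς, μ⁻¹, ς⁻¹, k⁻¹, ς]
  have z9 := EE_ne_zero π θ hθ0 [ς, μ]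
  have z10 := EE_ne_zero π θ hθ0 [k, ς, μ, ς⁻¹]
  have z11 := EE_ne_zero π θ hθ0 [k]
  have z12 := EE_ne_zero π θ hθ0 [ς]
  have z13 := EE_ne_zero π θ hθ0 [μ]
  have w1 := hθ0 ς ς⁻¹
  have w2 := hθ0 ς⁻¹ ς
  have w3 := hθ0 k k⁻¹
  have w4 := hθ0 μ μ⁻¹
  have w5 := hθ0 μ⁻¹ μ
  have Enil : EE π θ ([] : List Ghat) = 1 := rfl
  have E1 : ∀ a : Ghat, EE π θ [a] = 1 := fun a => by simp [EE, hθe]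
  have hpairς := theta_inv_pair π θ hθ0 hθe hθe' hcoc ς hς
  have hpairμ := theta_inv_pair π θ hθ0 hθe hθe' hcoc μ hμ
  have hswς : (θ ς ς⁻¹)⁻¹ = θ ς⁻¹ ς := inv_eq_of_mul_eq_one_right hpairς
  have hswς' : (θ ς⁻¹ ς)⁻¹ = θ ς ς⁻¹ := inv_eq_of_mul_eq_one_right (by linear_combination hpairς)
  have hswμ : (θ μ μ⁻¹)⁻¹ = θ μ⁻¹ μ := inv_eq_of_mul_eq_one_right hpairμ
  have hswμ' : (θ μ⁻¹ μ)⁻¹ = θ μ μ⁻¹ := inv_eq_of_mul_eq_one_right (by linear_combination hpairμ)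
  have c1 : EE π θ [ς⁻¹, k, ς, ς⁻¹, k⁻¹, ς] = θ ς⁻¹ ς * EE π θ [ς⁻¹, k, k⁻¹, ς] := by
    have hc := EE_cancel π θ hθ0 hθe' hcoc [ς⁻¹, k] ς ς⁻¹ [k⁻¹, ς] (by group)
    simpa only [List.cons_append, List.nil_append, List.prod_cons, List.prod_nil, mul_one,
      map_mul, map_inv, map_one, hk, hς, hμ, hkinv, hςinv, hμinv, one_mul, mul_neg, neg_mul,
      neg_neg, Units.val_mul, Units.val_neg, Units.val_one, zpow_one, zpow_neg_one,
      hswς, hswς', hswμ, hswμ', Enil, E1, inv_one] using hc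
  have c2 : EE π θ [ς⁻¹, k, k⁻¹, ς] = (θ k k⁻¹)⁻¹ * EE π θ [ς⁻¹, ς] := by
    have hc := EE_cancel π θ hθ0 hθe' hcoc [ς⁻¹] k k⁻¹ [ς] (by group)
    simpa only [List.cons_append, List.nil_append, List.prod_cons, List.prod_nil, mul_one,
      map_mul, map_inv, map_one, hk, hς, hμ, hkinv, hςinv, hμinv, one_mul, mul_neg, neg_mul,
      neg_neg, Units.val_mul, Units.val_neg, Units.val_one, zpow_one, zpow_neg_one,
      hswς, hswς', hswμ, hswμ', Enil, E1, inv_one] using hc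
  have c3 : EE π θ [ς⁻¹, ς] = θ ς⁻¹ ς := by
    have hc := EE_cancel π θ hθ0 hθe' hcoc [] ς⁻¹ ς [] (by group)
    simpa only [List.cons_append, List.nil_append, List.prod_cons, List.prod_nil, mul_one,
      map_mul, map_inv, map_one, hk, hς, hμ, hkinv, hςinv, hμinv, one_mul, mul_neg, neg_mul,
      neg_neg, Units.val_mul, Units.val_neg, Units.val_one, zpow_one, zpow_neg_one,
      hswς, hswς', hswμ, hswμ', Enil, E1, inv_one] using hc
  have A1 : EE π θ [ς⁻¹, k, ς, ς⁻¹, k⁻¹, ς] = EE π θ [ς⁻¹, k, ς] * EE π θ [ς⁻¹, k⁻¹, ς] * θ (ς⁻¹ * (k * (ς))) (ς⁻¹ * (k⁻¹ * (ς))) := by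
    have hc := EE_append π θ hθ0 hθe' hcoc [ς⁻¹, k, ς] [ς⁻¹, k⁻¹, ς]
    simpa only [List.cons_append, List.nil_append, List.prod_cons, List.prod_nil, mul_one,
      map_mul, map_inv, map_one, hk, hς, hμ, hkinv, hςinv, hμinv, one_mul, mul_neg, neg_mul,
      neg_neg, Units.val_mul, Units.val_neg, Units.val_one, zpow_one, zpow_neg_one,
      hswς, hswς', hswμ, hswμ', Enil, E1, inv_one] using hc
  have A2 : EE π θ [k, ς] = θ k ς := by
    have hc := EE_append π θ hθ0 hθe' hcoc [k] [ς]
    simpa only [List.cons_append, List.nil_append, List.prod_cons, List.prod_nil, mul_one,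
      map_mul, map_inv, map_one, hk, hς, hμ, hkinv, hςinv, hμinv, one_mul, mul_neg, neg_mul,
      neg_neg, Units.val_mul, Units.val_neg, Units.val_one, zpow_one, zpow_neg_one,
      hswς, hswς', hswμ, hswμ', Enil, E1, inv_one] using hc
  have c4 : EE π θ [ς, ς⁻¹, k, ς] = θ ς ς⁻¹ * EE π θ [k, ς] := by
    have hc := EE_cancel π θ hθ0 hθe' hcoc [] ς ς⁻¹ [k, ς] (by group)
    simpa only [List.cons_append, List.nil_append, List.prod_cons, List.prod_nil, mul_one,
      map_mul, map_inv, map_one, hk, hς, hμ, hkinv, hςinv, hμinv, one_mul, mul_neg, neg_mul,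
      neg_neg, Units.val_mul, Units.val_neg, Units.val_one, zpow_one, zpow_neg_one,
      hswς, hswς', hswμ, hswμ', Enil, E1, inv_one] using hc
  have A3 : EE π θ [ς, ς⁻¹, k, ς] = (EE π θ [ς⁻¹, k, ς])⁻¹ * θ ς (ς⁻¹ * (k * (ς))) := by
    have hc := EE_append π θ hθ0 hθe' hcoc [ς] [ς⁻¹, k, ς]
    simpa only [List.cons_append, List.nil_append, List.prod_cons, List.prod_nil, mul_one,
      map_mul, map_inv, map_one, hk, hς, hμ, hkinv, hςinv, hμinv, one_mul, mul_neg, neg_mul,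
      neg_neg, Units.val_mul, Units.val_neg, Units.val_one, zpow_one, zpow_neg_one,
      hswς, hswς', hswμ, hswμ', Enil, E1, inv_one] using hc
  have c5 : EE π θ [μ, μ, μ⁻¹, μ⁻¹, ς⁻¹, k⁻¹, ς] = θ μ⁻¹ μ * EE π θ [μ, μ⁻¹, ς⁻¹, k⁻¹, ς] := by
    have hc := EE_cancel π θ hθ0 hθe' hcoc [μ] μ μ⁻¹ [μ⁻¹, ς⁻¹, k⁻¹, ς] (by group)
    simpa only [List.cons_append, List.nil_append, List.prod_cons, List.prod_nil, mul_one,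
      map_mul, map_inv, map_one, hk, hς, hμ, hkinv, hςinv, hμinv, one_mul, mul_neg, neg_mul,
      neg_neg, Units.val_mul, Units.val_neg, Units.val_one, zpow_one, zpow_neg_one,
      hswς, hswς', hswμ, hswμ', Enil, E1, inv_one] using hc
  have c6 : EE π θ [μ, μ⁻¹, ς⁻¹, k⁻¹, ς] = θ μ μ⁻¹ * EE π θ [ς⁻¹, k⁻¹, ς] := by
    have hc := EE_cancel π θ hθ0 hθe' hcoc [] μ μ⁻¹ [ς⁻¹, k⁻¹, ς] (by group)
    simpa only [List.cons_append, List.nil_append, List.prod_cons, List.prod_nil, mul_one,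
      map_mul, map_inv, map_one, hk, hς, hμ, hkinv, hςinv, hμinv, one_mul, mul_neg, neg_mul,
      neg_neg, Units.val_mul, Units.val_neg, Units.val_one, zpow_one, zpow_neg_one,
      hswς, hswς', hswμ, hswμ', Enil, E1, inv_one] using hc
  have A4 : EE π θ [μ, μ, μ⁻¹, μ⁻¹, ς⁻¹, k⁻¹, ς] = EE π θ [μ, μ] * EE π θ [μ⁻¹, μ⁻¹, ς⁻¹, k⁻¹, ς] * θ (μ * (μ)) (μ⁻¹ * (μ⁻¹ * (ς⁻¹ * (k⁻¹ * (ς))))) := by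
    have hc := EE_append π θ hθ0 hθe' hcoc [μ, μ] [μ⁻¹, μ⁻¹, ς⁻¹, k⁻¹, ς]
    simpa only [List.cons_append, List.nil_append, List.prod_cons, List.prod_nil, mul_one,
      map_mul, map_inv, map_one, hk, hς, hμ, hkinv, hςinv, hμinv, one_mul, mul_neg, neg_mul,
      neg_neg, Units.val_mul, Units.val_neg, Units.val_one, zpow_one, zpow_neg_one,
      hswς, hswς', hswμ, hswμ', Enil, E1, inv_one] using hc
  have A5 : EE π θ [μ, μ] = θ μ μ := by
    have hc := EE_append π θ hθ0 hθe' hcoc [μ] [μ]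
    simpa only [List.cons_append, List.nil_append, List.prod_cons, List.prod_nil, mul_one,
      map_mul, map_inv, map_one, hk, hς, hμ, hkinv, hςinv, hμinv, one_mul, mul_neg, neg_mul,
      neg_neg, Units.val_mul, Units.val_neg, Units.val_one, zpow_one, zpow_neg_one,
      hswς, hswς', hswμ, hswμ', Enil, E1, inv_one] using hc
  have c7 : EE π θ [k, ς, μ, ς⁻¹, k, ς, μ, ς⁻¹, ς, μ⁻¹, ς⁻¹, k⁻¹, ς, μ⁻¹, ς⁻¹] = θ ς ς⁻¹ * EE π θ [k, ς, μ, ς⁻¹, k, ς, μ, μ⁻¹, ς⁻¹, k⁻¹, ς, μ⁻¹, ς⁻¹] := by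
    have hc := EE_cancel π θ hθ0 hθe' hcoc [k, ς, μ, ς⁻¹, k, ς, μ] ς⁻¹ ς [μ⁻¹, ς⁻¹, k⁻¹, ς, μ⁻¹, ς⁻¹] (by group)
    simpa only [List.cons_append, List.nil_append, List.prod_cons, List.prod_nil, mul_one,
      map_mul, map_inv, map_one, hk, hς, hμ, hkinv, hςinv, hμinv, one_mul, mul_neg, neg_mul,
      neg_neg, Units.val_mul, Units.val_neg, Units.val_one, zpow_one, zpow_neg_one,
      hswς, hswς', hswμ, hswμ', Enil, E1, inv_one] using hc
  have c8 : EE π θ [k, ς, μ, ς⁻¹, k, ς, μ, μ⁻¹, ς⁻¹, k⁻¹, ς, μ⁻¹, ς⁻¹] = θ μ μ⁻¹ * EE π θ [k, ς, μ, ς⁻¹, k, ς, ς⁻¹, k⁻¹, ς, μ⁻¹, ς⁻¹] := by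
    have hc := EE_cancel π θ hθ0 hθe' hcoc [k, ς, μ, ς⁻¹, k, ς] μ μ⁻¹ [ς⁻¹, k⁻¹, ς, μ⁻¹, ς⁻¹] (by group)
    simpa only [List.cons_append, List.nil_append, List.prod_cons, List.prod_nil, mul_one,
      map_mul, map_inv, map_one, hk, hς, hμ, hkinv, hςinv, hμinv, one_mul, mul_neg, neg_mul,
      neg_neg, Units.val_mul, Units.val_neg, Units.val_one, zpow_one, zpow_neg_one,
      hswς, hswς', hswμ, hswμ', Enil, E1, inv_one] using hc
  have c9 : EE π θ [k, ς, μ, ς⁻¹, k, ς, ς⁻¹, k⁻¹, ς, μ⁻¹, ς⁻¹] = θ ς⁻¹ ς * EE π θ [k, ς, μ, ς⁻¹, k, k⁻¹, ς, μ⁻¹, ς⁻¹] := by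
    have hc := EE_cancel π θ hθ0 hθe' hcoc [k, ς, μ, ς⁻¹, k] ς ς⁻¹ [k⁻¹, ς, μ⁻¹, ς⁻¹] (by group)
    simpa only [List.cons_append, List.nil_append, List.prod_cons, List.prod_nil, mul_one,
      map_mul, map_inv, map_one, hk, hς, hμ, hkinv, hςinv, hμinv, one_mul, mul_neg, neg_mul,
      neg_neg, Units.val_mul, Units.val_neg, Units.val_one, zpow_one, zpow_neg_one,
      hswς, hswς', hswμ, hswμ', Enil, E1, inv_one] using hc
  have c10 : EE π θ [k, ς, μ, ς⁻¹, k, k⁻¹, ς, μ⁻¹, ς⁻¹] = (θ k k⁻¹)⁻¹ * EE π θ [k, ς, μ, ς⁻¹, ς, μ⁻¹, ς⁻¹] := by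
    have hc := EE_cancel π θ hθ0 hθe' hcoc [k, ς, μ, ς⁻¹] k k⁻¹ [ς, μ⁻¹, ς⁻¹] (by group)
    simpa only [List.cons_append, List.nil_append, List.prod_cons, List.prod_nil, mul_one,
      map_mul, map_inv, map_one, hk, hς, hμ, hkinv, hςinv, hμinv, one_mul, mul_neg, neg_mul,
      neg_neg, Units.val_mul, Units.val_neg, Units.val_one, zpow_one, zpow_neg_one,
      hswς, hswς', hswμ, hswμ', Enil, E1, inv_one] using hc
  have c11 : EE π θ [k, ς, μ, ς⁻¹, ς, μ⁻¹, ς⁻¹] = θ ς⁻¹ ς * EE π θ [k, ς, μ, μ⁻¹, ς⁻¹] := by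
    have hc := EE_cancel π θ hθ0 hθe' hcoc [k, ς, μ] ς⁻¹ ς [μ⁻¹, ς⁻¹] (by group)
    simpa only [List.cons_append, List.nil_append, List.prod_cons, List.prod_nil, mul_one,
      map_mul, map_inv, map_one, hk, hς, hμ, hkinv, hςinv, hμinv, one_mul, mul_neg, neg_mul,
      neg_neg, Units.val_mul, Units.val_neg, Units.val_one, zpow_one, zpow_neg_one,
      hswς, hswς', hswμ, hswμ', Enil, E1, inv_one] using hc
  have c12 : EE π θ [k, ς, μ, μ⁻¹, ς⁻¹] = θ μ⁻¹ μ * EE π θ [k, ς, ς⁻¹] := by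
    have hc := EE_cancel π θ hθ0 hθe' hcoc [k, ς] μ μ⁻¹ [ς⁻¹] (by group)
    simpa only [List.cons_append, List.nil_append, List.prod_cons, List.prod_nil, mul_one,
      map_mul, map_inv, map_one, hk, hς, hμ, hkinv, hςinv, hμinv, one_mul, mul_neg, neg_mul,
      neg_neg, Units.val_mul, Units.val_neg, Units.val_one, zpow_one, zpow_neg_one,
      hswς, hswς', hswμ, hswμ', Enil, E1, inv_one] using hc
  have c13 : EE π θ [k, ς, ς⁻¹] = θ ς ς⁻¹ := by
    have hc := EE_cancel π θ hθ0 hθe' hcoc [k] ς ς⁻¹ [] (by group)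
    simpa only [List.cons_append, List.nil_append, List.prod_cons, List.prod_nil, mul_one,
      map_mul, map_inv, map_one, hk, hς, hμ, hkinv, hςinv, hμinv, one_mul, mul_neg, neg_mul,
      neg_neg, Units.val_mul, Units.val_neg, Units.val_one, zpow_one, zpow_neg_one,
      hswς, hswς', hswμ, hswμ', Enil, E1, inv_one] using hc
  have A6 : EE π θ [k, ς, μ, ς⁻¹, k, ς, μ, ς⁻¹, ς, μ⁻¹, ς⁻¹, k⁻¹, ς, μ⁻¹, ς⁻¹] = EE π θ [k, ς, μ, ς⁻¹, k, ς, μ, ς⁻¹] * EE π θ [ς, μ⁻¹, ς⁻¹, k⁻¹, ς, μ⁻¹, ς⁻¹] * θ (k * (ς * (μ * (ς⁻¹ * (k * (ς * (μ * (ς⁻¹)))))))) (ς * (μ⁻¹ * (ς⁻¹ * (k⁻¹ * (ς * (μ⁻¹ * (ς⁻¹))))))) := by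
    have hc := EE_append π θ hθ0 hθe' hcoc [k, ς, μ, ς⁻¹, k, ς, μ, ς⁻¹] [ς, μ⁻¹, ς⁻¹, k⁻¹, ς, μ⁻¹, ς⁻¹]
    simpa only [List.cons_append, List.nil_append, List.prod_cons, List.prod_nil, mul_one,
      map_mul, map_inv, map_one, hk, hς, hμ, hkinv, hςinv, hμinv, one_mul, mul_neg, neg_mul,
      neg_neg, Units.val_mul, Units.val_neg, Units.val_one, zpow_one, zpow_neg_one,
      hswς, hswς', hswμ, hswμ', Enil, E1, inv_one] using hc
  have A7 : EE π θ [k, ς, μ, ς⁻¹, k, ς, μ, ς⁻¹] = EE π θ [k, ς, μ, ς⁻¹] * (EE π θ [k, ς, μ, ς⁻¹])⁻¹ * θ (k * (ς * (μ * (ς⁻¹)))) (k * (ς * (μ * (ς⁻¹)))) := by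
    have hc := EE_append π θ hθ0 hθe' hcoc [k, ς, μ, ς⁻¹] [k, ς, μ, ς⁻¹]
    simpa only [List.cons_append, List.nil_append, List.prod_cons, List.prod_nil, mul_one,
      map_mul, map_inv, map_one, hk, hς, hμ, hkinv, hςinv, hμinv, one_mul, mul_neg, neg_mul,
      neg_neg, Units.val_mul, Units.val_neg, Units.val_one, zpow_one, zpow_neg_one,
      hswς, hswς', hswμ, hswμ', Enil, E1, inv_one] using hc
  have c14 : EE π θ [ς, μ⁻¹, ς⁻¹, k⁻¹, ς, μ⁻¹, ς⁻¹, ς, μ] = θ ς ς⁻¹ * EE π θ [ς, μ⁻¹, ς⁻¹, k⁻¹, ς, μ⁻¹, μ] := by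
    have hc := EE_cancel π θ hθ0 hθe' hcoc [ς, μ⁻¹, ς⁻¹, k⁻¹, ς, μ⁻¹] ς⁻¹ ς [μ] (by group)
    simpa only [List.cons_append, List.nil_append, List.prod_cons, List.prod_nil, mul_one,
      map_mul, map_inv, map_one, hk, hς, hμ, hkinv, hςinv, hμinv, one_mul, mul_neg, neg_mul,
      neg_neg, Units.val_mul, Units.val_neg, Units.val_one, zpow_one, zpow_neg_one,
      hswς, hswς', hswμ, hswμ', Enil, E1, inv_one] using hc
  have c15 : EE π θ [ς, μ⁻¹, ς⁻¹, k⁻¹, ς, μ⁻¹, μ] = θ μ⁻¹ μ * EE π θ [ς, μ⁻¹, ς⁻¹, k⁻¹, ς] := by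
    have hc := EE_cancel π θ hθ0 hθe' hcoc [ς, μ⁻¹, ς⁻¹, k⁻¹, ς] μ⁻¹ μ [] (by group)
    simpa only [List.cons_append, List.nil_append, List.prod_cons, List.prod_nil, mul_one,
      map_mul, map_inv, map_one, hk, hς, hμ, hkinv, hςinv, hμinv, one_mul, mul_neg, neg_mul,
      neg_neg, Units.val_mul, Units.val_neg, Units.val_one, zpow_one, zpow_neg_one,
      hswς, hswς', hswμ, hswμ', Enil, E1, inv_one] using hc
  have A8 : EE π θ [ς, μ⁻¹, ς⁻¹, k⁻¹, ς, μ⁻¹, ς⁻¹, ς, μ] = EE π θ [ς, μ⁻¹, ς⁻¹, k⁻¹, ς, μ⁻¹, ς⁻¹] * EE π θ [ς, μ] * θ (ς * (μ⁻¹ * (ς⁻¹ * (k⁻¹ * (ς * (μ⁻¹ * (ς⁻¹))))))) (ς * (μ)) := by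
    have hc := EE_append π θ hθ0 hθe' hcoc [ς, μ⁻¹, ς⁻¹, k⁻¹, ς, μ⁻¹, ς⁻¹] [ς, μ]
    simpa only [List.cons_append, List.nil_append, List.prod_cons, List.prod_nil, mul_one,
      map_mul, map_inv, map_one, hk, hς, hμ, hkinv, hςinv, hμinv, one_mul, mul_neg, neg_mul,
      neg_neg, Units.val_mul, Units.val_neg, Units.val_one, zpow_one, zpow_neg_one,
      hswς, hswς', hswμ, hswμ', Enil, E1, inv_one] using hc
  have c16 : EE π θ [ς, μ, μ⁻¹, μ⁻¹, ς⁻¹, k⁻¹, ς] = θ μ⁻¹ μ * EE π θ [ς, μ⁻¹, ς⁻¹, k⁻¹, ς] := by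
    have hc := EE_cancel π θ hθ0 hθe' hcoc [ς] μ μ⁻¹ [μ⁻¹, ς⁻¹, k⁻¹, ς] (by group)
    simpa only [List.cons_append, List.nil_append, List.prod_cons, List.prod_nil, mul_one,
      map_mul, map_inv, map_one, hk, hς, hμ, hkinv, hςinv, hμinv, one_mul, mul_neg, neg_mul,
      neg_neg, Units.val_mul, Units.val_neg, Units.val_one, zpow_one, zpow_neg_one,
      hswς, hswς', hswμ, hswμ', Enil, E1, inv_one] using hc
  have A9 : EE π θ [ς, μ, μ⁻¹, μ⁻¹, ς⁻¹, k⁻¹, ς] = EE π θ [ς, μ] * EE π θ [μ⁻¹, μ⁻¹, ς⁻¹, k⁻¹, ς] * θ (ς * (μ)) (μ⁻¹ * (μ⁻¹ * (ς⁻¹ * (k⁻¹ * (ς))))) := by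
    have hc := EE_append π θ hθ0 hθe' hcoc [ς, μ] [μ⁻¹, μ⁻¹, ς⁻¹, k⁻¹, ς]
    simpa only [List.cons_append, List.nil_append, List.prod_cons, List.prod_nil, mul_one,
      map_mul, map_inv, map_one, hk, hς, hμ, hkinv, hςinv, hμinv, one_mul, mul_neg, neg_mul,
      neg_neg, Units.val_mul, Units.val_neg, Units.val_one, zpow_one, zpow_neg_one,
      hswς, hswς', hswμ, hswμ', Enil, E1, inv_one] using hc
  rw [c1, c2, c3] at A1
  have P1 : θ (ς⁻¹ * (k * ς)) (ς⁻¹ * (k⁻¹ * ς)) * (EE π θ [ς⁻¹, k, ς] * EE π θ [ς⁻¹, k⁻¹, ς]) = θ ς⁻¹ ς * ((θ k k⁻¹)⁻¹ * (θ ς⁻¹ ς)) := by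
    rw [show θ (ς⁻¹ * (k * ς)) (ς⁻¹ * (k⁻¹ * ς)) = (θ ς⁻¹ ς * ((θ k k⁻¹)⁻¹ * (θ ς⁻¹ ς))) / (EE π θ [ς⁻¹, k, ς] * EE π θ [ς⁻¹, k⁻¹, ς]) from by
      rw [A1]; exact (mul_div_cancel_left₀ _ (mul_ne_zero z1 z2)).symm]
    exact div_mul_cancel₀ _ (mul_ne_zero z1 z2)
  have P2 : θ k ς = EE π θ [k, ς] := A2.symm
  rw [c4] at A3
  have P3 : θ ς (ς⁻¹ * (k * ς)) = EE π θ [ς⁻¹, k, ς] * (θ ς ς⁻¹ * (EE π θ [k, ς])) := by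
    rw [A3]; exact (mul_inv_cancel_left₀ z1 _).symm
  rw [c5, c6] at A4
  have P4 : θ (μ * μ) (μ⁻¹ * (μ⁻¹ * (ς⁻¹ * (k⁻¹ * ς)))) * (EE π θ [μ, μ] * EE π θ [μ⁻¹, μ⁻¹, ς⁻¹, k⁻¹, ς]) = θ μ⁻¹ μ * (θ μ μ⁻¹ * (EE π θ [ς⁻¹, k⁻¹, ς])) := by
    rw [show θ (μ * μ) (μ⁻¹ * (μ⁻¹ * (ς⁻¹ * (k⁻¹ * ς)))) = (θ μ⁻¹ μ * (θ μ μ⁻¹ * (EE π θ [ς⁻¹, k⁻¹, ς]))) / (EE π θ [μ, μ] * EE π θ [μ⁻¹, μ⁻¹, ς⁻¹, k⁻¹, ς]) from by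
      rw [A4]; exact (mul_div_cancel_left₀ _ (mul_ne_zero z4 z5)).symm]
    exact div_mul_cancel₀ _ (mul_ne_zero z4 z5)
  have P5 : θ μ μ = EE π θ [μ, μ] := A5.symm
  rw [c7, c8, c9, c10, c11, c12, c13] at A6
  have P6 : θ (k * (ς * (μ * (ς⁻¹ * (k * (ς * (μ * ς⁻¹))))))) (ς * (μ⁻¹ * (ς⁻¹ * (k⁻¹ * (ς * (μ⁻¹ * ς⁻¹)))))) * (EE π θ [k, ς, μ, ς⁻¹, k, ς, μ, ς⁻¹] * EE π θ [ς, μ⁻¹, ς⁻¹, k⁻¹, ς, μ⁻¹, ς⁻¹]) = θ ς ς⁻¹ * (θ μ μ⁻¹ * (θ ς⁻¹ ς * ((θ k k⁻¹)⁻¹ * (θ ς⁻¹ ς * (θ μ⁻¹ μ * (θ ς ς⁻¹)))))) := by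
    rw [show θ (k * (ς * (μ * (ς⁻¹ * (k * (ς * (μ * ς⁻¹))))))) (ς * (μ⁻¹ * (ς⁻¹ * (k⁻¹ * (ς * (μ⁻¹ * ς⁻¹)))))) = (θ ς ς⁻¹ * (θ μ μ⁻¹ * (θ ς⁻¹ ς * ((θ k k⁻¹)⁻¹ * (θ ς⁻¹ ς * (θ μ⁻¹ μ * (θ ς ς⁻¹))))))) / (EE π θ [k, ς, μ, ς⁻¹, k, ς, μ, ς⁻¹] * EE π θ [ς, μ⁻¹, ς⁻¹, k⁻¹, ς, μ⁻¹, ς⁻¹]) from by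
      rw [A6]; exact (mul_div_cancel_left₀ _ (mul_ne_zero z6 z7)).symm]
    exact div_mul_cancel₀ _ (mul_ne_zero z6 z7)
  rw [mul_inv_cancel₀ z10, one_mul] at A7
  have P7 : θ (k * (ς * (μ * ς⁻¹))) (k * (ς * (μ * ς⁻¹))) = EE π θ [k, ς, μ, ς⁻¹, k, ς, μ, ς⁻¹] := A7.symm
  rw [c14, c15] at A8
  have P8 : θ (ς * (μ⁻¹ * (ς⁻¹ * (k⁻¹ * (ς * (μ⁻¹ * ς⁻¹)))))) (ς * μ) * (EE π θ [ς, μ⁻¹, ς⁻¹, k⁻¹, ς, μ⁻¹, ς⁻¹] * EE π θ [ς, μ]) = θ ς ς⁻¹ * (θ μ⁻¹ μ * (EE π θ [ς, μ⁻¹, ς⁻¹, k⁻¹, ς])) := by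
    rw [show θ (ς * (μ⁻¹ * (ς⁻¹ * (k⁻¹ * (ς * (μ⁻¹ * ς⁻¹)))))) (ς * μ) = (θ ς ς⁻¹ * (θ μ⁻¹ μ * (EE π θ [ς, μ⁻¹, ς⁻¹, k⁻¹, ς]))) / (EE π θ [ς, μ⁻¹, ς⁻¹, k⁻¹, ς, μ⁻¹, ς⁻¹] * EE π θ [ς, μ]) from by
      rw [A8]; exact (mul_div_cancel_left₀ _ (mul_ne_zero z7 z9)).symm]
    exact div_mul_cancel₀ _ (mul_ne_zero z7 z9)
  rw [c16] at A9
  have P9 : θ (ς * μ) (μ⁻¹ * (μ⁻¹ * (ς⁻¹ * (k⁻¹ * ς)))) * (EE π θ [ς, μ] * EE π θ [μ⁻¹, μ⁻¹, ς⁻¹, k⁻¹, ς]) = θ μ⁻¹ μ * (EE π θ [ς, μ⁻¹, ς⁻¹, k⁻¹, ς]) := by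
    rw [show θ (ς * μ) (μ⁻¹ * (μ⁻¹ * (ς⁻¹ * (k⁻¹ * ς)))) = (θ μ⁻¹ μ * (EE π θ [ς, μ⁻¹, ς⁻¹, k⁻¹, ς])) / (EE π θ [ς, μ] * EE π θ [μ⁻¹, μ⁻¹, ς⁻¹, k⁻¹, ς]) from by
      rw [A9]; exact (mul_div_cancel_left₀ _ (mul_ne_zero z9 z5)).symm]
    exact div_mul_cancel₀ _ (mul_ne_zero z9 z5)
  have e1 : (θ k ς * θ (k * (ς * (μ * (ς⁻¹ * (k * (ς * (μ * ς⁻¹))))))) (ς * (μ⁻¹ * (ς⁻¹ * (k⁻¹ * (ς * (μ⁻¹ * ς⁻¹)))))) * θ (k * (ς * (μ * ς⁻¹))) (k * (ς * (μ * ς⁻¹))) * θ (ς * μ) (μ⁻¹ * (μ⁻¹ * (ς⁻¹ * (k⁻¹ * ς))))) * ((EE π θ [k, ς, μ, ς⁻¹, k, ς, μ, ς⁻¹] * EE π θ [ς, μ⁻¹, ς⁻¹, k⁻¹, ς, μ⁻¹, ς⁻¹]) * (EE π θ [ς, μ] * EE π θ [μ⁻¹, μ⁻¹, ς⁻¹,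 k⁻¹, ς])) =
      (EE π θ [k, ς]) * (θ ς ς⁻¹ * (θ μ μ⁻¹ * (θ ς⁻¹ ς * ((θ k k⁻¹)⁻¹ * (θ ς⁻¹ ς * (θ μ⁻¹ μ * (θ ς ς⁻¹))))))) * (EE π θ [k, ς, μ, ς⁻¹, k, ς, μ, ς⁻¹]) * (θ μ⁻¹ μ * (EE π θ [ς, μ⁻¹, ς⁻¹, k⁻¹, ς])) := by
    linear_combination (θ (k * (ς * (μ * (ς⁻¹ * (k * (ς * (μ * ς⁻¹))))))) (ς * (μ⁻¹ * (ς⁻¹ * (k⁻¹ * (ς * (μ⁻¹ * ς⁻¹)))))) * θ (k * (ς * (μ * ς⁻¹))) (k * (ς * (μ * ς⁻¹))) * θ (ς * μ) (μ⁻¹ * (μ⁻¹ * (ς⁻¹ * (k⁻¹ * ς)))) * (EE π θ [k, ς, μ, ς⁻¹, k, ς, μ, ς⁻¹] * EE π θ [ς, μ⁻¹, ς⁻¹, k⁻¹, ς, μ⁻¹, ς⁻¹]) * (EE π θ [ς, μ] * EE π θ [μ⁻¹, μ⁻¹, ς⁻¹, k⁻¹, ς])) * P2 +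
      ((EE π θ [k, ς]) * θ (k * (ς * (μ * ς⁻¹))) (k * (ς * (μ * ς⁻¹))) * θ (ς * μ) (μ⁻¹ * (μ⁻¹ * (ς⁻¹ * (k⁻¹ * ς)))) * (EE π θ [ς, μ] * EE π θ [μ⁻¹, μ⁻¹, ς⁻¹, k⁻¹, ς])) * P6 +
      ((EE π θ [k, ς]) * (θ ς ς⁻¹ * (θ μ μ⁻¹ * (θ ς⁻¹ ς * ((θ k k⁻¹)⁻¹ * (θ ς⁻¹ ς * (θ μ⁻¹ μ * (θ ς ς⁻¹))))))) * θ (ς * μ) (μ⁻¹ * (μ⁻¹ * (ς⁻¹ * (k⁻¹ * ς)))) * (EE π θ [ς, μ] * EE π θ [μ⁻¹, μ⁻¹, ς⁻¹, k⁻¹, ς])) * P7 +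
      ((EE π θ [k, ς]) * (θ ς ς⁻¹ * (θ μ μ⁻¹ * (θ ς⁻¹ ς * ((θ k k⁻¹)⁻¹ * (θ ς⁻¹ ς * (θ μ⁻¹ μ * (θ ς ς⁻¹))))))) * (EE π θ [k, ς, μ, ς⁻¹, k, ς, μ, ς⁻¹])) * P9
  have e2 : (θ (ς⁻¹ * (k * ς)) (ς⁻¹ * (k⁻¹ * ς)) * θ ς (ς⁻¹ * (k * ς)) * θ (μ * μ) (μ⁻¹ * (μ⁻¹ * (ς⁻¹ * (k⁻¹ * ς)))) * θ μ μ * θ (ς * (μ⁻¹ * (ς⁻¹ * (k⁻¹ * (ς * (μ⁻¹ * ς⁻¹)))))) (ς * μ)) * ((EE π θ [ς⁻¹, k, ς] * EE π θ [ς⁻¹, k⁻¹, ς]) * (EE π θ [μ, μ] * EE π θ [μ⁻¹, μ⁻¹, ς⁻¹, k⁻¹, ς]) * (EE π θ [ς, μ⁻¹, ς⁻¹, k⁻¹, ς, μ⁻¹, ς⁻¹] * EE π θ [ς, μ])) =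
      (θ ς⁻¹ ς * ((θ k k⁻¹)⁻¹ * (θ ς⁻¹ ς))) * (EE π θ [ς⁻¹, k, ς] * (θ ς ς⁻¹ * (EE π θ [k, ς]))) * (θ μ⁻¹ μ * (θ μ μ⁻¹ * (EE π θ [ς⁻¹, k⁻¹, ς]))) * (EE π θ [μ, μ]) * (θ ς ς⁻¹ * (θ μ⁻¹ μ * (EE π θ [ς, μ⁻¹, ς⁻¹, k⁻¹, ς]))) := by
    linear_combination (θ ς (ς⁻¹ * (k * ς)) * θ (μ * μ) (μ⁻¹ * (μ⁻¹ * (ς⁻¹ * (k⁻¹ * ς)))) * θ μ μ * θ (ς * (μ⁻¹ * (ς⁻¹ * (k⁻¹ * (ς * (μ⁻¹ * ς⁻¹)))))) (ς * μ) * (EE π θ [μ, μ] * EE π θ [μ⁻¹, μ⁻¹, ς⁻¹, k⁻¹, ς]) * (EE π θ [ς, μ⁻¹, ς⁻¹, k⁻¹, ς, μ⁻¹, ς⁻¹] * EE π θ [ς, μ])) * P1 +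
      ((θ ς⁻¹ ς * ((θ k k⁻¹)⁻¹ * (θ ς⁻¹ ς))) * θ (μ * μ) (μ⁻¹ * (μ⁻¹ * (ς⁻¹ * (k⁻¹ * ς)))) * θ μ μ * θ (ς * (μ⁻¹ * (ς⁻¹ * (k⁻¹ * (ς * (μ⁻¹ * ς⁻¹)))))) (ς * μ) * (EE π θ [μ, μ] * EE π θ [μ⁻¹, μ⁻¹, ς⁻¹, k⁻¹, ς]) * (EE π θ [ς, μ⁻¹, ς⁻¹, k⁻¹, ς, μ⁻¹, ς⁻¹] * EE π θ [ς, μ])) * P3 +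
      ((θ ς⁻¹ ς * ((θ k k⁻¹)⁻¹ * (θ ς⁻¹ ς))) * (EE π θ [ς⁻¹, k, ς] * (θ ς ς⁻¹ * (EE π θ [k, ς]))) * θ μ μ * θ (ς * (μ⁻¹ * (ς⁻¹ * (k⁻¹ * (ς * (μ⁻¹ * ς⁻¹)))))) (ς * μ) * (EE π θ [ς, μ⁻¹, ς⁻¹, k⁻¹, ς, μ⁻¹, ς⁻¹] * EE π θ [ς, μ])) * P4 +
      ((θ ς⁻¹ ς * ((θ k k⁻¹)⁻¹ * (θ ς⁻¹ ς))) * (EE π θ [ς⁻¹, k, ς] * (θ ς ς⁻¹ * (EE π θ [k, ς]))) * (θ μ⁻¹ μ * (θ μ μ⁻¹ * (EE π θ [ς⁻¹, k⁻¹, ς]))) * θ (ς * (μ⁻¹ * (ς⁻¹ * (k⁻¹ * (ς * (μ⁻¹ * ς⁻¹)))))) (ς * μ) * (EE π θ [ς, μ⁻¹, ς⁻¹, k⁻¹, ς, μ⁻¹, ς⁻¹] * EE π θ [ς, μ])) * P5 +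
      ((θ ς⁻¹ ς * ((θ k k⁻¹)⁻¹ * (θ ς⁻¹ ς))) * (EE π θ [ς⁻¹, k, ς] * (θ ς ς⁻¹ * (EE π θ [k, ς]))) * (θ μ⁻¹ μ * (θ μ μ⁻¹ * (EE π θ [ς⁻¹, k⁻¹, ς]))) * (EE π θ [μ, μ])) * P8
  have star : (EE π θ [k, ς]) * (θ ς ς⁻¹ * (θ μ μ⁻¹ * (θ ς⁻¹ ς * ((θ k k⁻¹)⁻¹ * (θ ς⁻¹ ς * (θ μ⁻¹ μ * (θ ς ς⁻¹))))))) * (EE π θ [k, ς, μ, ς⁻¹, k, ς, μ, ς⁻¹]) * (θ μ⁻¹ μ * (EE π θ [ς, μ⁻¹, ς⁻¹, k⁻¹, ς])) * ((EE π θ [ς⁻¹, k, ς] * EE π θ [ς⁻¹, k⁻¹, ς]) * (EE π θ [μ, μ] * EE π θ [μ⁻¹, μ⁻¹, ς⁻¹, k⁻¹, ς]) * (EE π θ [ς, μ⁻¹, ς⁻¹, k⁻¹, ς, μ⁻¹, ς⁻¹] * EE π θ [ς, μ])) =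
      (θ ς⁻¹ ς * ((θ k k⁻¹)⁻¹ * (θ ς⁻¹ ς))) * (EE π θ [ς⁻¹, k, ς] * (θ ς ς⁻¹ * (EE π θ [k, ς]))) * (θ μ⁻¹ μ * (θ μ μ⁻¹ * (EE π θ [ς⁻¹, k⁻¹, ς]))) * (EE π θ [μ, μ]) * (θ ς ς⁻¹ * (θ μ⁻¹ μ * (EE π θ [ς, μ⁻¹, ς⁻¹, k⁻¹, ς]))) * ((EE π θ [k, ς, μ, ς⁻¹, k, ς, μ, ς⁻¹] * EE π θ [ς, μ⁻¹, ς⁻¹, k⁻¹, ς, μ⁻¹, ς⁻¹]) * (EE π θ [ς, μ] * EE π θ [μ⁻¹, μ⁻¹, ς⁻¹, k⁻¹, ς])) := by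
    ring
  have pos : θ k ς * θ (k * (ς * (μ * (ς⁻¹ * (k * (ς * (μ * ς⁻¹))))))) (ς * (μ⁻¹ * (ς⁻¹ * (k⁻¹ * (ς * (μ⁻¹ * ς⁻¹)))))) * θ (k * (ς * (μ * ς⁻¹))) (k * (ς * (μ * ς⁻¹))) * θ (ς * μ) (μ⁻¹ * (μ⁻¹ * (ς⁻¹ * (k⁻¹ * ς)))) = θ (ς⁻¹ * (k * ς)) (ς⁻¹ * (k⁻¹ * ς)) * θ ς (ς⁻¹ * (k * ς)) * θ (μ * μ) (μ⁻¹ * (μ⁻¹ * (ς⁻¹ * (k⁻¹ * ς)))) * θ μ μ * θ (ς * (μ⁻¹ * (ς⁻¹ * (k⁻¹ * (ς * (μ⁻¹ * ς⁻¹)))))) (ς * μ) := by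
    have pos' : (θ k ς * θ (k * (ς * (μ * (ς⁻¹ * (k * (ς * (μ * ς⁻¹))))))) (ς * (μ⁻¹ * (ς⁻¹ * (k⁻¹ * (ς * (μ⁻¹ * ς⁻¹)))))) * θ (k * (ς * (μ * ς⁻¹))) (k * (ς * (μ * ς⁻¹))) * θ (ς * μ) (μ⁻¹ * (μ⁻¹ * (ς⁻¹ * (k⁻¹ * ς))))) * (((EE π θ [k, ς, μ, ς⁻¹, k, ς, μ, ς⁻¹] * EE π θ [ς, μ⁻¹, ς⁻¹, k⁻¹, ς, μ⁻¹, ς⁻¹]) * (EE π θ [ς, μ] * EE π θ [μ⁻¹, μ⁻¹, ς⁻¹, k⁻¹, ς])) * ((EE π θ [ς⁻¹, k, ς] * EE π θ [ς⁻¹, k⁻¹, ς]) * (EE π θ [μ, μ] * EE π θ [μ⁻¹, μ⁻¹, ς⁻¹, k⁻¹, ς]) * (EE π θ [ς, μ⁻¹, ς⁻¹, k⁻¹, ς, μ⁻¹, ς⁻¹] * EE π θ [ς, μ]))) =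
        (θ (ς⁻¹ * (k * ς)) (ς⁻¹ * (k⁻¹ * ς)) * θ ς (ς⁻¹ * (k * ς)) * θ (μ * μ) (μ⁻¹ * (μ⁻¹ * (ς⁻¹ * (k⁻¹ * ς)))) * θ μ μ * θ (ς * (μ⁻¹ * (ς⁻¹ * (k⁻¹ * (ς * (μ⁻¹ * ς⁻¹)))))) (ς * μ)) * (((EE π θ [k, ς, μ, ς⁻¹, k, ς, μ, ς⁻¹] * EE π θ [ς, μ⁻¹, ς⁻¹, k⁻¹, ς, μ⁻¹, ς⁻¹]) * (EE π θ [ς, μ] * EE π θ [μ⁻¹, μ⁻¹, ς⁻¹, k⁻¹, ς])) * ((EE π θ [ς⁻¹, k, ς] * EE π θ [ς⁻¹, k⁻¹, ς]) * (EE π θ [μ, μ] * EE π θ [μ⁻¹, μ⁻¹, ς⁻¹, k⁻¹, ς]) * (EE π θ [ς, μ⁻¹, ς⁻¹, k⁻¹, ς, μ⁻¹, ς⁻¹] * EE π θ [ς, μ]))) := by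
      linear_combination ((EE π θ [ς⁻¹, k, ς] * EE π θ [ς⁻¹, k⁻¹, ς]) * (EE π θ [μ, μ] * EE π θ [μ⁻¹, μ⁻¹, ς⁻¹, k⁻¹, ς]) * (EE π θ [ς, μ⁻¹, ς⁻¹, k⁻¹, ς, μ⁻¹, ς⁻¹] * EE π θ [ς, μ])) * e1 - ((EE π θ [k, ς, μ, ς⁻¹, k, ς, μ, ς⁻¹] * EE π θ [ς, μ⁻¹, ς⁻¹, k⁻¹, ς, μ⁻¹, ς⁻¹]) * (EE π θ [ς, μ] * EE π θ [μ⁻¹, μ⁻¹, ς⁻¹, k⁻¹, ς])) * e2 + star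
    exact mul_right_cancel₀ (mul_ne_zero (mul_ne_zero (mul_ne_zero z6 z7) (mul_ne_zero z9 z5))
      (mul_ne_zero (mul_ne_zero (mul_ne_zero z1 z2) (mul_ne_zero z4 z5)) (mul_ne_zero z7 z9))) pos'
  have t1 := hθ0 (ς⁻¹ * (k * ς)) (ς⁻¹ * (k⁻¹ * ς))
  have t2 := hθ0 k ς
  have t3 := hθ0 ς (ς⁻¹ * (k * ς))
  have t4 := hθ0 (μ * μ) (μ⁻¹ * (μ⁻¹ * (ς⁻¹ * (k⁻¹ * ς))))
  have t5 := hθ0 μ μ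
  have t6 := hθ0 (k * (ς * (μ * (ς⁻¹ * (k * (ς * (μ * ς⁻¹))))))) (ς * (μ⁻¹ * (ς⁻¹ * (k⁻¹ * (ς * (μ⁻¹ * ς⁻¹))))))
  have t7 := hθ0 (k * (ς * (μ * ς⁻¹))) (k * (ς * (μ * ς⁻¹)))
  have t8 := hθ0 (ς * (μ⁻¹ * (ς⁻¹ * (k⁻¹ * (ς * (μ⁻¹ * ς⁻¹)))))) (ς * μ)
  have t9 := hθ0 (ς * μ) (μ⁻¹ * (μ⁻¹ * (ς⁻¹ * (k⁻¹ * ς))))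
  set a1 := θ (ς⁻¹ * (k * ς)) (ς⁻¹ * (k⁻¹ * ς)) with ha1
  set a2 := θ k ς with ha2
  set a3 := θ ς (ς⁻¹ * (k * ς)) with ha3
  set a4 := θ (μ * μ) (μ⁻¹ * (μ⁻¹ * (ς⁻¹ * (k⁻¹ * ς)))) with ha4
  set a5 := θ μ μ with ha5
  set a6 := θ (k * (ς * (μ * (ς⁻¹ * (k * (ς * (μ * ς⁻¹))))))) (ς * (μ⁻¹ * (ς⁻¹ * (k⁻¹ * (ς * (μ⁻¹ * ς⁻¹)))))) with ha6
  set a7 := θ (k * (ς * (μ * ς⁻¹))) (k * (ς * (μ * ς⁻¹))) with ha7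
  set a8 := θ (ς * (μ⁻¹ * (ς⁻¹ * (k⁻¹ * (ς * (μ⁻¹ * ς⁻¹)))))) (ς * μ) with ha8
  set a9 := θ (ς * μ) (μ⁻¹ * (μ⁻¹ * (ς⁻¹ * (k⁻¹ * ς)))) with ha9
  field_simp
  linear_combination pos
end EE

section Glue
variable {Ghat : Type*} [Group Ghat] [Fintype Ghat] [DecidableEq Ghat]

theorem convNu (π : Ghat →* ℤˣ) (θ : Ghat → Ghat → ℂ) (lam : Ghat →* ℂ) (a : Ghat → ℂ)
    (t : Ghat) :
    convG π θ (nuG π θ lam) a t =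
      ∑ μ ∈ Finset.univ.filter (fun μ : Ghat => π μ = -1),
        (θ (μ ^ 2) ((μ ^ 2)⁻¹ * t))⁻¹ * (lam μ / θ μ μ) * a ((μ ^ 2)⁻¹ * t) := by
  simp only [convG, nuG]
  have hmap : ∀ μ ∈ Finset.univ.filter (fun μ : Ghat => π μ = -1),
      μ ^ 2 ∈ Finset.univ.filter (fun g : Ghat => π g = 1) := by
    intro μ hμ
    simp only [Finset.mem_filter, Finset.mem_univ, true_and] at hμ ⊢
    rw [map_pow, hμ]; rfl
  calc ∑ g ∈ Finset.univ.filter (fun g : Ghat => π g = 1),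
        (θ g (g⁻¹ * t))⁻¹ *
          (∑ μ ∈ Finset.univ.filter (fun μ : Ghat => π μ = -1 ∧ μ ^ 2 = g), lam μ / θ μ μ) *
          a (g⁻¹ * t)
      = ∑ g ∈ Finset.univ.filter (fun g : Ghat => π g = 1),
          ∑ μ ∈ (Finset.univ.filter (fun μ : Ghat => π μ = -1)).filter (fun μ => μ ^ 2 = g),
            (θ (μ ^ 2) ((μ ^ 2)⁻¹ * t))⁻¹ * (lam μ / θ μ μ) * a ((μ ^ 2)⁻¹ * t) := by
        refine Finset.sum_congr rfl ?_
        intro g hg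
        rw [Finset.mul_sum, Finset.sum_mul]
        rw [show (Finset.univ.filter (fun μ : Ghat => π μ = -1)).filter (fun μ => μ ^ 2 = g)
            = Finset.univ.filter (fun μ : Ghat => π μ = -1 ∧ μ ^ 2 = g) by
          rw [Finset.filter_filter]]
        refine Finset.sum_congr rfl ?_
        intro μ hμ
        simp only [Finset.mem_filter, Finset.mem_univ, true_and] at hμ
        rw [hμ.2]
    _ = ∑ μ ∈ Finset.univ.filter (fun μ : Ghat => π μ = -1),
          (θ (μ ^ 2) ((μ ^ 2)⁻¹ * t))⁻¹ * (lam μ / θ μ μ) * a ((μ ^ 2)⁻¹ * t) :=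
        Finset.sum_fiberwise_of_maps_to hmap _
end Glue

/-- Proposition 3.11 of the paper. For every `ς ∈ Ĝ∖G` and every
central element `a ∈ Z(ℂ^{θ⁻¹}[G])`, `p^ς(ν ⬝ a) = ν ⬝ a`. -/
theorem stmt15 {Ghat : Type*} [Group Ghat] [Fintype Ghat] [DecidableEq Ghat]
    (π : Ghat →* ℤˣ) (hπ : Function.Surjective π)
    (θ : Ghat → Ghat → ℂ)
    (hnorm : ∀ a b : Ghat, ‖θ a b‖ = 1)
    (hθe : ∀ ω : Ghat, θ ω 1 = 1) (hθe' : ∀ ω : Ghat, θ 1 ω = 1)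
    (hcoc : ∀ ω₃ ω₂ ω₁ : Ghat, θ ω₃ ω₂ * θ (ω₃ * ω₂) ω₁ =
      θ ω₂ ω₁ ^ ((π ω₃ : ℤˣ) : ℤ) * θ ω₃ (ω₂ * ω₁))
    (lam : Ghat →* ℂ) (hlam : ∀ ω : Ghat, ‖lam ω‖ = 1)
    (ς : Ghat) (hς : π ς = -1)
    (a : Ghat → ℂ) (ha : IsCentralG π θ a) :
    pmapG π θ lam ς (convG π θ (nuG π θ lam) a) = convG π θ (nuG π θ lam) a := by
  classical
  have hθ0 : ∀ u v : Ghat, θ u v ≠ 0 := by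
    intro u v h0
    have := hnorm u v
    rw [h0] at this
    simp at this
  have hlam0 : ∀ g : Ghat, lam g ≠ 0 := by
    intro g h0
    have := hlam g
    rw [h0] at this
    simp at this
  have hπcast : ((π ς : ℤˣ) : ℤ) = -1 := by rw [hς]; rfl
  have pmapL : ∀ k : Ghat, pmapG π θ lam ς (convG π θ (nuG π θ lam) a) k =
      (lam ((ς⁻¹ * k * ς)⁻¹))⁻¹ *
        ((θ (ς⁻¹ * k * ς) ((ς⁻¹ * k * ς)⁻¹))⁻¹ * (θ k ς / θ ς (ς⁻¹ * k * ς))) *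
        convG π θ (nuG π θ lam) a ((ς⁻¹ * k * ς)⁻¹) := by
    intro k
    simp only [pmapG, taurefl, hπcast, show ((-1 : ℤ) - 1)/2 = -1 from by norm_num,
      zpow_neg_one, inv_inv]
    rw [show ς * (ς⁻¹ * k * ς) * ς⁻¹ = k by group]
  funext k
  rw [pmapL k, convNu, convNu]
  by_cases hk : π k = 1
  · rw [Finset.mul_sum]
    refine Finset.sum_nbij' (i := fun μ => k * ς * μ * ς⁻¹) (j := fun ν => ς⁻¹ * k⁻¹ * ν * ς)
      ?_ ?_ ?_ ?_ ?_
    · intro μ hμ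
      simp only [Finset.mem_filter, Finset.mem_univ, true_and] at hμ ⊢
      simp [map_mul, map_inv, hk, hς, hμ]
    · intro ν hν
      simp only [Finset.mem_filter, Finset.mem_univ, true_and] at hν ⊢
      simp [map_mul, map_inv, hk, hς, hν]
    · intro μ _; group
    · intro ν _; group
    · intro μ hμmem
      have hμ : π μ = -1 := by
        simpa using (Finset.mem_filter.mp hμmem).2
      have hx1 : π ((μ ^ 2)⁻¹ * (ς⁻¹ * k * ς)⁻¹) = 1 := by
        simp [map_mul, map_inv, map_pow, hμ, hς, hk]
      have hh1 : π (ς * μ) = 1 := by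
        simp [map_mul, hς, hμ]
      have hcent := ha.2 ((μ ^ 2)⁻¹ * (ς⁻¹ * k * ς)⁻¹) (ς * μ) hx1 hh1
      rw [show ς * μ * ((μ ^ 2)⁻¹ * (ς⁻¹ * k * ς)⁻¹) * (ς * μ)⁻¹
          = ((k * ς * μ * ς⁻¹) ^ 2)⁻¹ * k by simp only [pow_two]; group] at hcent
      have hlamς : lam ς * lam ς⁻¹ = 1 := by
        rw [← map_mul, mul_inv_cancel, map_one]
      have hlam1 : lam (k * ς * μ * ς⁻¹) = lam k * lam μ := by
        rw [map_mul, map_mul, map_mul]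
        calc lam k * lam ς * lam μ * lam ς⁻¹ = lam k * lam μ * (lam ς * lam ς⁻¹) := by ring
          _ = lam k * lam μ := by rw [hlamς, mul_one]
      have hlam2 : (lam ((ς⁻¹ * k * ς)⁻¹))⁻¹ = lam k := by
        have e2 : lam ((ς⁻¹ * k * ς)⁻¹) * lam (ς⁻¹ * k * ς) = 1 := by
          rw [← map_mul, inv_mul_cancel, map_one]
        have e3 : lam (ς⁻¹ * k * ς) = lam k := by
          rw [map_mul, map_mul]
          calc lam ς⁻¹ * lam k * lam ς = lam k * (lam ς * lam ς⁻¹) := by ring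
            _ = lam k := by rw [hlamς, mul_one]
        have e4 : lam ((ς⁻¹ * k * ς)⁻¹) = (lam k)⁻¹ := by
          rw [← e3]; exact eq_inv_of_mul_eq_one_left e2
        rw [e4, inv_inv]
      have hco := core_identity π θ hθ0 hθe hθe' hcoc k ς μ hk hς hμ
      rw [hcent, hlam1, hlam2]
      linear_combination (lam k * lam μ * a ((μ ^ 2)⁻¹ * (ς⁻¹ * k * ς)⁻¹)) * hco
  · have hz : ∀ t : Ghat, π t ≠ 1 →
        (∑ μ ∈ Finset.univ.filter (fun μ : Ghat => π μ = -1),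
          (θ (μ ^ 2) ((μ ^ 2)⁻¹ * t))⁻¹ * (lam μ / θ μ μ) * a ((μ ^ 2)⁻¹ * t)) = 0 := by
      intro t ht
      refine Finset.sum_eq_zero ?_
      intro μ hμ
      have : a ((μ ^ 2)⁻¹ * t) = 0 := by
        refine ha.1 _ ?_
        have hμ' : π μ = -1 := by simpa using (Finset.mem_filter.mp hμ).2
        simp [map_mul, map_inv, map_pow, hμ', ht]
      rw [this, mul_zero]
    rw [hz k hk, hz ((ς⁻¹ * k * ς)⁻¹) (by simp [map_mul, map_inv, hς, hk]), mul_zero]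
end

section
/- Fix ς ∈ Ĝ∖G. Let (z_i)_{i ∈ I} be a finite basis of the centre Z(ℂ^{θ⁻¹}[G]) and (z^i)_{i ∈ I} a family of elements of Z(ℂ^{θ⁻¹}[G]) with ⟨z^i, z_j⟩_G = δ_{ij} for all i, j ∈ I. Then the Klein condition holds: ν·ν = Σ_{i ∈ I} p^ς(z^i)·z_i. -/
/-- The pairing `⟨a,b⟩_G = (1/|G|) Σ_{g ∈ G} θ(g⁻¹,g)⁻¹ a_{g⁻¹} b_g` on
`ℂ^{θ⁻¹}[G]`. -/
noncomputable def pairGA {Ghat : Type*} [Group Ghat] [Fintype Ghat] [DecidableEq Ghat]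
    (π : Ghat →* ℤˣ) (θ : Ghat → Ghat → ℂ) (a b : Ghat → ℂ) : ℂ :=
  (↑(Finset.univ.filter fun g : Ghat => π g = 1).card)⁻¹ *
    ∑ g ∈ Finset.univ.filter (fun g : Ghat => π g = 1),
      (θ g⁻¹ g)⁻¹ * a g⁻¹ * b g

section Aux

variable {Ghat : Type*} [Group Ghat] (π : Ghat →* ℤˣ) (θ : Ghat → Ghat → ℂ)

theorem cocE (hcoc : ∀ ω₃ ω₂ ω₁ : Ghat, θ ω₃ ω₂ * θ (ω₃ * ω₂) ω₁ =
      θ ω₂ ω₁ ^ ((π ω₃ : ℤˣ) : ℤ) * θ ω₃ (ω₂ * ω₁))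
    (a b c : Ghat) (ha : π a = 1) :
    θ a b * θ (a*b) c = θ b c * θ a (b*c) := by
  have := hcoc a b c
  rw [ha] at this
  simpa using this

theorem cocO' (hne : ∀ a b : Ghat, θ a b ≠ 0)
    (hcoc : ∀ ω₃ ω₂ ω₁ : Ghat, θ ω₃ ω₂ * θ (ω₃ * ω₂) ω₁ =
      θ ω₂ ω₁ ^ ((π ω₃ : ℤˣ) : ℤ) * θ ω₃ (ω₂ * ω₁))
    (a b c : Ghat) (ha : π a = -1) :
    θ b c * (θ a b * θ (a*b) c) = θ a (b*c) := by
  have := hcoc a b c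
  rw [ha] at this
  simp only [Units.val_neg, Units.val_one, zpow_neg, zpow_one] at this
  rw [this, ← mul_assoc, mul_inv_cancel₀ (hne b c), one_mul]

/-- cleared form of the centrality identity. -/
theorem L2' (hθe' : ∀ ω : Ghat, θ 1 ω = 1)
    (hcoc : ∀ ω₃ ω₂ ω₁ : Ghat, θ ω₃ ω₂ * θ (ω₃ * ω₂) ω₁ =
      θ ω₂ ω₁ ^ ((π ω₃ : ℤˣ) : ℤ) * θ ω₃ (ω₂ * ω₁))
    (hne : ∀ a b : Ghat, θ a b ≠ 0)
    (t h s : Ghat) (ht : π t = 1) (hh : π h = 1) (hs : π s = 1) :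
    θ (t*(h*s⁻¹*h⁻¹)*t⁻¹)⁻¹ (t*(h*s⁻¹*h⁻¹)*t⁻¹) * θ (t*h) s * θ t (h*s⁻¹*h⁻¹)
        * θ (h*s⁻¹*h⁻¹)⁻¹ h =
      θ (t*(h*s⁻¹*h⁻¹)*t⁻¹) t * θ (h*s⁻¹*h⁻¹)⁻¹ (h*s⁻¹*h⁻¹) * θ h s
        * θ (t*(h*s⁻¹*h⁻¹)*t⁻¹)⁻¹ (t*h) := by
  have hvi : π (h*s⁻¹*h⁻¹)⁻¹ = 1 := by simp [map_mul, map_inv, hh, hs]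
  have hz : π (t*(h*s⁻¹*h⁻¹)*t⁻¹) = 1 := by simp [map_mul, map_inv, ht, hh, hs]
  have hzi : π (t*(h*s⁻¹*h⁻¹)*t⁻¹)⁻¹ = 1 := by simp [map_mul, map_inv, ht, hh, hs]
  have i1 := cocE π θ hcoc (t*(h*s⁻¹*h⁻¹)*t⁻¹)⁻¹ (t*(h*s⁻¹*h⁻¹)*t⁻¹) (t*(h*s)) hzi
  rw [show (t*(h*s⁻¹*h⁻¹)*t⁻¹)⁻¹*(t*(h*s⁻¹*h⁻¹)*t⁻¹) = (1:Ghat) by group,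
      show (t*(h*s⁻¹*h⁻¹)*t⁻¹)*(t*(h*s)) = t*h by group, hθe', mul_one] at i1
  have i2 := cocE π θ hcoc (t*(h*s⁻¹*h⁻¹)*t⁻¹) t (h*s) hz
  rw [show (t*(h*s⁻¹*h⁻¹)*t⁻¹)*t = t*(h*s⁻¹*h⁻¹) by group] at i2
  have i3 := cocE π θ hcoc (h*s⁻¹*h⁻¹)⁻¹ (h*s⁻¹*h⁻¹) (h*s) hvi
  rw [show (h*s⁻¹*h⁻¹)⁻¹*(h*s⁻¹*h⁻¹) = (1:Ghat) by group,
      show (h*s⁻¹*h⁻¹)*(h*s) = h by group, hθe', mul_one] at i3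
  have i4 := cocE π θ hcoc t (h*s⁻¹*h⁻¹) (h*s) ht
  rw [show (h*s⁻¹*h⁻¹)*(h*s) = h by group] at i4
  have i5 := cocE π θ hcoc t h s ht
  have hMN :
      ((θ (t*(h*s⁻¹*h⁻¹)*t⁻¹) t * θ (t*(h*s⁻¹*h⁻¹)) (h*s)) *
        (θ (h*s⁻¹*h⁻¹)⁻¹ (h*s⁻¹*h⁻¹))) *
      ((θ (t*(h*s⁻¹*h⁻¹)*t⁻¹) (t*(h*s)) * θ (t*(h*s⁻¹*h⁻¹)*t⁻¹)⁻¹ (t*h)) *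
       (θ (h*s⁻¹*h⁻¹) (h*s) * θ t h) * (θ h s * θ t (h*s))) =
      ((θ (t*(h*s⁻¹*h⁻¹)*t⁻¹)⁻¹ (t*(h*s⁻¹*h⁻¹)*t⁻¹)) *
       (θ t (h*s⁻¹*h⁻¹) * θ (t*(h*s⁻¹*h⁻¹)) (h*s)) * (θ t h * θ (t*h) s)) *
      ((θ t (h*s) * θ (t*(h*s⁻¹*h⁻¹)*t⁻¹) (t*(h*s))) *
       (θ (h*s⁻¹*h⁻¹) (h*s) * θ (h*s⁻¹*h⁻¹)⁻¹ h)) := by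
    rw [i1, i2, i3, i4, i5]; ring
  have hprod : (θ (t*(h*s⁻¹*h⁻¹)*t⁻¹) (t*(h*s)) * θ (t*(h*s⁻¹*h⁻¹)) (h*s) *
      θ (h*s⁻¹*h⁻¹) (h*s) * θ t h * θ t (h*s)) ≠ 0 := by
    repeat' apply mul_ne_zero
    all_goals apply hne
  refine mul_right_cancel₀ hprod ?_
  linear_combination -hMN

/-- cleared form of the key identity matching the two Klein sums. -/
theorem starId (hne : ∀ a b : Ghat, θ a b ≠ 0)
    (hθe : ∀ ω : Ghat, θ ω 1 = 1)
    (hcoc : ∀ ω₃ ω₂ ω₁ : Ghat, θ ω₃ ω₂ * θ (ω₃ * ω₂) ω₁ =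
      θ ω₂ ω₁ ^ ((π ω₃ : ℤˣ) : ℤ) * θ ω₃ (ω₂ * ω₁))
    (m q c : Ghat) (hm : π m = -1) (hq : π q = -1) (hc : π c = -1) :
    θ (q⁻¹*(q⁻¹*(m⁻¹*q))) (q⁻¹*(m*(q*q))) * θ (q⁻¹*c) (c⁻¹*(q⁻¹*(m⁻¹*c))) * θ (m*q) c
        * θ m m * θ q q * θ (m*m) (q*q) =
      θ (m*q) (q⁻¹*(m*(q*q))) * θ (c⁻¹*(m*(q*c))) (c⁻¹*(q⁻¹*(m⁻¹*c))) * θ c (c⁻¹*(m*(q*c)))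
        * θ (q⁻¹*(q⁻¹*(m⁻¹*q))) (q⁻¹*c) := by
  have s1 := cocO' π θ hne hcoc c (c⁻¹*(m*(q*c))) (c⁻¹*(q⁻¹*(m⁻¹*c)))
    (by simp [map_mul, map_inv, hm, hq, hc])
  rw [show c*(c⁻¹*(m*(q*c))) = (m*(q*c)) by group,
      show (c⁻¹*(m*(q*c)))*(c⁻¹*(q⁻¹*(m⁻¹*c))) = 1 by group, hθe] at s1
  have s2 := cocO' π θ hne hcoc (m*(q*q)) (q⁻¹*c) (c⁻¹*(q⁻¹*(m⁻¹*c)))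
    (by simp [map_mul, map_inv, hm, hq, hc])
  rw [show (m*(q*q))*(q⁻¹*c) = (m*(q*c)) by group,
      show (q⁻¹*c)*(c⁻¹*(q⁻¹*(m⁻¹*c))) = (q⁻¹*(q⁻¹*(m⁻¹*c))) by group] at s2
  have s3 := cocO' π θ hne hcoc (m*(q*q)) (q⁻¹*(q⁻¹*(m⁻¹*q))) (q⁻¹*c)
    (by simp [map_mul, map_inv, hm, hq, hc])
  rw [show (m*(q*q))*(q⁻¹*(q⁻¹*(m⁻¹*q))) = q by group,
      show (q⁻¹*(q⁻¹*(m⁻¹*q)))*(q⁻¹*c) = (q⁻¹*(q⁻¹*(m⁻¹*c))) by group] at s3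
  have s4 := cocO' π θ hne hcoc (m*(q*q)) (q⁻¹*(q⁻¹*(m⁻¹*q))) (q⁻¹*(m*(q*q)))
    (by simp [map_mul, map_inv, hm, hq, hc])
  rw [show (m*(q*q))*(q⁻¹*(q⁻¹*(m⁻¹*q))) = q by group,
      show (q⁻¹*(q⁻¹*(m⁻¹*q)))*(q⁻¹*(m*(q*q))) = 1 by group, hθe] at s4
  have s5 := cocO' π θ hne hcoc m q (q⁻¹*(m*(q*q)))
    (by simp [map_mul, map_inv, hm, hq, hc])
  rw [show q*(q⁻¹*(m*(q*q))) = (m*(q*q)) by group] at s5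
  have s6 := cocE π θ hcoc (m*q) q (q⁻¹*c)
    (by simp [map_mul, map_inv, hm, hq, hc])
  rw [show (m*q)*q = (m*(q*q)) by group, show q*(q⁻¹*c) = c by group] at s6
  have s7 := cocO' π θ hne hcoc m m (q*q)
    (by simp [map_mul, map_inv, hm, hq, hc])
  have s8 := cocO' π θ hne hcoc m q q
    (by simp [map_mul, map_inv, hm, hq, hc])
  have hMN :
    (θ (c⁻¹*(m*(q*c))) (c⁻¹*(q⁻¹*(m⁻¹*c))) * (θ c (c⁻¹*(m*(q*c))) * θ (m*(q*c)) (c⁻¹*(q⁻¹*(m⁻¹*c))))) *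
    (θ (q⁻¹*(q⁻¹*(m⁻¹*q))) (q⁻¹*c) * (θ (m*(q*q)) (q⁻¹*(q⁻¹*(m⁻¹*q))) * θ q (q⁻¹*c))) *
    (θ q (q⁻¹*(m*(q*q))) * (θ m q * θ (m*q) (q⁻¹*(m*(q*q))))) *
    (θ (m*q) q * θ (m*(q*q)) (q⁻¹*c)) *
    (θ (m*(q*q)) (q⁻¹*(q⁻¹*(m⁻¹*c)))) * (θ m (m*(q*q))) * (θ m (q*q)) =
    (θ (q⁻¹*c) (c⁻¹*(q⁻¹*(m⁻¹*c))) * (θ (m*(q*q)) (q⁻¹*c) * θ (m*(q*c)) (c⁻¹*(q⁻¹*(m⁻¹*c))))) *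
    (θ (q⁻¹*(q⁻¹*(m⁻¹*q))) (q⁻¹*(m*(q*q))) * (θ (m*(q*q)) (q⁻¹*(q⁻¹*(m⁻¹*q))) * θ q (q⁻¹*(m*(q*q))))) *
    (θ m (q*q) * (θ m m * θ (m*m) (q*q))) *
    (θ q q * (θ m q * θ (m*q) q)) *
    (θ (m*(q*q)) (q⁻¹*(q⁻¹*(m⁻¹*c)))) * (θ m (m*(q*q))) *
    (θ q (q⁻¹*c) * θ (m*q) c) := by
    rw [s1, s2, s3, s4, s5, s6, s7, s8]
    ring
  have hX : ((θ (c⁻¹*(m*(q*c))) (c⁻¹*(q⁻¹*(m⁻¹*c))) * (θ c (c⁻¹*(m*(q*c))) * θ (m*(q*c)) (c⁻¹*(q⁻¹*(m⁻¹*c))))) *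
    (θ (q⁻¹*(q⁻¹*(m⁻¹*q))) (q⁻¹*c) * (θ (m*(q*q)) (q⁻¹*(q⁻¹*(m⁻¹*q))) * θ q (q⁻¹*c))) *
    (θ q (q⁻¹*(m*(q*q))) * (θ m q * θ (m*q) (q⁻¹*(m*(q*q))))) *
    (θ (m*q) q * θ (m*(q*q)) (q⁻¹*c)) *
    (θ (m*(q*q)) (q⁻¹*(q⁻¹*(m⁻¹*c)))) * (θ m (m*(q*q))) * (θ m (q*q))) ≠ 0 := by
    repeat' apply mul_ne_zero
    all_goals apply hne
  refine mul_right_cancel₀ hX ?_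
  linear_combination (-(θ (m*q) (q⁻¹*(m*(q*q))) * θ (c⁻¹*(m*(q*c))) (c⁻¹*(q⁻¹*(m⁻¹*c))) * θ c (c⁻¹*(m*(q*c)))
        * θ (q⁻¹*(q⁻¹*(m⁻¹*q))) (q⁻¹*c))) * hMN

end Aux

/-- the auxiliary central element `w_g`. -/
noncomputable def wfun {Ghat : Type*} [Group Ghat] [Fintype Ghat] [DecidableEq Ghat]
    (π : Ghat →* ℤˣ) (θ : Ghat → Ghat → ℂ) (lam : Ghat →* ℂ) (ς g : Ghat) : Ghat → ℂ :=
  fun v =>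
    (lam g * ((θ (ς⁻¹*(g⁻¹*ς))⁻¹ (ς⁻¹*(g⁻¹*ς)))⁻¹ * (θ g ς / θ ς (ς⁻¹*(g⁻¹*ς))⁻¹))) *
      (θ v⁻¹ v * ∑ x ∈ Finset.univ.filter
          (fun x : Ghat => π x = 1 ∧ x*(ς⁻¹*(g⁻¹*ς))⁻¹*x⁻¹ = v),
        θ x (ς⁻¹*(g⁻¹*ς)) / θ v⁻¹ x)

section Test
variable {Ghat : Type*} [Group Ghat] [Fintype Ghat] [DecidableEq Ghat]
  (π : Ghat →* ℤˣ) (θ : Ghat → Ghat → ℂ) (lam : Ghat →* ℂ)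

theorem termhelp (A1 A12 A3 A4 A10 A7 A13 A9 : ℂ) (h3 : A3 ≠ 0) (h10 : A10 ≠ 0)
    (h9 : A9 ≠ 0) (H : A1*A12*A10*A9 = A4*A7*A13*A3) :
    A1 * (A12/A3) = A4/A10 * (A7*(A13/A9)) := by
  field_simp
  linear_combination H

theorem wfun_central (hθe' : ∀ ω : Ghat, θ 1 ω = 1)
    (hcoc : ∀ ω₃ ω₂ ω₁ : Ghat, θ ω₃ ω₂ * θ (ω₃ * ω₂) ω₁ =
      θ ω₂ ω₁ ^ ((π ω₃ : ℤˣ) : ℤ) * θ ω₃ (ω₂ * ω₁))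
    (hne : ∀ a b : Ghat, θ a b ≠ 0)
    (ς g : Ghat) (hς : π ς = -1) (hg : π g = 1) :
    IsCentralG π θ (wfun π θ lam ς g) := by
  have hS : π (ς⁻¹*(g⁻¹*ς)) = 1 := by simp [map_mul, map_inv, hς, hg]
  constructor
  · intro v hv
    simp only [wfun]
    have hemp : Finset.univ.filter
        (fun x : Ghat => π x = 1 ∧ x*(ς⁻¹*(g⁻¹*ς))⁻¹*x⁻¹ = v) = ∅ := by
      rw [Finset.filter_eq_empty_iff]
      rintro x - ⟨hx1, hx2⟩
      apply hv
      rw [← hx2]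
      simp [map_mul, map_inv, hx1, hς, hg]
    rw [hemp, Finset.sum_empty, mul_zero, mul_zero]
  · intro v t hv ht
    simp only [wfun]
    have hre : ∑ x ∈ Finset.univ.filter
          (fun x : Ghat => π x = 1 ∧ x*(ς⁻¹*(g⁻¹*ς))⁻¹*x⁻¹ = t*v*t⁻¹),
          θ x (ς⁻¹*(g⁻¹*ς)) / θ (t*v*t⁻¹)⁻¹ x
        = ∑ x ∈ Finset.univ.filter
          (fun x : Ghat => π x = 1 ∧ x*(ς⁻¹*(g⁻¹*ς))⁻¹*x⁻¹ = v),
          θ (t*x) (ς⁻¹*(g⁻¹*ς)) / θ (t*v*t⁻¹)⁻¹ (t*x) := by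
      apply Finset.sum_nbij' (fun x => t⁻¹*x) (fun x => t*x)
      · intro x hx
        simp only [Finset.mem_filter, Finset.mem_univ, true_and] at hx ⊢
        obtain ⟨hx1, hx2⟩ := hx
        refine ⟨by simp [map_mul, map_inv, hx1, ht], ?_⟩
        have := hx2
        -- (t⁻¹x) S⁻¹ (t⁻¹x)⁻¹ = t⁻¹ (x S⁻¹ x⁻¹) t = t⁻¹ (t v t⁻¹) t = v
        rw [show t⁻¹*x*(ς⁻¹*(g⁻¹*ς))⁻¹*(t⁻¹*x)⁻¹ = t⁻¹*(x*(ς⁻¹*(g⁻¹*ς))⁻¹*x⁻¹)*t by group,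
            hx2]
        group
      · intro x hx
        simp only [Finset.mem_filter, Finset.mem_univ, true_and] at hx ⊢
        obtain ⟨hx1, hx2⟩ := hx
        refine ⟨by simp [map_mul, map_inv, hx1, ht], ?_⟩
        rw [show t*x*(ς⁻¹*(g⁻¹*ς))⁻¹*(t*x)⁻¹ = t*(x*(ς⁻¹*(g⁻¹*ς))⁻¹*x⁻¹)*t⁻¹ by group,
            hx2]
      · intro x hx; group
      · intro x hx; group
      · intro x hx
        rw [show t*(t⁻¹*x) = x by group]
    rw [hre]
    have key : θ (t*v*t⁻¹)⁻¹ (t*v*t⁻¹) * ∑ x ∈ Finset.univ.filter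
          (fun x : Ghat => π x = 1 ∧ x*(ς⁻¹*(g⁻¹*ς))⁻¹*x⁻¹ = v),
          θ (t*x) (ς⁻¹*(g⁻¹*ς)) / θ (t*v*t⁻¹)⁻¹ (t*x)
        = (θ (t*v*t⁻¹) t / θ t v) * (θ v⁻¹ v * ∑ x ∈ Finset.univ.filter
          (fun x : Ghat => π x = 1 ∧ x*(ς⁻¹*(g⁻¹*ς))⁻¹*x⁻¹ = v),
          θ x (ς⁻¹*(g⁻¹*ς)) / θ v⁻¹ x) := by
      simp only [Finset.mul_sum]
      apply Finset.sum_congr rfl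
      intro x hx
      simp only [Finset.mem_filter, Finset.mem_univ, true_and] at hx
      obtain ⟨hx1, hx2⟩ := hx
      rw [← hx2]
      exact termhelp _ _ _ _ _ _ _ _ (hne _ _) (hne _ _) (hne _ _)
        (L2' π θ hθe' hcoc hne t x (ς⁻¹*(g⁻¹*ς)) ht hx1 hS)
    calc _ = (lam g * ((θ (ς⁻¹*(g⁻¹*ς))⁻¹ (ς⁻¹*(g⁻¹*ς)))⁻¹ * (θ g ς / θ ς (ς⁻¹*(g⁻¹*ς))⁻¹))) *
        (θ (t*v*t⁻¹)⁻¹ (t*v*t⁻¹) * ∑ x ∈ Finset.univ.filter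
          (fun x : Ghat => π x = 1 ∧ x*(ς⁻¹*(g⁻¹*ς))⁻¹*x⁻¹ = v),
          θ (t*x) (ς⁻¹*(g⁻¹*ς)) / θ (t*v*t⁻¹)⁻¹ (t*x)) := by rfl
      _ = _ := by rw [key]; ring
end Test


theorem termhelp2 (d e f A K' : ℂ) (hd : d ≠ 0) (he : e ≠ 0) (hf : f ≠ 0) :
    d⁻¹ * ((e/f)*A) * (K' * (d * (f/e))) = K' * A := by
  field_simp

section P3
variable {Ghat : Type*} [Group Ghat] [Fintype Ghat] [DecidableEq Ghat]
  (π : Ghat →* ℤˣ) (θ : Ghat → Ghat → ℂ) (lam : Ghat →* ℂ)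

omit [Fintype Ghat] [DecidableEq Ghat] in
theorem lam_conj (x y : Ghat) : lam (x⁻¹*(y*x)) = lam y := by
  have h1 : lam x⁻¹ * lam x = 1 := by rw [← map_mul]; simp
  calc lam (x⁻¹*(y*x)) = lam x⁻¹ * (lam y * lam x) := by rw [← map_mul, ← map_mul]
    _ = lam y * (lam x⁻¹ * lam x) := by ring
    _ = lam y := by rw [h1, mul_one]

omit [Fintype Ghat] [DecidableEq Ghat] in
theorem lam_inv_inv (g : Ghat) : (lam g⁻¹)⁻¹ = lam g :=
  inv_eq_of_mul_eq_one_right (by rw [← map_mul]; simp)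

theorem pair_wfun
    (hcoc : ∀ ω₃ ω₂ ω₁ : Ghat, θ ω₃ ω₂ * θ (ω₃ * ω₂) ω₁ =
      θ ω₂ ω₁ ^ ((π ω₃ : ℤˣ) : ℤ) * θ ω₃ (ω₂ * ω₁))
    (hne : ∀ a b : Ghat, θ a b ≠ 0)
    (ς g : Ghat) (hς : π ς = -1) (hg : π g = 1)
    (a : Ghat → ℂ) (ha : IsCentralG π θ a) :
    pairGA π θ a (wfun π θ lam ς g) = pmapG π θ lam ς a g := by
  have hS : π (ς⁻¹*(g⁻¹*ς)) = 1 := by simp [map_mul, map_inv, hς, hg]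
  simp only [pairGA, wfun]
  have hmap : ∀ x ∈ Finset.univ.filter (fun x : Ghat => π x = 1),
      x*(ς⁻¹*(g⁻¹*ς))⁻¹*x⁻¹ ∈ Finset.univ.filter (fun v : Ghat => π v = 1) := by
    intro x hx
    simp only [Finset.mem_filter, Finset.mem_univ, true_and] at hx ⊢
    simp [map_mul, map_inv, hx, hς, hg]
  have h1 : ∑ v ∈ Finset.univ.filter (fun v : Ghat => π v = 1),
      (θ v⁻¹ v)⁻¹ * a v⁻¹ *
        ((lam g * ((θ (ς⁻¹*(g⁻¹*ς))⁻¹ (ς⁻¹*(g⁻¹*ς)))⁻¹ * (θ g ς / θ ς (ς⁻¹*(g⁻¹*ς))⁻¹))) *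
          (θ v⁻¹ v * ∑ x ∈ Finset.univ.filter
            (fun x : Ghat => π x = 1 ∧ x*(ς⁻¹*(g⁻¹*ς))⁻¹*x⁻¹ = v),
            θ x (ς⁻¹*(g⁻¹*ς)) / θ v⁻¹ x))
      = ∑ x ∈ Finset.univ.filter (fun x : Ghat => π x = 1),
        (lam g * ((θ (ς⁻¹*(g⁻¹*ς))⁻¹ (ς⁻¹*(g⁻¹*ς)))⁻¹ * (θ g ς / θ ς (ς⁻¹*(g⁻¹*ς))⁻¹))) *
          a (ς⁻¹*(g⁻¹*ς)) := by
    rw [← Finset.sum_fiberwise_of_maps_to hmap (fun _ =>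
        (lam g * ((θ (ς⁻¹*(g⁻¹*ς))⁻¹ (ς⁻¹*(g⁻¹*ς)))⁻¹ * (θ g ς / θ ς (ς⁻¹*(g⁻¹*ς))⁻¹))) *
          a (ς⁻¹*(g⁻¹*ς)))]
    apply Finset.sum_congr rfl
    intro v hv
    simp only [Finset.mem_filter, Finset.mem_univ, true_and] at hv
    rw [Finset.mul_sum, Finset.mul_sum, Finset.mul_sum, ← Finset.filter_filter]
    apply Finset.sum_congr rfl
    intro x hx
    simp only [Finset.mem_filter, Finset.mem_univ, true_and] at hx
    obtain ⟨hx1, hx2⟩ := hx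
    rw [← hx2]
    rw [show (x*(ς⁻¹*(g⁻¹*ς))⁻¹*x⁻¹)⁻¹ = x*(ς⁻¹*(g⁻¹*ς))*x⁻¹ by group]
    rw [ha.2 (ς⁻¹*(g⁻¹*ς)) x hS hx1]
    exact termhelp2 _ _ _ _ _ (hne _ _) (hne _ _) (hne _ _)
  rw [h1, Finset.sum_const, nsmul_eq_mul]
  have hcard : ((Finset.univ.filter (fun v : Ghat => π v = 1)).card : ℂ) ≠ 0 := by
    have h0 : (1:Ghat) ∈ Finset.univ.filter (fun v : Ghat => π v = 1) := by simp
    have hpos := Finset.card_pos.2 ⟨1, h0⟩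
    exact_mod_cast Nat.cast_ne_zero.2 hpos.ne'
  rw [← mul_assoc, inv_mul_cancel₀ hcard, one_mul]
  -- now unfold pmapG
  simp only [pmapG, taurefl, hς, Units.val_neg, Units.val_one]
  rw [show ((-1 : ℤ) - 1)/2 = -1 by decide]
  simp only [zpow_neg, zpow_one]
  rw [show ((ς⁻¹*g*ς)⁻¹ : Ghat) = ς⁻¹*(g⁻¹*ς) by group,
      show ς*(ς⁻¹*(g⁻¹*ς))⁻¹*ς⁻¹ = g by group]
  have hlg : (lam (ς⁻¹*(g⁻¹*ς)))⁻¹ = lam g := by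
    rw [lam_conj lam ς g⁻¹, lam_inv_inv]
  rw [hlg]
end P3



section P4
variable {Ghat : Type*} [Group Ghat] [Fintype Ghat] [DecidableEq Ghat]
  (π : Ghat →* ℤˣ) (θ : Ghat → Ghat → ℂ)
  {I : Type*} [Fintype I] [DecidableEq I]

theorem pairGA_sum_smul (a : Ghat → ℂ) (co : I → ℂ) (T : I → Ghat → ℂ) :
    pairGA π θ a (∑ i, co i • T i) = ∑ i, co i * pairGA π θ a (T i) := by
  simp only [pairGA, Finset.sum_apply, Pi.smul_apply, smul_eq_mul, Finset.mul_sum]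
  rw [Finset.sum_comm]
  apply Finset.sum_congr rfl
  intro i _
  apply Finset.sum_congr rfl
  intro g _
  ring

theorem reproduce (z zd : I → (Ghat → ℂ))
    (hzspan : ∀ a : Ghat → ℂ, IsCentralG π θ a → a ∈ Submodule.span ℂ (Set.range z))
    (hdual : ∀ i j, pairGA π θ (zd i) (z j) = if i = j then 1 else 0)
    (b : Ghat → ℂ) (hb : IsCentralG π θ b) (v : Ghat) :
    b v = ∑ i, pairGA π θ (zd i) b * z i v := by
  obtain ⟨co, hco⟩ := Submodule.mem_span_range_iff_exists_fun ℂ |>.mp (hzspan b hb)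
  have hpair : ∀ j, pairGA π θ (zd j) b = co j := by
    intro j
    rw [← hco, pairGA_sum_smul]
    simp [hdual]
  calc b v = (∑ i, co i • z i) v := by rw [hco]
    _ = ∑ i, co i * z i v := by simp [Finset.sum_apply]
    _ = ∑ i, pairGA π θ (zd i) b * z i v := by
        apply Finset.sum_congr rfl
        intro i _
        rw [hpair i]
end P4


theorem term_div (B1 B3 B5 B8 B10 B12 B16 B17 B19 B20 L1 L2 : ℂ)
    (n1 : B1 ≠ 0) (n3 : B3 ≠ 0) (n8 : B8 ≠ 0) (n12 : B12 ≠ 0)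
    (n17 : B17 ≠ 0) (n19 : B19 ≠ 0) (n20 : B20 ≠ 0)
    (H : B10*B5*B16*B19*B20*B17 = B12*B1*B3*B8) :
    (B12)⁻¹ * ((L1*L2) * ((B1)⁻¹ * (B16/B3)) * (B10 * (B5/B8)))
      = (B17)⁻¹ * (L1/B19) * (L2/B20) := by
  field_simp
  linear_combination L1*L2*H

section P5
variable {Ghat : Type*} [Group Ghat] [Fintype Ghat] [DecidableEq Ghat]
  (π : Ghat →* ℤˣ) (θ : Ghat → Ghat → ℂ) (lam : Ghat →* ℂ)

theorem dist2 {α β : Type*} (s : Finset α) (t : Finset β) (A : ℂ) (f : α → ℂ) (h : β → ℂ) :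
    (A * ∑ x ∈ s, f x) * ∑ y ∈ t, h y = ∑ x ∈ s, ∑ y ∈ t, A * f x * h y := by
  rw [Finset.mul_sum s f A, Finset.sum_mul_sum]

theorem final_sum (hθe : ∀ ω : Ghat, θ ω 1 = 1) (hθe' : ∀ ω : Ghat, θ 1 ω = 1)
    (hcoc : ∀ ω₃ ω₂ ω₁ : Ghat, θ ω₃ ω₂ * θ (ω₃ * ω₂) ω₁ =
      θ ω₂ ω₁ ^ ((π ω₃ : ℤˣ) : ℤ) * θ ω₃ (ω₂ * ω₁))
    (hne : ∀ a b : Ghat, θ a b ≠ 0)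
    (ς : Ghat) (hς : π ς = -1) (k : Ghat) :
    ∑ g ∈ Finset.univ.filter (fun g : Ghat => π g = 1),
      (θ g (g⁻¹*k))⁻¹ * nuG π θ lam g * nuG π θ lam (g⁻¹*k)
    = ∑ g ∈ Finset.univ.filter (fun g : Ghat => π g = 1),
      (θ g (g⁻¹*k))⁻¹ * wfun π θ lam ς g (g⁻¹*k) := by
  have hL : ∑ μ ∈ Finset.univ.filter (fun μ : Ghat => π μ = -1),
        ∑ σ ∈ Finset.univ.filter (fun σ : Ghat => π σ = -1 ∧ σ^2 = (μ^2)⁻¹*k),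
          (θ (μ^2) ((μ^2)⁻¹*k))⁻¹ * (lam μ / θ μ μ) * (lam σ / θ σ σ)
      = ∑ g ∈ Finset.univ.filter (fun g : Ghat => π g = 1),
      (θ g (g⁻¹*k))⁻¹ * nuG π θ lam g * nuG π θ lam (g⁻¹*k) := by
    rw [← Finset.sum_fiberwise_of_maps_to (g := fun μ : Ghat => μ^2)
        (t := Finset.univ.filter (fun g : Ghat => π g = 1))
        (fun μ hμ => by
          simp only [Finset.mem_filter, Finset.mem_univ, true_and] at hμ ⊢
          simp [map_pow, hμ])]
    apply Finset.sum_congr rfl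
    intro g hg
    simp only [Finset.mem_filter, Finset.mem_univ, true_and] at hg
    simp only [nuG]
    rw [dist2]
    refine Finset.sum_congr (by rw [Finset.filter_filter]) ?_
    intro μ hμ
    simp only [Finset.mem_filter, Finset.mem_univ, true_and] at hμ
    obtain ⟨hμ1, hμ2⟩ := hμ
    rw [← hμ2]
  have hR : ∑ g ∈ Finset.univ.filter (fun g : Ghat => π g = 1),
      (θ g (g⁻¹*k))⁻¹ * wfun π θ lam ς g (g⁻¹*k)
      = ∑ g ∈ Finset.univ.filter (fun g : Ghat => π g = 1),
        ∑ x ∈ Finset.univ.filter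
          (fun x : Ghat => π x = 1 ∧ x*(ς⁻¹*(g⁻¹*ς))⁻¹*x⁻¹ = g⁻¹*k),
          (θ g (g⁻¹*k))⁻¹ * ((lam g * ((θ (ς⁻¹*(g⁻¹*ς))⁻¹ (ς⁻¹*(g⁻¹*ς)))⁻¹ *
              (θ g ς / θ ς (ς⁻¹*(g⁻¹*ς))⁻¹))) *
            (θ (g⁻¹*k)⁻¹ (g⁻¹*k) * (θ x (ς⁻¹*(g⁻¹*ς)) / θ (g⁻¹*k)⁻¹ x))) := by
    apply Finset.sum_congr rfl
    intro g hg
    simp only [wfun]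
    rw [Finset.mul_sum, Finset.mul_sum, Finset.mul_sum]
  rw [← hL, hR, Finset.sum_sigma', Finset.sum_sigma']
  apply Finset.sum_nbij' (fun p => ⟨p.1*p.2, p.2⁻¹*ς⟩)
    (fun p => ⟨p.1*(p.2*ς⁻¹), ς*p.2⁻¹⟩)
  · rintro ⟨μ, σ⟩ hp
    simp only [Finset.mem_sigma, Finset.mem_filter, Finset.mem_univ, true_and] at hp ⊢
    obtain ⟨h1, h2, h3⟩ := hp
    have hk : k = μ^2*σ^2 := by rw [h3]; group
    subst hk
    refine ⟨by simp [map_mul, h1, h2], by simp [map_mul, map_inv, h2, hς], ?_⟩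
    simp only [pow_two]
    group
  · rintro ⟨g, x⟩ hp
    simp only [Finset.mem_sigma, Finset.mem_filter, Finset.mem_univ, true_and] at hp ⊢
    obtain ⟨h1, h2, h3⟩ := hp
    have hk : k = g*(x*(ς⁻¹*(g*ς))*x⁻¹) := by
      rw [show x*(ς⁻¹*(g*ς))*x⁻¹ = x*(ς⁻¹*(g⁻¹*ς))⁻¹*x⁻¹ by group, h3]; group
    refine ⟨by simp [map_mul, map_inv, h1, h2, hς], by simp [map_mul, map_inv, h1, h2, hς], ?_⟩
    rw [hk]
    simp only [pow_two]
    group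
  · rintro ⟨μ, σ⟩ hp
    exact Sigma.ext (by group) (heq_of_eq (by group))
  · rintro ⟨g, x⟩ hp
    exact Sigma.ext (by group) (heq_of_eq (by group))
  · rintro ⟨μ, σ⟩ hp
    simp only [Finset.mem_sigma, Finset.mem_filter, Finset.mem_univ, true_and] at hp
    obtain ⟨h1, h2, h3⟩ := hp
    have hk : k = μ^2*σ^2 := by rw [h3]; group
    subst hk
    dsimp only
    rw [show ((μ*σ)⁻¹*(μ^2*σ^2) : Ghat) = σ⁻¹*(μ*(σ*σ)) by (simp only [pow_two]; group),
        show ((σ⁻¹*(μ*(σ*σ)))⁻¹ : Ghat) = σ⁻¹*(σ⁻¹*(μ⁻¹*σ)) by group,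
        show (ς⁻¹*((μ*σ)⁻¹*ς) : Ghat) = ς⁻¹*(σ⁻¹*(μ⁻¹*ς)) by group,
        show ((ς⁻¹*(σ⁻¹*(μ⁻¹*ς)))⁻¹ : Ghat) = ς⁻¹*(μ*(σ*ς)) by group,
        show ((μ^2)⁻¹*(μ^2*σ^2) : Ghat) = σ*σ by (simp only [pow_two]; group),
        show ((μ:Ghat)^2) = μ*μ from pow_two μ,
        map_mul]
    exact (term_div (θ (ς⁻¹*(μ*(σ*ς))) (ς⁻¹*(σ⁻¹*(μ⁻¹*ς)))) (θ ς (ς⁻¹*(μ*(σ*ς))))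
      (θ (σ⁻¹*ς) (ς⁻¹*(σ⁻¹*(μ⁻¹*ς)))) (θ (σ⁻¹*(σ⁻¹*(μ⁻¹*σ))) (σ⁻¹*ς))
      (θ (σ⁻¹*(σ⁻¹*(μ⁻¹*σ))) (σ⁻¹*(μ*(σ*σ)))) (θ (μ*σ) (σ⁻¹*(μ*(σ*σ))))
      (θ (μ*σ) ς) (θ (μ*μ) (σ*σ)) (θ μ μ) (θ σ σ) (lam μ) (lam σ)
      (hne _ _) (hne _ _) (hne _ _) (hne _ _) (hne _ _) (hne _ _) (hne _ _)
      (starId π θ hne hθe hcoc μ σ ς h1 h2 hς)).symm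
end P5

/-- the Klein condition, Proposition 3.12 of the paper. For a basis
`(z_i)` of the centre of `ℂ^{θ⁻¹}[G]` with `⟨,⟩_G`-dual family `(z^i)`, one has
`ν² = Σ_i p^ς(z^i) ⬝ z_i`. -/
theorem stmt16 {Ghat : Type*} [Group Ghat] [Fintype Ghat] [DecidableEq Ghat]
    (π : Ghat →* ℤˣ) (hπ : Function.Surjective π)
    (θ : Ghat → Ghat → ℂ)
    (hnorm : ∀ a b : Ghat, ‖θ a b‖ = 1)
    (hθe : ∀ ω : Ghat, θ ω 1 = 1) (hθe' : ∀ ω : Ghat, θ 1 ω = 1)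
    (hcoc : ∀ ω₃ ω₂ ω₁ : Ghat, θ ω₃ ω₂ * θ (ω₃ * ω₂) ω₁ =
      θ ω₂ ω₁ ^ ((π ω₃ : ℤˣ) : ℤ) * θ ω₃ (ω₂ * ω₁))
    (lam : Ghat →* ℂ) (hlam : ∀ ω : Ghat, ‖lam ω‖ = 1)
    (ς : Ghat) (hς : π ς = -1)
    {I : Type*} [Fintype I] [DecidableEq I]
    -- (z_i) is a basis of the centre ...
    (z : I → (Ghat → ℂ)) (hz : ∀ i, IsCentralG π θ (z i))
    (hzli : LinearIndependent ℂ z)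
    (hzspan : ∀ a : Ghat → ℂ, IsCentralG π θ a →
      a ∈ Submodule.span ℂ (Set.range z))
    -- ... and (z^i) a family in the centre dual to it with respect to ⟨,⟩_G
    (zd : I → (Ghat → ℂ)) (hzd : ∀ i, IsCentralG π θ (zd i))
    (hdual : ∀ i j, pairGA π θ (zd i) (z j) = if i = j then 1 else 0) :
    convG π θ (nuG π θ lam) (nuG π θ lam) =
      ∑ i, convG π θ (pmapG π θ lam ς (zd i)) (z i) := by
  have hne : ∀ a b : Ghat, θ a b ≠ 0 := by
    intro a b
    intro h0
    have := hnorm a b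
    rw [h0] at this
    simp at this
  funext k
  rw [show (∑ i, convG π θ (pmapG π θ lam ς (zd i)) (z i)) k
      = ∑ i, convG π θ (pmapG π θ lam ς (zd i)) (z i) k from by simp [Finset.sum_apply]]
  simp only [convG]
  rw [Finset.sum_comm]
  have hRHS : ∀ g ∈ Finset.univ.filter (fun g : Ghat => π g = 1),
      (∑ i, (θ g (g⁻¹*k))⁻¹ * pmapG π θ lam ς (zd i) g * z i (g⁻¹*k))
        = (θ g (g⁻¹*k))⁻¹ * wfun π θ lam ς g (g⁻¹*k) := by
    intro g hg
    simp only [Finset.mem_filter, Finset.mem_univ, true_and] at hg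
    have : ∀ i : I, (θ g (g⁻¹*k))⁻¹ * pmapG π θ lam ς (zd i) g * z i (g⁻¹*k)
        = (θ g (g⁻¹*k))⁻¹ * (pairGA π θ (zd i) (wfun π θ lam ς g) * z i (g⁻¹*k)) := by
      intro i
      rw [pair_wfun π θ lam hcoc hne ς g hς hg (zd i) (hzd i)]
      ring
    rw [Finset.sum_congr rfl (fun i _ => this i), ← Finset.mul_sum]
    rw [← reproduce π θ z zd hzspan hdual (wfun π θ lam ς g)
        (wfun_central π θ lam hθe' hcoc hne ς g hς hg) (g⁻¹*k)]
  rw [Finset.sum_congr rfl hRHS]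
  exact final_sum π θ lam hθe hθe' hcoc hne ς hς k
end
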